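/- arXiv:2604.04285 — 9 statements merged into one kernel-verified Lean document; each statement's English description precedes it below -/
import Mathlib

section
/- No-Go Theorem for Dimerization Amplification: In a dimerization network at equilibrium, with species indexed so that species 1 is the perturbed input, the sensitivities satisfy: (i) for every species j, |x_j'/x_j| ≤ x_1'/x_1; and (ii) the input sensitivity satisfies 0 < x_1' ≤ 1/(1 + 4 d_{11}/x_1) < 1. In particular, the concentration of the free input species cannot increase by more than the added signal, and no species has larger relative sensitivity than the input. -/
/-!
STATEMENT 0 (No-Go Theorem for Dimerization Amplification).
A dimerization network has `n ≥ 1` species with positive free concentrations `x i`,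
positive dimer concentrations `d i j = d j i`, and sensitivities `x' i` satisfying the
differentiated mass-balance equations (species `0` is the perturbed input).
Then every relative sensitivity is bounded in absolute value by that of the input,
and `0 < x' 0 ≤ 1 / (1 + 4 d₀₀ / x₀) < 1`.
-/

open Finset

theorem no_go_dimerization_amplification {n : ℕ} (hn : 0 < n)
    (x : Fin n → ℝ) (d : Fin n → Fin n → ℝ) (x' : Fin n → ℝ)
    (hx : ∀ i, 0 < x i)
    (hd : ∀ i j, 0 < d i j)
    (hdsym : ∀ i j, d i j = d j i)
    (hbal : ∀ i : Fin n,
      (x' i / x i) * (x i + (∑ j ∈ Finset.univ.erase i, d i j) + 4 * d i i)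
          + (∑ j ∈ Finset.univ.erase i, d i j * (x' j / x j))
        = if i = (⟨0, hn⟩ : Fin n) then 1 else 0) :
    (∀ j : Fin n, |x' j / x j| ≤ x' ⟨0, hn⟩ / x ⟨0, hn⟩) ∧
    0 < x' ⟨0, hn⟩ ∧
    x' ⟨0, hn⟩ ≤ 1 / (1 + 4 * d ⟨0, hn⟩ ⟨0, hn⟩ / x ⟨0, hn⟩) ∧
    1 / (1 + 4 * d ⟨0, hn⟩ ⟨0, hn⟩ / x ⟨0, hn⟩) < 1 := by
  have z : Fin n := ⟨0, hn⟩
  obtain ⟨j0, -, hj0⟩ := Finset.exists_max_image (Finset.univ : Finset (Fin n))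
    (fun i => |x' i / x i|) ⟨⟨0, hn⟩, mem_univ _⟩
  simp only [mem_univ, forall_true_left] at hj0
  have hj0' : ∀ j, |x' j / x j| ≤ |x' j0 / x j0| := hj0
  have Snn : ∀ i : Fin n, 0 ≤ ∑ j ∈ univ.erase i, d i j :=
    fun i => Finset.sum_nonneg fun k _ => (hd i k).le
  have sumbound : ∀ i : Fin n,
      |∑ j ∈ univ.erase i, d i j * (x' j / x j)|
        ≤ (∑ j ∈ univ.erase i, d i j) * |x' j0 / x j0| := by
    intro i
    calc |∑ j ∈ univ.erase i, d i j * (x' j / x j)|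
        ≤ ∑ j ∈ univ.erase i, |d i j * (x' j / x j)| := Finset.abs_sum_le_sum_abs _ _
      _ ≤ ∑ j ∈ univ.erase i, d i j * |x' j0 / x j0| := by
          refine Finset.sum_le_sum fun k _ => ?_
          rw [abs_mul, abs_of_pos (hd i k)]
          exact mul_le_mul_of_nonneg_left (hj0' k) (hd i k).le
      _ = _ := by rw [Finset.sum_mul]
  -- the max of |x'/x| is attained at ⟨0, hn⟩
  have hmaxz : ∀ j, |x' j / x j| ≤ |x' ⟨0, hn⟩ / x ⟨0, hn⟩| := by
    by_cases h : j0 = (⟨0, hn⟩ : Fin n)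
    · intro j; rw [← h]; exact hj0' j
    · exfalso
      have hb := hbal j0
      rw [if_neg h] at hb
      have hApos : 0 < x j0 + (∑ j ∈ univ.erase j0, d j0 j) + 4 * d j0 j0 := by
        have := hx j0; have := hd j0 j0; have := Snn j0; linarith
      have hA : (x' j0 / x j0) * (x j0 + (∑ j ∈ univ.erase j0, d j0 j) + 4 * d j0 j0)
          = -(∑ j ∈ univ.erase j0, d j0 j * (x' j / x j)) := by linarith
      have habs : |x' j0 / x j0| * (x j0 + (∑ j ∈ univ.erase j0, d j0 j) + 4 * d j0 j0)
          ≤ (∑ j ∈ univ.erase j0, d j0 j) * |x' j0 / x j0| := by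
        have h1 := sumbound j0
        have h2 : |(x' j0 / x j0) * (x j0 + (∑ j ∈ univ.erase j0, d j0 j) + 4 * d j0 j0)|
            = |x' j0 / x j0| * (x j0 + (∑ j ∈ univ.erase j0, d j0 j) + 4 * d j0 j0) := by
          rw [abs_mul, abs_of_pos hApos]
        rw [hA, abs_neg] at h2
        rw [← h2]; exact h1
      have hr0 : |x' j0 / x j0| = 0 := by
        have h3 := abs_nonneg (x' j0 / x j0)
        have h4 := hx j0
        have h5 := hd j0 j0
        nlinarith
      have hall : ∀ j : Fin n, x' j / x j = 0 := fun j =>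
        abs_eq_zero.mp (le_antisymm ((hj0' j).trans hr0.le) (abs_nonneg _))
      have hbz := hbal (⟨0, hn⟩ : Fin n)
      rw [if_pos rfl] at hbz
      rw [hall] at hbz
      have hsum0 : ∀ j ∈ univ.erase (⟨0, hn⟩ : Fin n),
          d (⟨0, hn⟩ : Fin n) j * (x' j / x j) = 0 := by
        intro j _; rw [hall j, mul_zero]
      rw [Finset.sum_congr rfl hsum0] at hbz
      simp at hbz
  -- now work at the input species
  have hbz := hbal (⟨0, hn⟩ : Fin n)
  rw [if_pos rfl] at hbz
  have hsb := sumbound (⟨0, hn⟩ : Fin n)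
  have hjz' : |x' j0 / x j0| = |x' ⟨0, hn⟩ / x ⟨0, hn⟩| :=
    le_antisymm (hmaxz j0) (hj0' _)
  rw [hjz'] at hsb
  have habs2 := abs_le.mp hsb
  have hxz := hx (⟨0, hn⟩ : Fin n)
  have hdz := hd (⟨0, hn⟩ : Fin n) (⟨0, hn⟩ : Fin n)
  have hSnn := Snn (⟨0, hn⟩ : Fin n)
  have hrzpos : 0 < x' ⟨0, hn⟩ / x ⟨0, hn⟩ := by
    by_contra hneg
    push_neg at hneg
    have hab : |x' ⟨0, hn⟩ / x ⟨0, hn⟩| = -(x' ⟨0, hn⟩ / x ⟨0, hn⟩) := abs_of_nonpos hneg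
    rw [hab] at habs2
    nlinarith [habs2.2]
  have habsz : |x' ⟨0, hn⟩ / x ⟨0, hn⟩| = x' ⟨0, hn⟩ / x ⟨0, hn⟩ := abs_of_pos hrzpos
  rw [habsz] at habs2
  have key : (x' ⟨0, hn⟩ / x ⟨0, hn⟩) * (x ⟨0, hn⟩ + 4 * d ⟨0, hn⟩ ⟨0, hn⟩) ≤ 1 := by
    nlinarith [habs2.1]
  have hx'z : x' ⟨0, hn⟩ = (x' ⟨0, hn⟩ / x ⟨0, hn⟩) * x ⟨0, hn⟩ := by field_simp
  have hfrac : 0 < 4 * d ⟨0, hn⟩ ⟨0, hn⟩ / x ⟨0, hn⟩ :=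
    div_pos (by linarith) hxz
  have hDpos : (0:ℝ) < 1 + 4 * d ⟨0, hn⟩ ⟨0, hn⟩ / x ⟨0, hn⟩ := by linarith
  refine ⟨fun j => (hmaxz j).trans_eq habsz, ?_, ?_, ?_⟩
  · rw [hx'z]; exact mul_pos hrzpos hxz
  · rw [le_div_iff₀ hDpos, hx'z]
    have heq : (x' ⟨0, hn⟩ / x ⟨0, hn⟩) * x ⟨0, hn⟩ * (1 + 4 * d ⟨0, hn⟩ ⟨0, hn⟩ / x ⟨0, hn⟩)
        = (x' ⟨0, hn⟩ / x ⟨0, hn⟩) * (x ⟨0, hn⟩ + 4 * d ⟨0, hn⟩ ⟨0, hn⟩) := by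
      field_simp
    rw [heq]; exact key
  · rw [div_lt_one hDpos]; linarith
end

section
/- In a dimerization network at equilibrium, if k is an index attaining the maximum of |x_j'/x_j| over all species j, then x_k' ≥ 0 and |x_k'/x_k| (x_k + 4 d_{kk}) ≤ δ_{1k}. Consequently, if k ≠ 1 then x_k' = 0, so the maximal absolute relative sensitivity can only be attained at the input species (unless all sensitivities vanish). -/
/-!
STATEMENT 1.
In a dimerization network at equilibrium (species `0` is the perturbed input), if `k`
attains the maximum of `|x' j / x j|` over all species `j`, then `x' k ≥ 0` and
`|x' k / x k| (x k + 4 d k k) ≤ δ_{0k}`; consequently, if `k ≠ 0` then `x' k = 0`.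
-/

open Finset

theorem max_relative_sensitivity_at_input {n : ℕ} (hn : 0 < n)
    (x : Fin n → ℝ) (d : Fin n → Fin n → ℝ) (x' : Fin n → ℝ)
    (hx : ∀ i, 0 < x i)
    (hd : ∀ i j, 0 < d i j)
    (hdsym : ∀ i j, d i j = d j i)
    (hbal : ∀ i : Fin n,
      (x' i / x i) * (x i + (∑ j ∈ Finset.univ.erase i, d i j) + 4 * d i i)
          + (∑ j ∈ Finset.univ.erase i, d i j * (x' j / x j))
        = if i = (⟨0, hn⟩ : Fin n) then 1 else 0)
    (k : Fin n)
    (hk : ∀ j : Fin n, |x' j / x j| ≤ |x' k / x k|) :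
    0 ≤ x' k ∧
    |x' k / x k| * (x k + 4 * d k k) ≤ (if k = (⟨0, hn⟩ : Fin n) then 1 else 0) ∧
    (k ≠ (⟨0, hn⟩ : Fin n) → x' k = 0) := by
  have hxk := hx k
  set S : ℝ := ∑ j ∈ Finset.univ.erase k, d k j with hS
  set T : ℝ := ∑ j ∈ Finset.univ.erase k, d k j * (x' j / x j) with hTdef
  have hSpos : 0 ≤ S := Finset.sum_nonneg fun j _ => (hd k j).le
  have hT : |T| ≤ S * |x' k / x k| := by
    calc |T| ≤ ∑ j ∈ Finset.univ.erase k, |d k j * (x' j / x j)| :=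
          Finset.abs_sum_le_sum_abs _ _
      _ ≤ ∑ j ∈ Finset.univ.erase k, d k j * |x' k / x k| := by
          refine Finset.sum_le_sum fun j _ => ?_
          rw [abs_mul, abs_of_pos (hd k j)]
          exact mul_le_mul_of_nonneg_left (hk j) (hd k j).le
      _ = S * |x' k / x k| := by rw [← Finset.sum_mul]
  have hbk := hbal k
  have hδ : (0:ℝ) ≤ if k = (⟨0, hn⟩ : Fin n) then 1 else 0 := by
    split <;> norm_num
  have hdkk := hd k k
  have habsT := abs_le.mp hT
  have hrk : 0 ≤ x' k / x k := by
    by_contra h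
    push_neg at h
    rw [abs_of_neg h] at habsT
    nlinarith [habsT.1, habsT.2]
  have habs : |x' k / x k| = x' k / x k := abs_of_nonneg hrk
  rw [habs] at habsT ⊢
  have hmain : (x' k / x k) * (x k + 4 * d k k) ≤ if k = (⟨0, hn⟩ : Fin n) then 1 else 0 := by
    nlinarith [habsT.1, habsT.2]
  refine ⟨?_, hmain, ?_⟩
  · have := mul_nonneg hrk hxk.le
    rwa [div_mul_cancel₀ (x' k) hxk.ne'] at this
  · intro hne
    rw [if_neg hne] at hmain
    have h0 : x' k / x k = 0 := by nlinarith [mul_nonneg hrk (by positivity : (0:ℝ) ≤ x k + 4 * d k k)]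
    field_simp at h0
    simpa using h0
end

section
/- Total Variation Bound: In a dimerization network whose species are ordered by decreasing absolute relative sensitivity (with the input species first), the sum of the absolute changes in the free concentrations of all species is strictly bounded by the input perturbation: Σ_{i=1}^n |x_i'| ≤ 1 − 2 Σ_{i=1}^n |d_{ii}'|. -/
/-!
STATEMENT 4 (Total Variation Bound).
In a dimerization network ordered by decreasing absolute relative sensitivity with the
input species first (index `0`), the total variation of the free concentrations is
bounded by the input perturbation: `Σ_i |x' i| ≤ 1 − 2 Σ_i |d' i i|`,
where `d' i j = d i j (x' i / x i + x' j / x j)`.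
-/

open Finset

/-- Dimer sensitivity `d' i j = d i j (x' i / x i + x' j / x j)`. -/
noncomputable def dimerSens {n : ℕ} (x : Fin n → ℝ) (d : Fin n → Fin n → ℝ)
    (x' : Fin n → ℝ) (i j : Fin n) : ℝ :=
  d i j * (x' i / x i + x' j / x j)

theorem total_variation_bound {n : ℕ} (hn : 0 < n)
    (x : Fin n → ℝ) (d : Fin n → Fin n → ℝ) (x' : Fin n → ℝ)
    (hx : ∀ i, 0 < x i)
    (hd : ∀ i j, 0 < d i j)
    (hdsym : ∀ i j, d i j = d j i)
    (hbal : ∀ i : Fin n,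
      (x' i / x i) * (x i + (∑ j ∈ Finset.univ.erase i, d i j) + 4 * d i i)
          + (∑ j ∈ Finset.univ.erase i, d i j * (x' j / x j))
        = if i = (⟨0, hn⟩ : Fin n) then 1 else 0)
    (hord : ∀ i j : Fin n, i ≤ j → |x' j / x j| ≤ |x' i / x i|) :
    (∑ i : Fin n, |x' i|) ≤ 1 - 2 * ∑ i : Fin n, |dimerSens x d x' i i| := by
  classical
  set z : Fin n := ⟨0, hn⟩ with hz
  set r : Fin n → ℝ := fun i => x' i / x i with hrdef
  have hr : ∀ i, x' i / x i = r i := fun i => rfl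
  simp only [hr] at hbal
  set s : Fin n → ℝ := fun i => if 0 ≤ r i then 1 else -1 with hsdef
  have hsr : ∀ i, s i * r i = |r i| := by
    intro i
    by_cases h : 0 ≤ r i
    · simp [hsdef, h, abs_of_nonneg h]
    · push_neg at h
      simp [hsdef, not_le.mpr h, abs_of_neg h]
  have hsabs : ∀ i, |s i| = 1 := by
    intro i; by_cases h : 0 ≤ r i <;> simp [hsdef, h]
  have hsle : ∀ i, s i ≤ 1 := fun i => le_of_abs_le (le_of_eq (hsabs i))
  have hsrj : ∀ i j, -|r j| ≤ s i * r j := by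
    intro i j
    have habs : |s i * r j| = |r j| := by rw [abs_mul, hsabs, one_mul]
    calc -|r j| = -|s i * r j| := by rw [habs]
      _ ≤ s i * r j := neg_abs_le _
  set g : Fin n → Fin n → ℝ := fun i j => d i j * (|r i| + s i * r j) with hgdef
  -- swap the double sum
  have h1a : ∀ (f : Fin n → ℝ) (i : Fin n),
      ∑ j ∈ Finset.univ.erase i, f j = ∑ j, if j ≠ i then f j else 0 := by
    intro f i
    rw [← Finset.sum_filter, Finset.filter_ne']
  have h1b : ∀ (f : Fin n → ℝ) (i : Fin n),
      ∑ j ∈ Finset.univ.erase i, f j = ∑ j, if i ≠ j then f j else 0 := by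
    intro f i
    rw [← Finset.sum_filter, Finset.filter_ne]
  have hswap : (∑ i, ∑ j ∈ Finset.univ.erase i, g i j)
      = ∑ i, ∑ j ∈ Finset.univ.erase i, g j i := by
    calc (∑ i, ∑ j ∈ Finset.univ.erase i, g i j)
        = ∑ i, ∑ j, if j ≠ i then g i j else 0 :=
          Finset.sum_congr rfl fun i _ => h1a (fun j => g i j) i
      _ = ∑ j, ∑ i, if j ≠ i then g i j else 0 := Finset.sum_comm
      _ = ∑ j, ∑ i ∈ Finset.univ.erase j, g i j :=
          Finset.sum_congr rfl fun j _ => (h1b (fun i => g i j) j).symm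
      _ = ∑ i, ∑ j ∈ Finset.univ.erase i, g j i := rfl
  -- T ≥ 0
  have hT : 0 ≤ ∑ i, ∑ j ∈ Finset.univ.erase i, g i j := by
    have h2 : 0 ≤ ∑ i, ∑ j ∈ Finset.univ.erase i, (g i j + g j i) := by
      refine Finset.sum_nonneg fun i _ => Finset.sum_nonneg fun j _ => ?_
      have e : g i j + g j i = d i j * ((|r i| + s j * r i) + (|r j| + s i * r j)) := by
        simp only [hgdef]; rw [hdsym j i]; ring
      rw [e]
      have b1 : 0 ≤ |r i| + s j * r i := by linarith [hsrj j i]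
      have b2 : 0 ≤ |r j| + s i * r j := by linarith [hsrj i j]
      exact mul_nonneg (hd i j).le (by linarith)
    have h3 : ∑ i, ∑ j ∈ Finset.univ.erase i, (g i j + g j i)
        = 2 * ∑ i, ∑ j ∈ Finset.univ.erase i, g i j := by
      simp only [Finset.sum_add_distrib]
      rw [← hswap]; ring
    linarith [h2, h3.symm ▸ h2]
  -- signed sum of the balance equations
  have hmain : ∑ i, s i * (r i * (x i + (∑ j ∈ Finset.univ.erase i, d i j) + 4 * d i i)
      + ∑ j ∈ Finset.univ.erase i, d i j * r j) = s z := by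
    rw [Finset.sum_congr rfl (fun i _ => by rw [hbal i])]
    simp [mul_ite]
  -- per-index expansion
  have hper : ∀ i : Fin n,
      s i * (r i * (x i + (∑ j ∈ Finset.univ.erase i, d i j) + 4 * d i i)
        + ∑ j ∈ Finset.univ.erase i, d i j * r j)
      = |r i| * x i + 4 * (d i i * |r i|) + ∑ j ∈ Finset.univ.erase i, g i j := by
    intro i
    have hg1 : ∑ j ∈ Finset.univ.erase i, g i j
        = (∑ j ∈ Finset.univ.erase i, d i j) * |r i|
          + s i * ∑ j ∈ Finset.univ.erase i, d i j * r j := by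
      rw [Finset.sum_mul, Finset.mul_sum, ← Finset.sum_add_distrib]
      exact Finset.sum_congr rfl fun j _ => by simp only [hgdef]; ring
    rw [hg1]
    have hs := hsr i
    calc s i * (r i * (x i + (∑ j ∈ Finset.univ.erase i, d i j) + 4 * d i i)
          + ∑ j ∈ Finset.univ.erase i, d i j * r j)
        = (s i * r i) * (x i + (∑ j ∈ Finset.univ.erase i, d i j) + 4 * d i i)
          + s i * ∑ j ∈ Finset.univ.erase i, d i j * r j := by ring
      _ = |r i| * (x i + (∑ j ∈ Finset.univ.erase i, d i j) + 4 * d i i)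
          + s i * ∑ j ∈ Finset.univ.erase i, d i j * r j := by rw [hs]
      _ = _ := by ring
  have hsum : (∑ i, |r i| * x i) + 4 * (∑ i, d i i * |r i|)
      + (∑ i, ∑ j ∈ Finset.univ.erase i, g i j) = s z := by
    rw [← hmain, Finset.sum_congr rfl (fun i _ => hper i)]
    rw [Finset.sum_add_distrib, Finset.sum_add_distrib, Finset.mul_sum]
  have hkey : (∑ i, |r i| * x i) + 4 * (∑ i, d i i * |r i|) ≤ 1 := by
    have := hsle z
    linarith
  -- rewrite the goal
  have ha : ∀ i, |x' i| = |r i| * x i := by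
    intro i
    have hxi := hx i
    rw [hrdef]
    simp only []
    rw [abs_div, abs_of_pos hxi, div_mul_cancel₀]
    exact ne_of_gt hxi
  have hb : ∀ i, |dimerSens x d x' i i| = 2 * (d i i * |r i|) := by
    intro i
    unfold dimerSens
    rw [hr i]
    have : d i i * (r i + r i) = d i i * 2 * r i := by ring
    rw [this, abs_mul, abs_of_pos (mul_pos (hd i i) two_pos)]
    ring
  rw [Finset.sum_congr rfl (fun i _ => ha i), Finset.sum_congr rfl (fun i _ => hb i)]
  rw [← Finset.mul_sum]
  linarith
end

section
/- Thermodynamic Energy Hierarchy: The free energies of the Active, Resting, and Drained states of a thermodynamic binding network satisfy g(x^act) ≤ g(x^rst) ≤ g(x^drn). -/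
open Finset

/-- A complex is a pair `(u, v)`: `u` counts the `m` non-input monomer types,
`v` the input monomers. -/
abbrev Cx (m : ℕ) := (Fin m → ℕ) × ℕ

/-- Pseudo-Helmholtz free energy of a configuration `x` over the complexes `P`
with per-complex energies `G` (the convention `0 · log 0 = 0` holds since
`Real.log 0 = 0`). -/
noncomputable def gFE {m : ℕ} (P : Finset (Cx m)) (G : Cx m → ℝ) (x : Cx m → ℝ) : ℝ :=
  ∑ p ∈ P, x p * (Real.log (x p) - 1 + G p)

/-- Mass-conservation map: total concentration of each non-input monomer type and of
the input monomer. -/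
noncomputable def Amap {m : ℕ} (P : Finset (Cx m)) (x : Cx m → ℝ) : (Fin m → ℝ) × ℝ :=
  (fun i => ∑ p ∈ P, (p.1 i : ℝ) * x p, ∑ p ∈ P, (p.2 : ℝ) * x p)

/-- Input-core projection: each pure input complex `(0, v)` with `v ≥ 1` receives the
total concentration of all complexes containing exactly `v` input monomers. -/
noncomputable def ic {m : ℕ} (P : Finset (Cx m)) (x : Cx m → ℝ) : Cx m → ℝ :=
  fun q => if q.1 = 0 ∧ 1 ≤ q.2 then ∑ p ∈ P.filter (fun r => r.2 = q.2), x p else 0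

/-- Residual-core projection: each pure residual complex `(u, 0)` with `u ≠ 0` receives
the total concentration of all complexes with residual core `u`. -/
noncomputable def rc {m : ℕ} (P : Finset (Cx m)) (x : Cx m → ℝ) : Cx m → ℝ :=
  fun q => if q.2 = 0 ∧ q.1 ≠ 0 then ∑ p ∈ P.filter (fun r => r.1 = q.1), x p else 0

/-- The mixed complexes of `P`. -/
def mixedP {m : ℕ} (P : Finset (Cx m)) : Finset (Cx m) :=
  P.filter (fun q => q.1 ≠ 0 ∧ 1 ≤ q.2)

/-- Binding free energy `ΔG^bind_{u,v} = G_{u,v} − G_{u,0} − G_{0,v}`. -/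
noncomputable def dGbind {m : ℕ} (G : Cx m → ℝ) (p : Cx m) : ℝ :=
  G p - G (p.1, 0) - G (0, p.2)

/-- Total concentration of pure input complexes. -/
noncomputable def Xinp {m : ℕ} (P : Finset (Cx m)) (x : Cx m → ℝ) : ℝ :=
  ∑ p ∈ P.filter (fun q : Cx m => q.1 = 0 ∧ 1 ≤ q.2), x p

/-- Total concentration of pure residual complexes. -/
noncomputable def Xres {m : ℕ} (P : Finset (Cx m)) (x : Cx m → ℝ) : ℝ :=
  ∑ p ∈ P.filter (fun q : Cx m => q.2 = 0 ∧ q.1 ≠ 0), x p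

/-- Total concentration of mixed complexes. -/
noncomputable def Xmix {m : ℕ} (P : Finset (Cx m)) (x : Cx m → ℝ) : ℝ :=
  ∑ p ∈ mixedP P, x p

/-- Maximal input binding strength `ΔG_max = max over mixed complexes of (−ΔG^bind)`. -/
noncomputable def dGmax {m : ℕ} (P : Finset (Cx m)) (G : Cx m → ℝ)
    (hne : (mixedP P).Nonempty) : ℝ :=
  (mixedP P).sup' hne (fun p => -(dGbind G p))

/-!
STATEMENT 5 (Thermodynamic Energy Hierarchy):
`g(x^act) ≤ g(x^rst) ≤ g(x^drn)`, where the Active state `x^act` minimizes `g` subject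
to `A x = x⁰(σ)`, the Drained state is `ic[x^act] + rc[x^act]`, and the Resting state is
`ic[x^act] + y` with `y` the minimizer of `g` subject to `A x = x⁰(0)`.
-/

section Helpers
variable {m : ℕ}

lemma ic_nonneg (P : Finset (Cx m)) (x : Cx m → ℝ) (hx : ∀ p ∈ P, 0 ≤ x p) (q : Cx m) :
    0 ≤ ic P x q := by
  unfold ic
  split
  · exact Finset.sum_nonneg fun p hp => hx p (Finset.mem_filter.mp hp).1
  · exact le_refl 0

lemma rc_nonneg (P : Finset (Cx m)) (x : Cx m → ℝ) (hx : ∀ p ∈ P, 0 ≤ x p) (q : Cx m) :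
    0 ≤ rc P x q := by
  unfold rc
  split
  · exact Finset.sum_nonneg fun p hp => hx p (Finset.mem_filter.mp hp).1
  · exact le_refl 0

lemma ic_input_sum (P : Finset (Cx m)) (x : Cx m → ℝ)
    (hcl : ∀ p ∈ P, 1 ≤ p.2 → ((0 : Fin m → ℕ), p.2) ∈ P) :
    ∑ q ∈ P, (q.2 : ℝ) * ic P x q = ∑ p ∈ P, (p.2 : ℝ) * x p := by
  have key : ∀ q ∈ P, (q.2 : ℝ) * ic P x q
      = ∑ p ∈ P, (if q = ((0 : Fin m → ℕ), p.2) ∧ 1 ≤ p.2 then (p.2 : ℝ) * x p else 0) := by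
    intro q _
    unfold ic
    by_cases h : q.1 = 0 ∧ 1 ≤ q.2
    · rw [if_pos h, Finset.mul_sum, Finset.sum_filter]
      refine Finset.sum_congr rfl fun p _ => ?_
      by_cases hp2 : p.2 = q.2
      · rw [if_pos hp2, if_pos ⟨Prod.ext h.1 hp2.symm, hp2 ▸ h.2⟩, hp2]
      · rw [if_neg hp2, if_neg]
        rintro ⟨hq, -⟩
        exact hp2 (by simp [hq])
    · rw [if_neg h, mul_zero]
      symm
      refine Finset.sum_eq_zero fun p _ => ?_
      rw [if_neg]
      rintro ⟨hq, h2⟩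
      exact h ⟨by simp [hq], by simp [hq]; omega⟩
  rw [Finset.sum_congr rfl key, Finset.sum_comm]
  refine Finset.sum_congr rfl fun p hp => ?_
  by_cases h2 : 1 ≤ p.2
  · have hmem : ((0 : Fin m → ℕ), p.2) ∈ P := hcl p hp h2
    simp only [h2, and_true]
    rw [Finset.sum_ite_eq' P ((0 : Fin m → ℕ), p.2) (fun _ => (p.2 : ℝ) * x p), if_pos hmem]
  · have h0 : p.2 = 0 := by omega
    simp [h0]

lemma rc_res_sum (P : Finset (Cx m)) (x : Cx m → ℝ)
    (hcl : ∀ p ∈ P, p.1 ≠ 0 → (p.1, (0 : ℕ)) ∈ P) (i : Fin m) :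
    ∑ q ∈ P, (q.1 i : ℝ) * rc P x q = ∑ p ∈ P, (p.1 i : ℝ) * x p := by
  have key : ∀ q ∈ P, (q.1 i : ℝ) * rc P x q
      = ∑ p ∈ P, (if q = (p.1, (0 : ℕ)) ∧ p.1 ≠ 0 then (p.1 i : ℝ) * x p else 0) := by
    intro q _
    unfold rc
    by_cases h : q.2 = 0 ∧ q.1 ≠ 0
    · rw [if_pos h, Finset.mul_sum, Finset.sum_filter]
      refine Finset.sum_congr rfl fun p _ => ?_
      by_cases hp1 : p.1 = q.1
      · rw [if_pos hp1, if_pos ⟨Prod.ext hp1.symm h.1, hp1 ▸ h.2⟩, hp1]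
      · rw [if_neg hp1, if_neg]
        rintro ⟨hq, -⟩
        exact hp1 (by simp [hq])
    · rw [if_neg h, mul_zero]
      symm
      refine Finset.sum_eq_zero fun p _ => ?_
      rw [if_neg]
      rintro ⟨hq, h2⟩
      exact h ⟨by simp [hq], by simp [hq]; exact h2⟩
  rw [Finset.sum_congr rfl key, Finset.sum_comm]
  refine Finset.sum_congr rfl fun p hp => ?_
  by_cases h1 : p.1 ≠ 0
  · have hmem : (p.1, (0 : ℕ)) ∈ P := hcl p hp h1
    simp only [ne_eq, h1, not_false_eq_true, and_true]
    rw [Finset.sum_ite_eq' P (p.1, (0 : ℕ)) (fun _ => (p.1 i : ℝ) * x p), if_pos hmem]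
  · push_neg at h1
    simp [h1]

lemma ic_res_zero (P : Finset (Cx m)) (x : Cx m → ℝ) (i : Fin m) :
    ∑ q ∈ P, (q.1 i : ℝ) * ic P x q = 0 := by
  refine Finset.sum_eq_zero fun q _ => ?_
  unfold ic
  split
  · next h => simp [h.1]
  · exact mul_zero _

lemma rc_input_zero (P : Finset (Cx m)) (x : Cx m → ℝ) :
    ∑ q ∈ P, (q.2 : ℝ) * rc P x q = 0 := by
  refine Finset.sum_eq_zero fun q _ => ?_
  unfold rc
  split
  · next h => simp [h.1]
  · exact mul_zero _

lemma gFE_split (P : Finset (Cx m)) (G : Cx m → ℝ) (a b : Cx m → ℝ)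
    (h : ∀ p ∈ P, a p = 0 ∨ b p = 0) :
    gFE P G (a + b) = gFE P G a + gFE P G b := by
  unfold gFE
  rw [← Finset.sum_add_distrib]
  refine Finset.sum_congr rfl fun p hp => ?_
  rcases h p hp with h0 | h0 <;> simp [Pi.add_apply, h0]

end Helpers

theorem thermodynamic_energy_hierarchy {m : ℕ}
    (P : Finset (Cx m)) (G : Cx m → ℝ) (c : Fin m → ℝ) (σ : ℝ) (hσ : 0 ≤ σ)
    (hP0 : ((0 : Fin m → ℕ), (0 : ℕ)) ∉ P)
    (hPclosed : ∀ p ∈ P, p.1 ≠ 0 → 1 ≤ p.2 →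
      (p.1, (0 : ℕ)) ∈ P ∧ ((0 : Fin m → ℕ), p.2) ∈ P)
    (xact y : Cx m → ℝ)
    (hact_nn : ∀ p ∈ P, 0 ≤ xact p)
    (hact_feas : Amap P xact = (c, σ))
    (hact_min : ∀ z : Cx m → ℝ, (∀ p ∈ P, 0 ≤ z p) → Amap P z = (c, σ) →
      gFE P G xact ≤ gFE P G z)
    (hy_nn : ∀ p ∈ P, 0 ≤ y p)
    (hy_feas : Amap P y = (c, 0))
    (hy_min : ∀ z : Cx m → ℝ, (∀ p ∈ P, 0 ≤ z p) → Amap P z = (c, 0) →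
      gFE P G y ≤ gFE P G z) :
    gFE P G xact ≤ gFE P G (ic P xact + y) ∧
    gFE P G (ic P xact + y) ≤ gFE P G (ic P xact + rc P xact) := by
  -- closure facts
  have hcl_ic : ∀ p ∈ P, 1 ≤ p.2 → ((0 : Fin m → ℕ), p.2) ∈ P := by
    intro p hp h2
    by_cases h1 : p.1 = 0
    · have : p = ((0 : Fin m → ℕ), p.2) := Prod.ext h1 rfl
      rwa [← this]
    · exact (hPclosed p hp h1 h2).2
  have hcl_rc : ∀ p ∈ P, p.1 ≠ 0 → (p.1, (0 : ℕ)) ∈ P := by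
    intro p hp h1
    by_cases h2 : 1 ≤ p.2
    · exact (hPclosed p hp h1 h2).1
    · have h0 : p.2 = 0 := by omega
      have : p = (p.1, (0 : ℕ)) := Prod.ext rfl h0
      rwa [← this]
  -- feasibility components of xact
  have hc1 : ∀ i, ∑ p ∈ P, (p.1 i : ℝ) * xact p = c i := by
    intro i
    have := congrArg Prod.fst hact_feas
    exact congrFun this i
  have hc2 : ∑ p ∈ P, (p.2 : ℝ) * xact p = σ := congrArg Prod.snd hact_feas
  have hyc1 : ∀ i, ∑ p ∈ P, (p.1 i : ℝ) * y p = c i := by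
    intro i
    have := congrArg Prod.fst hy_feas
    exact congrFun this i
  have hyc2 : ∑ p ∈ P, (p.2 : ℝ) * y p = 0 := congrArg Prod.snd hy_feas
  -- y vanishes on complexes with input
  have hy0 : ∀ p ∈ P, 1 ≤ p.2 → y p = 0 := by
    intro p hp h2
    have hnn : ∀ q ∈ P, 0 ≤ (q.2 : ℝ) * y q := fun q hq =>
      mul_nonneg (by positivity) (hy_nn q hq)
    have := (Finset.sum_eq_zero_iff_of_nonneg hnn).mp hyc2 p hp
    have hne : (p.2 : ℝ) ≠ 0 := by positivity
    exact (mul_eq_zero.mp this).resolve_left hne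
  -- support of ic
  have hicsupp : ∀ q, ic P xact q ≠ 0 → q.1 = 0 ∧ 1 ≤ q.2 := by
    intro q hq
    by_contra h
    exact hq (by unfold ic; rw [if_neg h])
  have hrcsupp : ∀ q, rc P xact q ≠ 0 → q.2 = 0 := by
    intro q hq
    by_contra h
    refine hq ?_
    unfold rc
    rw [if_neg]
    rintro ⟨h0, -⟩
    exact h h0
  -- feasibility of ic xact + y
  have hfeas1 : Amap P (ic P xact + y) = (c, σ) := by
    unfold Amap
    refine Prod.ext ?_ ?_
    · funext i
      simp only
      have : ∀ p ∈ P, (p.1 i : ℝ) * (ic P xact + y) p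
          = (p.1 i : ℝ) * ic P xact p + (p.1 i : ℝ) * y p := by
        intro p _; simp [Pi.add_apply, mul_add]
      rw [Finset.sum_congr rfl this, Finset.sum_add_distrib, ic_res_zero, zero_add, hyc1]
    · simp only
      have : ∀ p ∈ P, (p.2 : ℝ) * (ic P xact + y) p
          = (p.2 : ℝ) * ic P xact p + (p.2 : ℝ) * y p := by
        intro p _; simp [Pi.add_apply, mul_add]
      rw [Finset.sum_congr rfl this, Finset.sum_add_distrib, ic_input_sum P xact hcl_ic,
        hc2, hyc2, add_zero]
  have hnn1 : ∀ p ∈ P, 0 ≤ (ic P xact + y) p := fun p hp =>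
    add_nonneg (ic_nonneg P xact hact_nn p) (hy_nn p hp)
  -- feasibility of rc xact
  have hfeas2 : Amap P (rc P xact) = (c, 0) := by
    unfold Amap
    refine Prod.ext ?_ ?_
    · funext i
      simp only
      rw [rc_res_sum P xact hcl_rc i, hc1]
    · exact rc_input_zero P xact
  have hnn2 : ∀ p ∈ P, 0 ≤ rc P xact p := fun p _ => rc_nonneg P xact hact_nn p
  constructor
  · exact hact_min _ hnn1 hfeas1
  · have hsplit1 : gFE P G (ic P xact + y) = gFE P G (ic P xact) + gFE P G y := by
      refine gFE_split P G _ _ fun p hp => ?_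
      by_cases h : ic P xact p = 0
      · exact Or.inl h
      · exact Or.inr (hy0 p hp (hicsupp p h).2)
    have hsplit2 : gFE P G (ic P xact + rc P xact)
        = gFE P G (ic P xact) + gFE P G (rc P xact) := by
      refine gFE_split P G _ _ fun p hp => ?_
      by_cases h : ic P xact p = 0
      · exact Or.inl h
      · refine Or.inr ?_
        by_contra hr
        have h2 := (hicsupp p h).2
        have h0 := hrcsupp p hr
        omega
    rw [hsplit1, hsplit2]
    exact add_le_add_right (hy_min _ hnn2 hfeas2) _
end

section
/- Drained-minus-Active energy identity: The free-energy difference between the Drained and Active states decomposes as g(x^drn) − g(x^act) = A_inp + A_res − Σ_{v≥1} Σ_{u≠0} x^act_{u,v} (1 + ΔG^bind_{u,v}), where A_inp = Σ_{v≥1} [ (Σ_u x^act_{u,v}) log(Σ_u x^act_{u,v}) − x^act_{0,v} log x^act_{0,v} ] and A_res = Σ_{u≠0} [ (Σ_v x^act_{u,v}) log(Σ_v x^act_{u,v}) − Σ_v x^act_{u,v} log x^act_{u,v} ]. -/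
open Finset

/-!
STATEMENT 6 (Drained-minus-Active energy identity):
`g(x^drn) − g(x^act) = A_inp + A_res − Σ_{mixed (u,v)} x^act_{u,v} (1 + ΔG^bind_{u,v})`,
where `A_inp` and `A_res` are the entropies of mixing of the pure input and pure
residual pools of the Drained state.
-/
theorem drained_minus_active_energy_identity {m : ℕ}
    (P : Finset (Cx m)) (G : Cx m → ℝ)
    (hP0 : ((0 : Fin m → ℕ), (0 : ℕ)) ∉ P)
    (hPclosed : ∀ p ∈ P, p.1 ≠ 0 → 1 ≤ p.2 →
      (p.1, (0 : ℕ)) ∈ P ∧ ((0 : Fin m → ℕ), p.2) ∈ P)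
    (xact : Cx m → ℝ)
    (hact_nn : ∀ p ∈ P, 0 ≤ xact p) :
    gFE P G (ic P xact + rc P xact) - gFE P G xact =
      (∑ p ∈ P.filter (fun q : Cx m => q.1 = 0 ∧ 1 ≤ q.2),
        ((∑ r ∈ P.filter (fun r => r.2 = p.2), xact r)
            * Real.log (∑ r ∈ P.filter (fun r => r.2 = p.2), xact r)
          - xact p * Real.log (xact p)))
      + (∑ p ∈ P.filter (fun q : Cx m => q.2 = 0 ∧ q.1 ≠ 0),
        ((∑ r ∈ P.filter (fun r => r.1 = p.1), xact r)
            * Real.log (∑ r ∈ P.filter (fun r => r.1 = p.1), xact r)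
          - ∑ r ∈ P.filter (fun r => r.1 = p.1), xact r * Real.log (xact r)))
      - ∑ p ∈ mixedP P, xact p * (1 + dGbind G p) := by
  classical
  -- The three parts of P
  have hsplit : ∀ f : Cx m → ℝ, ∑ p ∈ P, f p =
      ∑ p ∈ P.filter (fun q : Cx m => q.1 = 0 ∧ 1 ≤ q.2), f p
      + ∑ p ∈ P.filter (fun q : Cx m => q.2 = 0 ∧ q.1 ≠ 0), f p
      + ∑ p ∈ mixedP P, f p := by
    intro f
    rw [← Finset.sum_filter_add_sum_filter_not P (fun q : Cx m => q.1 = 0 ∧ 1 ≤ q.2) f,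
        ← Finset.sum_filter_add_sum_filter_not
          (P.filter (fun q : Cx m => ¬(q.1 = 0 ∧ 1 ≤ q.2)))
          (fun q : Cx m => q.2 = 0 ∧ q.1 ≠ 0) f, add_assoc]
    congr 2
    · rw [Finset.filter_filter]
      refine Finset.sum_congr (Finset.filter_congr ?_) fun _ _ => rfl
      intro q hq
      constructor
      · rintro ⟨_, h⟩; exact h
      · rintro ⟨h2, h1⟩; exact ⟨by omega, h2, h1⟩
    · rw [Finset.filter_filter, mixedP]
      refine Finset.sum_congr (Finset.filter_congr ?_) fun _ _ => rfl
      intro q hq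
      constructor
      · rintro ⟨hA, hB⟩
        by_cases h1 : q.1 = 0
        · exfalso
          by_cases h2 : 1 ≤ q.2
          · exact hA ⟨h1, h2⟩
          · have : q = ((0 : Fin m → ℕ), (0 : ℕ)) := by
              have : q.2 = 0 := by omega
              exact Prod.ext h1 this
            exact hP0 (this ▸ hq)
        · refine ⟨h1, ?_⟩
          by_contra h2
          exact hB ⟨by omega, h1⟩
      · rintro ⟨h1, h2⟩
        exact ⟨fun h => h1 h.1, fun h => by omega⟩
  -- singleton lemmas
  have hsingI : ∀ r ∈ mixedP P,
      (P.filter (fun q : Cx m => q.1 = 0 ∧ 1 ≤ q.2)).filter (fun p => p.2 = r.2)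
        = {((0 : Fin m → ℕ), r.2)} := by
    intro r hr
    obtain ⟨hrP, hr1, hr2⟩ : r ∈ P ∧ r.1 ≠ 0 ∧ 1 ≤ r.2 := by
      simpa [mixedP, Finset.mem_filter] using hr
    have h0 : ((0 : Fin m → ℕ), r.2) ∈ P := (hPclosed r hrP hr1 hr2).2
    ext p
    simp only [Finset.mem_filter, Finset.mem_singleton]
    constructor
    · rintro ⟨⟨hpP, h1, _⟩, h3⟩
      exact Prod.ext h1 h3
    · rintro rfl
      exact ⟨⟨h0, rfl, hr2⟩, rfl⟩
  have hsingR : ∀ r ∈ mixedP P,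
      (P.filter (fun q : Cx m => q.2 = 0 ∧ q.1 ≠ 0)).filter (fun p => p.1 = r.1)
        = {(r.1, (0 : ℕ))} := by
    intro r hr
    obtain ⟨hrP, hr1, hr2⟩ : r ∈ P ∧ r.1 ≠ 0 ∧ 1 ≤ r.2 := by
      simpa [mixedP, Finset.mem_filter] using hr
    have h0 : (r.1, (0 : ℕ)) ∈ P := (hPclosed r hrP hr1 hr2).1
    ext p
    simp only [Finset.mem_filter, Finset.mem_singleton]
    constructor
    · rintro ⟨⟨hpP, h2, _⟩, h3⟩
      exact Prod.ext h3 h2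
    · rintro rfl
      exact ⟨⟨h0, rfl, hr1⟩, rfl⟩
  -- reindexing lemmas
  have hreI : ∀ F : Cx m → Cx m → ℝ,
      ∑ p ∈ P.filter (fun q : Cx m => q.1 = 0 ∧ 1 ≤ q.2),
        ∑ r ∈ (mixedP P).filter (fun r => r.2 = p.2), F p r
      = ∑ r ∈ mixedP P, F ((0 : Fin m → ℕ), r.2) r := by
    intro F
    calc ∑ p ∈ P.filter (fun q : Cx m => q.1 = 0 ∧ 1 ≤ q.2),
          ∑ r ∈ (mixedP P).filter (fun r => r.2 = p.2), F p r
        = ∑ p ∈ P.filter (fun q : Cx m => q.1 = 0 ∧ 1 ≤ q.2),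
            ∑ r ∈ mixedP P, if r.2 = p.2 then F p r else 0 := by
          exact Finset.sum_congr rfl fun p _ => (Finset.sum_filter _ _)
      _ = ∑ r ∈ mixedP P, ∑ p ∈ P.filter (fun q : Cx m => q.1 = 0 ∧ 1 ≤ q.2),
            if r.2 = p.2 then F p r else 0 := Finset.sum_comm
      _ = ∑ r ∈ mixedP P,
            ∑ p ∈ (P.filter (fun q : Cx m => q.1 = 0 ∧ 1 ≤ q.2)).filter (fun p => p.2 = r.2),
              F p r := by
          refine Finset.sum_congr rfl fun r _ => ?_
          rw [Finset.sum_filter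
            (s := P.filter (fun q : Cx m => q.1 = 0 ∧ 1 ≤ q.2))
            (p := fun p => p.2 = r.2) (f := fun p => F p r)]
          refine Finset.sum_congr rfl fun p _ => ?_
          by_cases h : r.2 = p.2
          · simp [h]
          · simp [h, show ¬ p.2 = r.2 from fun hh => h hh.symm]
      _ = ∑ r ∈ mixedP P, F ((0 : Fin m → ℕ), r.2) r := by
          refine Finset.sum_congr rfl fun r hr => ?_
          rw [hsingI r hr, Finset.sum_singleton]
  have hreR : ∀ F : Cx m → Cx m → ℝ,
      ∑ p ∈ P.filter (fun q : Cx m => q.2 = 0 ∧ q.1 ≠ 0),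
        ∑ r ∈ (mixedP P).filter (fun r => r.1 = p.1), F p r
      = ∑ r ∈ mixedP P, F (r.1, (0 : ℕ)) r := by
    intro F
    calc ∑ p ∈ P.filter (fun q : Cx m => q.2 = 0 ∧ q.1 ≠ 0),
          ∑ r ∈ (mixedP P).filter (fun r => r.1 = p.1), F p r
        = ∑ p ∈ P.filter (fun q : Cx m => q.2 = 0 ∧ q.1 ≠ 0),
            ∑ r ∈ mixedP P, if r.1 = p.1 then F p r else 0 := by
          exact Finset.sum_congr rfl fun p _ => (Finset.sum_filter _ _)
      _ = ∑ r ∈ mixedP P, ∑ p ∈ P.filter (fun q : Cx m => q.2 = 0 ∧ q.1 ≠ 0),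
            if r.1 = p.1 then F p r else 0 := Finset.sum_comm
      _ = ∑ r ∈ mixedP P,
            ∑ p ∈ (P.filter (fun q : Cx m => q.2 = 0 ∧ q.1 ≠ 0)).filter (fun p => p.1 = r.1),
              F p r := by
          refine Finset.sum_congr rfl fun r _ => ?_
          rw [Finset.sum_filter
            (s := P.filter (fun q : Cx m => q.2 = 0 ∧ q.1 ≠ 0))
            (p := fun p => p.1 = r.1) (f := fun p => F p r)]
          refine Finset.sum_congr rfl fun p _ => ?_
          by_cases h : r.1 = p.1
          · simp [h]
          · simp [h, show ¬ p.1 = r.1 from fun hh => h hh.symm]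
      _ = ∑ r ∈ mixedP P, F (r.1, (0 : ℕ)) r := by
          refine Finset.sum_congr rfl fun r hr => ?_
          rw [hsingR r hr, Finset.sum_singleton]
  -- decomposition of the pooled sums
  have hdecI : ∀ p ∈ P.filter (fun q : Cx m => q.1 = 0 ∧ 1 ≤ q.2), ∀ h : Cx m → ℝ,
      ∑ r ∈ P.filter (fun r => r.2 = p.2), h r
        = h p + ∑ r ∈ (mixedP P).filter (fun r => r.2 = p.2), h r := by
    intro p hp h
    obtain ⟨hpP, hp1, hp2⟩ : p ∈ P ∧ p.1 = 0 ∧ 1 ≤ p.2 := by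
      simpa [Finset.mem_filter] using hp
    have hset : P.filter (fun r => r.2 = p.2)
        = insert p ((mixedP P).filter (fun r => r.2 = p.2)) := by
      ext r
      simp only [Finset.mem_filter, Finset.mem_insert, mixedP]
      constructor
      · rintro ⟨hrP, hr2⟩
        by_cases h1 : r.1 = 0
        · left; exact Prod.ext (h1.trans hp1.symm) hr2
        · right; exact ⟨⟨hrP, h1, by omega⟩, hr2⟩
      · rintro (rfl | ⟨⟨hrP, _, _⟩, hr2⟩)
        · exact ⟨hpP, rfl⟩
        · exact ⟨hrP, hr2⟩
    rw [hset, Finset.sum_insert (by simp [mixedP, Finset.mem_filter, hp1])]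
  have hdecR : ∀ p ∈ P.filter (fun q : Cx m => q.2 = 0 ∧ q.1 ≠ 0), ∀ h : Cx m → ℝ,
      ∑ r ∈ P.filter (fun r => r.1 = p.1), h r
        = h p + ∑ r ∈ (mixedP P).filter (fun r => r.1 = p.1), h r := by
    intro p hp h
    obtain ⟨hpP, hp2, hp1⟩ : p ∈ P ∧ p.2 = 0 ∧ p.1 ≠ 0 := by
      simpa [Finset.mem_filter] using hp
    have hset : P.filter (fun r => r.1 = p.1)
        = insert p ((mixedP P).filter (fun r => r.1 = p.1)) := by
      ext r
      simp only [Finset.mem_filter, Finset.mem_insert, mixedP]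
      constructor
      · rintro ⟨hrP, hr1⟩
        by_cases h2 : r.2 = 0
        · left; exact Prod.ext hr1 (h2.trans hp2.symm)
        · right; exact ⟨⟨hrP, hr1 ▸ hp1, by omega⟩, hr1⟩
      · rintro (rfl | ⟨⟨hrP, _, _⟩, hr1⟩)
        · exact ⟨hpP, rfl⟩
        · exact ⟨hrP, hr1⟩
    rw [hset, Finset.sum_insert (by simp [mixedP, Finset.mem_filter, hp2])]
  -- the drained state on each part
  have hdrnI : ∀ p ∈ P.filter (fun q : Cx m => q.1 = 0 ∧ 1 ≤ q.2),
      (ic P xact + rc P xact) p = ∑ r ∈ P.filter (fun r => r.2 = p.2), xact r := by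
    intro p hp
    obtain ⟨hpP, hp1, hp2⟩ : p ∈ P ∧ p.1 = 0 ∧ 1 ≤ p.2 := by
      simpa [Finset.mem_filter] using hp
    simp [ic, rc, hp1, hp2]
  have hdrnR : ∀ p ∈ P.filter (fun q : Cx m => q.2 = 0 ∧ q.1 ≠ 0),
      (ic P xact + rc P xact) p = ∑ r ∈ P.filter (fun r => r.1 = p.1), xact r := by
    intro p hp
    obtain ⟨hpP, hp2, hp1⟩ : p ∈ P ∧ p.2 = 0 ∧ p.1 ≠ 0 := by
      simpa [Finset.mem_filter] using hp
    simp [ic, rc, hp1, hp2]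
  have hdrnM : ∀ p ∈ mixedP P, (ic P xact + rc P xact) p = 0 := by
    intro p hp
    obtain ⟨hpP, hp1, hp2⟩ : p ∈ P ∧ p.1 ≠ 0 ∧ 1 ≤ p.2 := by
      simpa [mixedP, Finset.mem_filter] using hp
    have h2 : p.2 ≠ 0 := by omega
    simp [ic, rc, hp1, h2]
  -- evaluate gFE at the drained state
  have hdrn : gFE P G (ic P xact + rc P xact)
      = ∑ p ∈ P.filter (fun q : Cx m => q.1 = 0 ∧ 1 ≤ q.2),
          (∑ r ∈ P.filter (fun r => r.2 = p.2), xact r)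
            * (Real.log (∑ r ∈ P.filter (fun r => r.2 = p.2), xact r) - 1 + G p)
        + ∑ p ∈ P.filter (fun q : Cx m => q.2 = 0 ∧ q.1 ≠ 0),
          (∑ r ∈ P.filter (fun r => r.1 = p.1), xact r)
            * (Real.log (∑ r ∈ P.filter (fun r => r.1 = p.1), xact r) - 1 + G p) := by
    rw [gFE, hsplit]
    have e1 : ∑ p ∈ P.filter (fun q : Cx m => q.1 = 0 ∧ 1 ≤ q.2),
        (ic P xact + rc P xact) p * (Real.log ((ic P xact + rc P xact) p) - 1 + G p)
        = ∑ p ∈ P.filter (fun q : Cx m => q.1 = 0 ∧ 1 ≤ q.2),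
          (∑ r ∈ P.filter (fun r => r.2 = p.2), xact r)
            * (Real.log (∑ r ∈ P.filter (fun r => r.2 = p.2), xact r) - 1 + G p) :=
      Finset.sum_congr rfl fun p hp => by rw [hdrnI p hp]
    have e2 : ∑ p ∈ P.filter (fun q : Cx m => q.2 = 0 ∧ q.1 ≠ 0),
        (ic P xact + rc P xact) p * (Real.log ((ic P xact + rc P xact) p) - 1 + G p)
        = ∑ p ∈ P.filter (fun q : Cx m => q.2 = 0 ∧ q.1 ≠ 0),
          (∑ r ∈ P.filter (fun r => r.1 = p.1), xact r)
            * (Real.log (∑ r ∈ P.filter (fun r => r.1 = p.1), xact r) - 1 + G p) :=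
      Finset.sum_congr rfl fun p hp => by rw [hdrnR p hp]
    have e3 : ∑ p ∈ mixedP P,
        (ic P xact + rc P xact) p * (Real.log ((ic P xact + rc P xact) p) - 1 + G p) = 0 := by
      apply Finset.sum_eq_zero
      intro p hp
      rw [hdrnM p hp]
      ring
    rw [e1, e2, e3, add_zero]
  have hact : gFE P G xact
      = ∑ p ∈ P.filter (fun q : Cx m => q.1 = 0 ∧ 1 ≤ q.2),
          xact p * (Real.log (xact p) - 1 + G p)
        + ∑ p ∈ P.filter (fun q : Cx m => q.2 = 0 ∧ q.1 ≠ 0),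
          xact p * (Real.log (xact p) - 1 + G p)
        + ∑ p ∈ mixedP P, xact p * (Real.log (xact p) - 1 + G p) := hsplit _
  rw [hdrn, hact]
  -- the three main identities
  have E1 : ∑ p ∈ P.filter (fun q : Cx m => q.1 = 0 ∧ 1 ≤ q.2),
        ((∑ r ∈ P.filter (fun r => r.2 = p.2), xact r)
            * (Real.log (∑ r ∈ P.filter (fun r => r.2 = p.2), xact r) - 1 + G p)
          - xact p * (Real.log (xact p) - 1 + G p)
          - ((∑ r ∈ P.filter (fun r => r.2 = p.2), xact r)
              * Real.log (∑ r ∈ P.filter (fun r => r.2 = p.2), xact r)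
            - xact p * Real.log (xact p)))
      = ∑ r ∈ mixedP P, xact r * (G ((0 : Fin m → ℕ), r.2) - 1) := by
    rw [← hreI (fun p r => xact r * (G p - 1))]
    refine Finset.sum_congr rfl fun p hp => ?_
    rw [← Finset.sum_mul, hdecI p hp xact]
    ring
  have E2 : ∑ p ∈ P.filter (fun q : Cx m => q.2 = 0 ∧ q.1 ≠ 0),
        ((∑ r ∈ P.filter (fun r => r.1 = p.1), xact r)
            * (Real.log (∑ r ∈ P.filter (fun r => r.1 = p.1), xact r) - 1 + G p)
          - xact p * (Real.log (xact p) - 1 + G p)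
          - ((∑ r ∈ P.filter (fun r => r.1 = p.1), xact r)
              * Real.log (∑ r ∈ P.filter (fun r => r.1 = p.1), xact r)
            - ∑ r ∈ P.filter (fun r => r.1 = p.1), xact r * Real.log (xact r)))
      = ∑ r ∈ mixedP P,
          (xact r * (G (r.1, (0 : ℕ)) - 1) + xact r * Real.log (xact r)) := by
    rw [← hreR (fun p r => xact r * (G p - 1) + xact r * Real.log (xact r))]
    refine Finset.sum_congr rfl fun p hp => ?_
    rw [Finset.sum_add_distrib, ← Finset.sum_mul,
        hdecR p hp xact, hdecR p hp (fun r => xact r * Real.log (xact r))]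
    ring
  have Ecomb : ∑ r ∈ mixedP P, xact r * (G ((0 : Fin m → ℕ), r.2) - 1)
      + ∑ r ∈ mixedP P,
          (xact r * (G (r.1, (0 : ℕ)) - 1) + xact r * Real.log (xact r))
      + ∑ p ∈ mixedP P,
          (xact p * (1 + dGbind G p) - xact p * (Real.log (xact p) - 1 + G p)) = 0 := by
    rw [← Finset.sum_add_distrib, ← Finset.sum_add_distrib]
    apply Finset.sum_eq_zero
    intro p hp
    rw [dGbind]
    ring
  have SM : ∑ p ∈ mixedP P,
      (xact p * (1 + dGbind G p) - xact p * (Real.log (xact p) - 1 + G p))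
      = ∑ p ∈ mixedP P, xact p * (1 + dGbind G p)
        - ∑ p ∈ mixedP P, xact p * (Real.log (xact p) - 1 + G p) :=
    Finset.sum_sub_distrib _ _
  rw [Finset.sum_sub_distrib, Finset.sum_sub_distrib] at E1
  rw [Finset.sum_sub_distrib, Finset.sum_sub_distrib] at E2
  linarith [E1, E2, SM, Ecomb]
end

section
/- Mixed-pool bound on the drained energy gap: The free-energy difference between the Drained and Active states satisfies g(x^drn) − g(x^act) ≤ X_mix [ log( (X_inp + X_mix)(X_res + X_mix) / X_mix ) + 1 + ΔG_max ], provided X_mix > 0. -/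
open Finset

private lemma conv_step' (a s c : ℝ) (ha : 0 ≤ a) (hs : 0 ≤ s) :
    (a+s)*(Real.log (a+s)-1+c) - a*(Real.log a -1+c) ≤ s*(Real.log (a+s)+c) := by
  have key : a * (Real.log (a+s) - Real.log a) ≤ s := by
    rcases eq_or_lt_of_le ha with h0 | h0
    · simp [← h0, hs]
    · have hb : 0 < a + s := by linarith
      have h1 := Real.log_le_sub_one_of_pos (show (0:ℝ) < (a+s)/a from div_pos hb h0)
      rw [Real.log_div (ne_of_gt hb) (ne_of_gt h0)] at h1
      have h2 := mul_le_mul_of_nonneg_left h1 (le_of_lt h0)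
      calc a*(Real.log (a+s) - Real.log a) ≤ a*((a+s)/a - 1) := h2
        _ = s := by field_simp; ring
  have expand : (a+s)*(Real.log (a+s)-1+c) - a*(Real.log a -1+c) - s*(Real.log (a+s)+c)
      = a*(Real.log (a+s) - Real.log a) - s := by ring
  linarith [expand, key]

private lemma jensen_step' (xp a b X W : ℝ) (hx : 0 ≤ xp) (ha : xp ≤ a) (hb : xp ≤ b)
    (hX : 0 < X) (hW : 0 < W) :
    xp * (Real.log a + Real.log b - Real.log xp) ≤ xp * Real.log (W/X) + a*b*X/W - xp := by
  rcases eq_or_lt_of_le hx with h0 | h0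
  · have hA : 0 ≤ a := le_trans hx ha
    have hB : 0 ≤ b := le_trans hx hb
    have : 0 ≤ a*b*X/W := by positivity
    simp [← h0]
    linarith
  · have hA : 0 < a := lt_of_lt_of_le h0 ha
    have hB : 0 < b := lt_of_lt_of_le h0 hb
    have htpos : 0 < a*b*X/(xp*W) := by positivity
    have hlog := Real.log_le_sub_one_of_pos htpos
    have hlt : Real.log (a*b*X/(xp*W))
        = Real.log a + Real.log b + Real.log X - Real.log xp - Real.log W := by
      rw [Real.log_div (by positivity) (by positivity), Real.log_mul (by positivity) hX.ne',
        Real.log_mul hA.ne' hB.ne', Real.log_mul h0.ne' hW.ne']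
      ring
    have hmul := mul_le_mul_of_nonneg_left hlog hx
    have hts : xp * (a*b*X/(xp*W)) = a*b*X/W := by field_simp
    have hWX : Real.log (W/X) = Real.log W - Real.log X := Real.log_div hW.ne' hX.ne'
    have key : xp * (Real.log a + Real.log b - Real.log xp) - xp * Real.log (W/X)
        = xp * Real.log (a*b*X/(xp*W)) := by rw [hlt, hWX]; ring
    have : xp * Real.log (a*b*X/(xp*W)) ≤ a*b*X/W - xp := by
      calc xp * Real.log (a*b*X/(xp*W)) ≤ xp * (a*b*X/(xp*W) - 1) := hmul
        _ = a*b*X/W - xp := by rw [mul_sub, hts]; ring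
    linarith

theorem mixed_pool_bound_on_drained_energy_gap {m : ℕ}
    (P : Finset (Cx m)) (G : Cx m → ℝ)
    (hP0 : ((0 : Fin m → ℕ), (0 : ℕ)) ∉ P)
    (hPclosed : ∀ p ∈ P, p.1 ≠ 0 → 1 ≤ p.2 →
      (p.1, (0 : ℕ)) ∈ P ∧ ((0 : Fin m → ℕ), p.2) ∈ P)
    (xact : Cx m → ℝ)
    (hact_nn : ∀ p ∈ P, 0 ≤ xact p)
    (hne : (mixedP P).Nonempty)
    (hXmix : 0 < Xmix P xact) :
    gFE P G (ic P xact + rc P xact) - gFE P G xact ≤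
      Xmix P xact *
        (Real.log ((Xinp P xact + Xmix P xact) * (Xres P xact + Xmix P xact)
            / Xmix P xact)
          + 1 + dGmax P G hne) := by
  set PI := P.filter (fun q : Cx m => q.1 = 0 ∧ 1 ≤ q.2) with hPIdef
  set PR := P.filter (fun q : Cx m => q.2 = 0 ∧ q.1 ≠ 0) with hPRdef
  set PM := mixedP P with hPMdef
  set y : ℕ → ℝ := fun v => ∑ p ∈ P.filter (fun r : Cx m => r.2 = v), xact p with hydef
  set z : (Fin m → ℕ) → ℝ := fun u => ∑ p ∈ P.filter (fun r : Cx m => r.1 = u), xact p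
    with hzdef
  set X := Xmix P xact with hXdef
  have hmemPI : ∀ q : Cx m, q ∈ PI ↔ q ∈ P ∧ q.1 = 0 ∧ 1 ≤ q.2 := by
    intro q; rw [hPIdef, Finset.mem_filter]
  have hmemPR : ∀ q : Cx m, q ∈ PR ↔ q ∈ P ∧ q.2 = 0 ∧ q.1 ≠ 0 := by
    intro q; rw [hPRdef, Finset.mem_filter]
  have hmemPM : ∀ q : Cx m, q ∈ PM ↔ q ∈ P ∧ q.1 ≠ 0 ∧ 1 ≤ q.2 := by
    intro q; rw [hPMdef, mixedP, Finset.mem_filter]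
  have hyn : ∀ v, 0 ≤ y v := fun v =>
    Finset.sum_nonneg (fun p hp => hact_nn p (Finset.mem_of_mem_filter p hp))
  have hzn : ∀ u, 0 ≤ z u := fun u =>
    Finset.sum_nonneg (fun p hp => hact_nn p (Finset.mem_of_mem_filter p hp))
  have hsX : ∑ p ∈ PM, xact p = X := rfl
  -- maps from mixed to pure pools
  have hmapI : ∀ p ∈ PM, ((0 : Fin m → ℕ), p.2) ∈ PI := by
    intro p hp
    obtain ⟨hpP, hp1, hp2⟩ := (hmemPM p).1 hp
    exact (hmemPI _).2 ⟨(hPclosed p hpP hp1 hp2).2, rfl, hp2⟩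
  have hmapR : ∀ p ∈ PM, (p.1, (0 : ℕ)) ∈ PR := by
    intro p hp
    obtain ⟨hpP, hp1, hp2⟩ := (hmemPM p).1 hp
    exact (hmemPR _).2 ⟨(hPclosed p hpP hp1 hp2).1, rfl, hp1⟩
  -- fibers
  have hfibI : ∀ q ∈ PI, PM.filter (fun p : Cx m => ((0 : Fin m → ℕ), p.2) = q)
      = PM.filter (fun p : Cx m => p.2 = q.2) := by
    intro q hq
    obtain ⟨hqP, hq1, hq2⟩ := (hmemPI q).1 hq
    apply Finset.filter_congr
    intro p _
    constructor
    · intro h; exact (Prod.ext_iff.mp h).2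
    · intro h; exact Prod.ext_iff.mpr ⟨hq1.symm, h⟩
  have hfibR : ∀ q ∈ PR, PM.filter (fun p : Cx m => (p.1, (0 : ℕ)) = q)
      = PM.filter (fun p : Cx m => p.1 = q.1) := by
    intro q hq
    obtain ⟨hqP, hq2, hq1⟩ := (hmemPR q).1 hq
    apply Finset.filter_congr
    intro p _
    constructor
    · intro h; exact (Prod.ext_iff.mp h).1
    · intro h; exact Prod.ext_iff.mpr ⟨h, hq2.symm⟩
  -- splitting the fiber sums
  have hqnotMI : ∀ q ∈ PI, q ∉ PM.filter (fun p : Cx m => p.2 = q.2) := by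
    intro q hq hmem
    obtain ⟨hqP, hq1, hq2⟩ := (hmemPI q).1 hq
    exact ((hmemPM q).1 (Finset.mem_of_mem_filter q hmem)).2.1 hq1
  have hqnotMR : ∀ q ∈ PR, q ∉ PM.filter (fun p : Cx m => p.1 = q.1) := by
    intro q hq hmem
    obtain ⟨hqP, hq2, hq1⟩ := (hmemPR q).1 hq
    have := ((hmemPM q).1 (Finset.mem_of_mem_filter q hmem)).2.2
    omega
  have hsplitI : ∀ q ∈ PI, P.filter (fun r : Cx m => r.2 = q.2)
      = insert q (PM.filter (fun p : Cx m => p.2 = q.2)) := by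
    intro q hq
    obtain ⟨hqP, hq1, hq2⟩ := (hmemPI q).1 hq
    ext r
    simp only [Finset.mem_filter, Finset.mem_insert, hmemPM]
    constructor
    · rintro ⟨hrP, hr2⟩
      by_cases h1 : r.1 = 0
      · exact Or.inl (Prod.ext_iff.mpr ⟨h1.trans hq1.symm, hr2⟩)
      · exact Or.inr ⟨⟨hrP, h1, by omega⟩, hr2⟩
    · rintro (rfl | ⟨⟨hrP, _, _⟩, hr2⟩)
      · exact ⟨hqP, rfl⟩
      · exact ⟨hrP, hr2⟩
  have hsplitR : ∀ q ∈ PR, P.filter (fun r : Cx m => r.1 = q.1)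
      = insert q (PM.filter (fun p : Cx m => p.1 = q.1)) := by
    intro q hq
    obtain ⟨hqP, hq2, hq1⟩ := (hmemPR q).1 hq
    ext r
    simp only [Finset.mem_filter, Finset.mem_insert, hmemPM]
    constructor
    · rintro ⟨hrP, hr1⟩
      by_cases h2 : r.2 = 0
      · exact Or.inl (Prod.ext_iff.mpr ⟨hr1, h2.trans hq2.symm⟩)
      · exact Or.inr ⟨⟨hrP, hr1 ▸ hq1, by omega⟩, hr1⟩
    · rintro (rfl | ⟨⟨hrP, _, _⟩, hr1⟩)
      · exact ⟨hqP, rfl⟩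
      · exact ⟨hrP, hr1⟩
  have hyq : ∀ q ∈ PI, y q.2 = xact q + ∑ p ∈ PM.filter (fun p : Cx m => p.2 = q.2), xact p := by
    intro q hq
    have h0 : y q.2 = ∑ p ∈ P.filter (fun r : Cx m => r.2 = q.2), xact p := rfl
    rw [h0, hsplitI q hq, Finset.sum_insert (hqnotMI q hq)]
  have hzq : ∀ q ∈ PR, z q.1 = xact q + ∑ p ∈ PM.filter (fun p : Cx m => p.1 = q.1), xact p := by
    intro q hq
    have h0 : z q.1 = ∑ p ∈ P.filter (fun r : Cx m => r.1 = q.1), xact p := rfl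
    rw [h0, hsplitR q hq, Finset.sum_insert (hqnotMR q hq)]
  -- partition of P
  have hU : P = PI ∪ PR ∪ PM := by
    ext q
    simp only [Finset.mem_union, hmemPI, hmemPR, hmemPM]
    constructor
    · intro hq
      by_cases h2 : q.2 = 0
      · have h1 : q.1 ≠ 0 := by
          intro h1
          have hq00 : q = ((0 : Fin m → ℕ), (0 : ℕ)) := Prod.ext_iff.mpr ⟨h1, h2⟩
          rw [hq00] at hq
          exact hP0 hq
        exact Or.inl (Or.inr ⟨hq, h2, h1⟩)
      · by_cases h1 : q.1 = 0
        · exact Or.inl (Or.inl ⟨hq, h1, by omega⟩)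
        · exact Or.inr ⟨hq, h1, by omega⟩
    · rintro ((⟨h, -⟩ | ⟨h, -⟩) | ⟨h, -⟩) <;> exact h
  have hdisj1 : Disjoint PI PR := by
    rw [Finset.disjoint_left]
    intro q hqI hqR
    obtain ⟨-, -, h2⟩ := (hmemPI q).1 hqI
    obtain ⟨-, h2', -⟩ := (hmemPR q).1 hqR
    omega
  have hdisj2 : Disjoint (PI ∪ PR) PM := by
    rw [Finset.disjoint_left]
    intro q hqU hqM
    obtain ⟨-, h1, h2⟩ := (hmemPM q).1 hqM
    rcases Finset.mem_union.1 hqU with hqI | hqR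
    · exact h1 ((hmemPI q).1 hqI).2.1
    · have := ((hmemPR q).1 hqR).2.1; omega
  have hsum3 : ∀ F : Cx m → ℝ,
      ∑ p ∈ P, F p = ∑ q ∈ PI, F q + ∑ q ∈ PR, F q + ∑ p ∈ PM, F p := by
    intro F
    conv_lhs => rw [hU]
    rw [Finset.sum_union hdisj2, Finset.sum_union hdisj1]
  -- drained values
  have hdI : ∀ q ∈ PI, (ic P xact + rc P xact) q = y q.2 := by
    intro q hq
    obtain ⟨hqP, hq1, hq2⟩ := (hmemPI q).1 hq
    show ic P xact q + rc P xact q = y q.2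
    rw [ic, rc]
    rw [if_pos ⟨hq1, hq2⟩, if_neg (by rintro ⟨h, -⟩; omega), add_zero]
  have hdR : ∀ q ∈ PR, (ic P xact + rc P xact) q = z q.1 := by
    intro q hq
    obtain ⟨hqP, hq2, hq1⟩ := (hmemPR q).1 hq
    show ic P xact q + rc P xact q = z q.1
    rw [ic, rc]
    rw [if_neg (by rintro ⟨-, h⟩; omega), if_pos ⟨hq2, hq1⟩, zero_add]
  have hdM : ∀ q ∈ PM, (ic P xact + rc P xact) q = 0 := by
    intro q hq
    obtain ⟨hqP, hq1, hq2⟩ := (hmemPM q).1 hq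
    show ic P xact q + rc P xact q = 0
    rw [ic, rc]
    rw [if_neg (by rintro ⟨h, -⟩; exact hq1 h), if_neg (by rintro ⟨h, -⟩; omega), add_zero]
  -- expand gFE of the drained state
  have gdrn : gFE P G (ic P xact + rc P xact)
      = ∑ q ∈ PI, y q.2 * (Real.log (y q.2) - 1 + G q)
        + ∑ q ∈ PR, z q.1 * (Real.log (z q.1) - 1 + G q) := by
    rw [gFE, hsum3]
    have h1 : ∑ q ∈ PI, (ic P xact + rc P xact) q
          * (Real.log ((ic P xact + rc P xact) q) - 1 + G q)
        = ∑ q ∈ PI, y q.2 * (Real.log (y q.2) - 1 + G q) :=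
      Finset.sum_congr rfl (fun q hq => by rw [hdI q hq])
    have h2 : ∑ q ∈ PR, (ic P xact + rc P xact) q
          * (Real.log ((ic P xact + rc P xact) q) - 1 + G q)
        = ∑ q ∈ PR, z q.1 * (Real.log (z q.1) - 1 + G q) :=
      Finset.sum_congr rfl (fun q hq => by rw [hdR q hq])
    have h3 : ∑ q ∈ PM, (ic P xact + rc P xact) q
          * (Real.log ((ic P xact + rc P xact) q) - 1 + G q) = 0 :=
      Finset.sum_eq_zero (fun q hq => by rw [hdM q hq, zero_mul])
    rw [h1, h2, h3, add_zero]
  have gact : gFE P G xact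
      = ∑ q ∈ PI, xact q * (Real.log (xact q) - 1 + G q)
        + ∑ q ∈ PR, xact q * (Real.log (xact q) - 1 + G q)
        + ∑ p ∈ PM, xact p * (Real.log (xact p) - 1 + G p) := by
    rw [gFE, hsum3]
  -- bound on the input pool
  have bA : ∑ q ∈ PI, y q.2 * (Real.log (y q.2) - 1 + G q)
        - ∑ q ∈ PI, xact q * (Real.log (xact q) - 1 + G q)
      ≤ ∑ p ∈ PM, xact p * (Real.log (y p.2) + G ((0 : Fin m → ℕ), p.2)) := by
    rw [← Finset.sum_sub_distrib]
    have step : ∀ q ∈ PI, y q.2 * (Real.log (y q.2) - 1 + G q)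
          - xact q * (Real.log (xact q) - 1 + G q)
        ≤ (∑ p ∈ PM.filter (fun p : Cx m => p.2 = q.2), xact p) * (Real.log (y q.2) + G q) := by
      intro q hq
      have hx0 : 0 ≤ xact q := hact_nn q ((hmemPI q).1 hq).1
      have hs0 : 0 ≤ ∑ p ∈ PM.filter (fun p : Cx m => p.2 = q.2), xact p :=
        Finset.sum_nonneg (fun p hp => hact_nn p
          ((hmemPM p).1 (Finset.mem_of_mem_filter p hp)).1)
      rw [hyq q hq]
      exact conv_step' (xact q) _ (G q) hx0 hs0
    calc ∑ q ∈ PI, (y q.2 * (Real.log (y q.2) - 1 + G q)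
            - xact q * (Real.log (xact q) - 1 + G q))
        ≤ ∑ q ∈ PI, (∑ p ∈ PM.filter (fun p : Cx m => p.2 = q.2), xact p)
            * (Real.log (y q.2) + G q) := Finset.sum_le_sum step
      _ = ∑ q ∈ PI, ∑ p ∈ PM.filter (fun p : Cx m => ((0 : Fin m → ℕ), p.2) = q),
            xact p * (Real.log (y p.2) + G ((0 : Fin m → ℕ), p.2)) := by
          refine Finset.sum_congr rfl (fun q hq => ?_)
          rw [hfibI q hq, Finset.sum_mul]
          refine Finset.sum_congr rfl (fun p hp => ?_)
          have hp2 : p.2 = q.2 := (Finset.mem_filter.1 hp).2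
          have hq1 : q.1 = 0 := ((hmemPI q).1 hq).2.1
          have hq0 : ((0 : Fin m → ℕ), p.2) = q := Prod.ext_iff.mpr ⟨hq1.symm, hp2⟩
          rw [show Real.log (y q.2) = Real.log (y p.2) by rw [hp2],
            show G q = G ((0 : Fin m → ℕ), p.2) by rw [hq0]]
      _ = ∑ p ∈ PM, xact p * (Real.log (y p.2) + G ((0 : Fin m → ℕ), p.2)) :=
          Finset.sum_fiberwise_of_maps_to hmapI _
  -- bound on the residual pool
  have bB : ∑ q ∈ PR, z q.1 * (Real.log (z q.1) - 1 + G q)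
        - ∑ q ∈ PR, xact q * (Real.log (xact q) - 1 + G q)
      ≤ ∑ p ∈ PM, xact p * (Real.log (z p.1) + G (p.1, (0 : ℕ))) := by
    rw [← Finset.sum_sub_distrib]
    have step : ∀ q ∈ PR, z q.1 * (Real.log (z q.1) - 1 + G q)
          - xact q * (Real.log (xact q) - 1 + G q)
        ≤ (∑ p ∈ PM.filter (fun p : Cx m => p.1 = q.1), xact p) * (Real.log (z q.1) + G q) := by
      intro q hq
      have hx0 : 0 ≤ xact q := hact_nn q ((hmemPR q).1 hq).1
      have hs0 : 0 ≤ ∑ p ∈ PM.filter (fun p : Cx m => p.1 = q.1), xact p :=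
        Finset.sum_nonneg (fun p hp => hact_nn p
          ((hmemPM p).1 (Finset.mem_of_mem_filter p hp)).1)
      rw [hzq q hq]
      exact conv_step' (xact q) _ (G q) hx0 hs0
    calc ∑ q ∈ PR, (z q.1 * (Real.log (z q.1) - 1 + G q)
            - xact q * (Real.log (xact q) - 1 + G q))
        ≤ ∑ q ∈ PR, (∑ p ∈ PM.filter (fun p : Cx m => p.1 = q.1), xact p)
            * (Real.log (z q.1) + G q) := Finset.sum_le_sum step
      _ = ∑ q ∈ PR, ∑ p ∈ PM.filter (fun p : Cx m => (p.1, (0 : ℕ)) = q),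
            xact p * (Real.log (z p.1) + G (p.1, (0 : ℕ))) := by
          refine Finset.sum_congr rfl (fun q hq => ?_)
          rw [hfibR q hq, Finset.sum_mul]
          refine Finset.sum_congr rfl (fun p hp => ?_)
          have hp1 : p.1 = q.1 := (Finset.mem_filter.1 hp).2
          have hq2 : q.2 = 0 := ((hmemPR q).1 hq).2.1
          have hq0 : (p.1, (0 : ℕ)) = q := Prod.ext_iff.mpr ⟨hp1, hq2.symm⟩
          rw [show Real.log (z q.1) = Real.log (z p.1) by rw [hp1],
            show G q = G (p.1, (0 : ℕ)) by rw [hq0]]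
      _ = ∑ p ∈ PM, xact p * (Real.log (z p.1) + G (p.1, (0 : ℕ))) :=
          Finset.sum_fiberwise_of_maps_to hmapR _
  -- combine the mixed-pool sums
  have comb : ∑ p ∈ PM, xact p * (Real.log (y p.2) + G ((0 : Fin m → ℕ), p.2))
        + ∑ p ∈ PM, xact p * (Real.log (z p.1) + G (p.1, (0 : ℕ)))
        - ∑ p ∈ PM, xact p * (Real.log (xact p) - 1 + G p)
      = ∑ p ∈ PM, xact p * (Real.log (y p.2) + Real.log (z p.1) - Real.log (xact p)
          + (1 - dGbind G p)) := by
    rw [← Finset.sum_add_distrib, ← Finset.sum_sub_distrib]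
    refine Finset.sum_congr rfl (fun p hp => ?_)
    rw [dGbind]
    ring
  -- pull out dGmax
  have hsplit : ∑ p ∈ PM, xact p * (Real.log (y p.2) + Real.log (z p.1) - Real.log (xact p)
          + (1 - dGbind G p))
      ≤ ∑ p ∈ PM, xact p * (Real.log (y p.2) + Real.log (z p.1) - Real.log (xact p))
        + X * (1 + dGmax P G hne) := by
    have step : ∀ p ∈ PM, xact p * (Real.log (y p.2) + Real.log (z p.1) - Real.log (xact p)
            + (1 - dGbind G p))
        ≤ xact p * (Real.log (y p.2) + Real.log (z p.1) - Real.log (xact p))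
          + xact p * (1 + dGmax P G hne) := by
      intro p hp
      have hx := hact_nn p ((hmemPM p).1 hp).1
      have hdb : -(dGbind G p) ≤ dGmax P G hne :=
        Finset.le_sup' (fun p => -(dGbind G p)) (hPMdef ▸ hp)
      have hle : (1 : ℝ) - dGbind G p ≤ 1 + dGmax P G hne := by linarith
      have := mul_le_mul_of_nonneg_left hle hx
      calc xact p * (Real.log (y p.2) + Real.log (z p.1) - Real.log (xact p)
              + (1 - dGbind G p))
          = xact p * (Real.log (y p.2) + Real.log (z p.1) - Real.log (xact p))
            + xact p * (1 - dGbind G p) := by ring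
        _ ≤ _ := by linarith
    calc ∑ p ∈ PM, xact p * (Real.log (y p.2) + Real.log (z p.1) - Real.log (xact p)
            + (1 - dGbind G p))
        ≤ ∑ p ∈ PM, (xact p * (Real.log (y p.2) + Real.log (z p.1) - Real.log (xact p))
            + xact p * (1 + dGmax P G hne)) := Finset.sum_le_sum step
      _ = ∑ p ∈ PM, xact p * (Real.log (y p.2) + Real.log (z p.1) - Real.log (xact p))
            + (∑ p ∈ PM, xact p) * (1 + dGmax P G hne) := by
          rw [Finset.sum_add_distrib, ← Finset.sum_mul]
      _ = _ := by rw [hsX]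
  -- Jensen / log-sum step
  have hyx : ∀ p ∈ PM, xact p ≤ y p.2 := by
    intro p hp
    obtain ⟨hpP, -, -⟩ := (hmemPM p).1 hp
    exact Finset.single_le_sum
      (fun r hr => hact_nn r (Finset.mem_of_mem_filter r hr))
      (Finset.mem_filter.mpr ⟨hpP, rfl⟩)
  have hzx : ∀ p ∈ PM, xact p ≤ z p.1 := by
    intro p hp
    obtain ⟨hpP, -, -⟩ := (hmemPM p).1 hp
    exact Finset.single_le_sum
      (fun r hr => hact_nn r (Finset.mem_of_mem_filter r hr))
      (Finset.mem_filter.mpr ⟨hpP, rfl⟩)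
  set W := ∑ p ∈ PM, y p.2 * z p.1 with hWdef
  have hwnn : ∀ p ∈ PM, 0 ≤ y p.2 * z p.1 := fun p _ => mul_nonneg (hyn _) (hzn _)
  have hW0 : 0 < W := by
    obtain ⟨p0, hp0, hx0⟩ : ∃ p ∈ PM, 0 < xact p := by
      by_contra h
      push_neg at h
      have hle : X ≤ 0 := by
        rw [← hsX]
        exact Finset.sum_nonpos (fun p hp => h p hp)
      linarith
    have hpos : 0 < y p0.2 * z p0.1 :=
      mul_pos (lt_of_lt_of_le hx0 (hyx p0 hp0)) (lt_of_lt_of_le hx0 (hzx p0 hp0))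
    exact lt_of_lt_of_le hpos (Finset.single_le_sum hwnn hp0)
  have jensen : ∑ p ∈ PM, xact p * (Real.log (y p.2) + Real.log (z p.1) - Real.log (xact p))
      ≤ X * Real.log (W / X) := by
    have step : ∀ p ∈ PM,
        xact p * (Real.log (y p.2) + Real.log (z p.1) - Real.log (xact p))
        ≤ xact p * Real.log (W / X) + y p.2 * z p.1 * X / W - xact p := by
      intro p hp
      exact jensen_step' (xact p) (y p.2) (z p.1) X W
        (hact_nn p ((hmemPM p).1 hp).1) (hyx p hp) (hzx p hp) hXmix hW0
    calc ∑ p ∈ PM, xact p * (Real.log (y p.2) + Real.log (z p.1) - Real.log (xact p))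
        ≤ ∑ p ∈ PM, (xact p * Real.log (W / X) + y p.2 * z p.1 * X / W - xact p) :=
          Finset.sum_le_sum step
      _ = (∑ p ∈ PM, xact p) * Real.log (W / X)
            + (∑ p ∈ PM, y p.2 * z p.1) * X / W - ∑ p ∈ PM, xact p := by
          rw [Finset.sum_sub_distrib, Finset.sum_add_distrib, ← Finset.sum_mul,
            ← Finset.sum_div, ← Finset.sum_mul]
      _ = X * Real.log (W / X) + W * X / W - X := by rw [hsX, ← hWdef]
      _ = X * Real.log (W / X) := by
          rw [mul_div_cancel_left₀ X hW0.ne']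
          ring
  -- pool totals
  have hSI : ∑ q ∈ PI, y q.2 = Xinp P xact + X := by
    have h1 : ∑ q ∈ PI, y q.2
        = ∑ q ∈ PI, (xact q + ∑ p ∈ PM.filter (fun p : Cx m => p.2 = q.2), xact p) :=
      Finset.sum_congr rfl (fun q hq => hyq q hq)
    rw [h1, Finset.sum_add_distrib]
    have h2 : ∑ q ∈ PI, ∑ p ∈ PM.filter (fun p : Cx m => p.2 = q.2), xact p = X := by
      rw [← hsX, ← Finset.sum_fiberwise_of_maps_to hmapI (fun p => xact p)]
      exact Finset.sum_congr rfl (fun q hq => by rw [hfibI q hq])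
    rw [h2]
    rfl
  have hSR : ∑ q ∈ PR, z q.1 = Xres P xact + X := by
    have h1 : ∑ q ∈ PR, z q.1
        = ∑ q ∈ PR, (xact q + ∑ p ∈ PM.filter (fun p : Cx m => p.1 = q.1), xact p) :=
      Finset.sum_congr rfl (fun q hq => hzq q hq)
    rw [h1, Finset.sum_add_distrib]
    have h2 : ∑ q ∈ PR, ∑ p ∈ PM.filter (fun p : Cx m => p.1 = q.1), xact p = X := by
      rw [← hsX, ← Finset.sum_fiberwise_of_maps_to hmapR (fun p => xact p)]
      exact Finset.sum_congr rfl (fun q hq => by rw [hfibR q hq])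
    rw [h2]
    rfl
  -- W is bounded by the product of pool totals
  have hWle : W ≤ (Xinp P xact + X) * (Xres P xact + X) := by
    rw [← hSI, ← hSR]
    have hinj : ∀ p ∈ PM, ∀ p' ∈ PM,
        (fun p : Cx m => (((0 : Fin m → ℕ), p.2), (p.1, (0 : ℕ)))) p
          = (fun p : Cx m => (((0 : Fin m → ℕ), p.2), (p.1, (0 : ℕ)))) p' → p = p' := by
      intro p _ p' _ h
      obtain ⟨h1, h2⟩ := Prod.ext_iff.mp h
      exact Prod.ext_iff.mpr ⟨(Prod.ext_iff.mp h2).1, (Prod.ext_iff.mp h1).2⟩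
    calc W = ∑ p ∈ PM, (fun a : Cx m × Cx m => y a.1.2 * z a.2.1)
            ((fun p : Cx m => (((0 : Fin m → ℕ), p.2), (p.1, (0 : ℕ)))) p) := rfl
      _ = ∑ a ∈ PM.image (fun p : Cx m => (((0 : Fin m → ℕ), p.2), (p.1, (0 : ℕ)))),
            y a.1.2 * z a.2.1 :=
          (Finset.sum_image (f := fun a : Cx m × Cx m => y a.1.2 * z a.2.1) hinj).symm
      _ ≤ ∑ a ∈ PI ×ˢ PR, y a.1.2 * z a.2.1 := by
          refine Finset.sum_le_sum_of_subset_of_nonneg ?_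
            (fun a _ _ => mul_nonneg (hyn _) (hzn _))
          intro a ha
          obtain ⟨p, hp, rfl⟩ := Finset.mem_image.mp ha
          exact Finset.mem_product.mpr ⟨hmapI p hp, hmapR p hp⟩
      _ = (∑ q ∈ PI, y q.2) * (∑ q ∈ PR, z q.1) := by
          rw [Finset.sum_product, Finset.sum_mul_sum]
  -- final log comparison
  have hlogle : X * Real.log (W / X)
      ≤ X * Real.log ((Xinp P xact + X) * (Xres P xact + X) / X) := by
    refine mul_le_mul_of_nonneg_left ?_ (le_of_lt hXmix)
    exact Real.log_le_log (div_pos hW0 hXmix) ((div_le_div_iff_of_pos_right hXmix).mpr hWle)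
  -- assemble everything
  rw [gdrn, gact]
  have heq : X * Real.log ((Xinp P xact + X) * (Xres P xact + X) / X) + X * (1 + dGmax P G hne)
      = X * (Real.log ((Xinp P xact + X) * (Xres P xact + X) / X) + 1 + dGmax P G hne) := by
    ring
  linarith [bA, bB, comb, hsplit, jensen, hlogle, heq]
end

section
/- Universal Thermodynamic Bound on Energy Release: Let σ > 0 be the total added concentration of the input species and let ψ = ΔG_max + log(X_res + X_mix) be the amplifiability (assume X_res + X_mix > 0 and X_mix > 0). Then the free-energy release upon input integration satisfies g(x^rst) − g(x^act) ≤ σ e^ψ if ψ ≤ 0, and g(x^rst) − g(x^act) ≤ σ(ψ + 1) if ψ > 0. -/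
open Finset

/-!
STATEMENT 10 (Universal Thermodynamic Bound on Energy Release):
Let `σ > 0` be the added input concentration and
`ψ = ΔG_max + log(X_res + X_mix)` the amplifiability (with `X_res + X_mix > 0`,
`X_mix > 0`). Then `g(x^rst) − g(x^act) ≤ σ e^ψ` if `ψ ≤ 0`, and
`g(x^rst) − g(x^act) ≤ σ (ψ + 1)` if `ψ > 0`.
-/
lemma xlogle (x R : ℝ) (hx : 0 ≤ x) (hxR : x ≤ R) :
    x * (Real.log R - Real.log x) ≤ R - x := by
  rcases eq_or_lt_of_le hx with h0 | hpos
  · rw [← h0]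
    simpa using le_trans hx hxR
  · have hR : 0 < R := lt_of_lt_of_le hpos hxR
    have harg : 0 < R / x := by positivity
    have h := Real.log_le_sub_one_of_pos harg
    rw [Real.log_div (ne_of_gt hR) (ne_of_gt hpos)] at h
    have h2 := mul_le_mul_of_nonneg_left h (le_of_lt hpos)
    calc x * (Real.log R - Real.log x) ≤ x * (R / x - 1) := h2
      _ = R - x := by field_simp

lemma log_sum_ineq {ι : Type*} (S : Finset ι) (a b : ι → ℝ)
    (ha : ∀ i ∈ S, 0 ≤ a i) (hab : ∀ i ∈ S, a i ≤ b i) :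
    ∑ i ∈ S, a i * (Real.log (b i) - Real.log (a i)) ≤
      (∑ i ∈ S, a i) * (Real.log (∑ i ∈ S, b i) - Real.log (∑ i ∈ S, a i)) := by
  set A := ∑ i ∈ S, a i with hA
  set B := ∑ i ∈ S, b i with hB
  have hA0 : 0 ≤ A := Finset.sum_nonneg ha
  rcases eq_or_lt_of_le hA0 with h0 | hApos
  · have hz : ∀ i ∈ S, a i = 0 :=
      (Finset.sum_eq_zero_iff_of_nonneg ha).1 h0.symm
    have hL : ∑ i ∈ S, a i * (Real.log (b i) - Real.log (a i)) = 0 :=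
      Finset.sum_eq_zero fun i hi => by rw [hz i hi]; ring
    rw [hL, ← h0, zero_mul]
  · have hBA : A ≤ B := Finset.sum_le_sum hab
    have hBpos : 0 < B := lt_of_lt_of_le hApos hBA
    have key : ∀ i ∈ S, a i * (Real.log (b i) - Real.log (a i)) -
        a i * (Real.log B - Real.log A) ≤ A * b i / B - a i := by
      intro i hi
      rcases eq_or_lt_of_le (ha i hi) with h0 | hpos
      · rw [← h0]
        have hb : 0 ≤ b i := le_trans (ha i hi) (hab i hi)
        have : 0 ≤ A * b i / B := by positivity
        simpa using this
      · have hb : 0 < b i := lt_of_lt_of_le hpos (hab i hi)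
        have harg : 0 < b i * A / (a i * B) := by positivity
        have hlog := Real.log_le_sub_one_of_pos harg
        have hexp : Real.log (b i * A / (a i * B)) =
            Real.log (b i) - Real.log (a i) - Real.log B + Real.log A := by
          rw [Real.log_div (by positivity) (by positivity),
            Real.log_mul (ne_of_gt hb) (ne_of_gt hApos),
            Real.log_mul (ne_of_gt hpos) (ne_of_gt hBpos)]
          ring
        have h2 := mul_le_mul_of_nonneg_left hlog (le_of_lt hpos)
        calc a i * (Real.log (b i) - Real.log (a i)) - a i * (Real.log B - Real.log A)
            = a i * Real.log (b i * A / (a i * B)) := by rw [hexp]; ring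
          _ ≤ a i * (b i * A / (a i * B) - 1) := h2
          _ = A * b i / B - a i := by field_simp
    have hsum := Finset.sum_le_sum key
    rw [Finset.sum_sub_distrib] at hsum
    have e1 : ∑ i ∈ S, a i * (Real.log B - Real.log A) = A * (Real.log B - Real.log A) := by
      rw [← Finset.sum_mul]
    have e2 : ∑ i ∈ S, (A * b i / B - a i) = 0 := by
      rw [Finset.sum_sub_distrib]
      have : ∑ i ∈ S, A * b i / B = A := by
        rw [← Finset.sum_div, ← Finset.mul_sum, ← hB, mul_div_assoc,
          div_self (ne_of_gt hBpos), mul_one]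
      rw [this, ← hA, sub_self]
    rw [e1, e2] at hsum
    linarith

lemma fiber_res {m : ℕ} (P : Finset (Cx m))
    (hPcl : ∀ p ∈ P, p.1 ≠ 0 → 1 ≤ p.2 →
      (p.1, (0 : ℕ)) ∈ P ∧ ((0 : Fin m → ℕ), p.2) ∈ P)
    (Q : Finset (Cx m)) (hQP : Q ⊆ P) (hQ : ∀ s ∈ Q, s.1 ≠ 0) (F : Cx m → ℝ) :
    ∑ p ∈ P.filter (fun q => q.2 = 0 ∧ q.1 ≠ 0), ∑ s ∈ Q.filter (fun r => r.1 = p.1), F s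
      = ∑ s ∈ Q, F s := by
  have hmaps : ∀ s ∈ Q, ((s.1, (0:ℕ)) : Cx m) ∈ P.filter (fun q => q.2 = 0 ∧ q.1 ≠ 0) := by
    intro s hs
    have hsP := hQP hs
    have hs1 := hQ s hs
    refine Finset.mem_filter.2 ⟨?_, rfl, hs1⟩
    by_cases h2 : s.2 = 0
    · have : s = (s.1, (0:ℕ)) := by
        rw [← h2]
      rwa [← this]
    · exact (hPcl s hsP hs1 (Nat.one_le_iff_ne_zero.2 h2)).1
  rw [← Finset.sum_fiberwise_of_maps_to hmaps F]
  apply Finset.sum_congr rfl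
  intro p hp
  have hp2 := (Finset.mem_filter.1 hp).2
  apply Finset.sum_congr _ (fun _ _ => rfl)
  ext r
  simp only [Finset.mem_filter]
  constructor
  · rintro ⟨hr, h1⟩
    exact ⟨hr, Prod.ext_iff.2 ⟨h1, hp2.1.symm⟩⟩
  · rintro ⟨hr, h1⟩
    exact ⟨hr, (Prod.ext_iff.1 h1).1⟩

lemma fiber_inp {m : ℕ} (P : Finset (Cx m))
    (hPcl : ∀ p ∈ P, p.1 ≠ 0 → 1 ≤ p.2 →
      (p.1, (0 : ℕ)) ∈ P ∧ ((0 : Fin m → ℕ), p.2) ∈ P)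
    (Q : Finset (Cx m)) (hQP : Q ⊆ P) (hQ : ∀ s ∈ Q, 1 ≤ s.2) (F : Cx m → ℝ) :
    ∑ q ∈ P.filter (fun q => q.1 = 0 ∧ 1 ≤ q.2), ∑ s ∈ Q.filter (fun r => r.2 = q.2), F s
      = ∑ s ∈ Q, F s := by
  have hmaps : ∀ s ∈ Q, (((0 : Fin m → ℕ), s.2) : Cx m) ∈ P.filter (fun q => q.1 = 0 ∧ 1 ≤ q.2) := by
    intro s hs
    have hsP := hQP hs
    have hs2 := hQ s hs
    refine Finset.mem_filter.2 ⟨?_, rfl, hs2⟩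
    by_cases h1 : s.1 = 0
    · have : s = (((0 : Fin m → ℕ), s.2) : Cx m) := by
        rw [← h1]
      rwa [← this]
    · exact (hPcl s hsP h1 hs2).2
  rw [← Finset.sum_fiberwise_of_maps_to hmaps F]
  apply Finset.sum_congr rfl
  intro p hp
  have hp2 := (Finset.mem_filter.1 hp).2
  apply Finset.sum_congr _ (fun _ _ => rfl)
  ext r
  simp only [Finset.mem_filter]
  constructor
  · rintro ⟨hr, h1⟩
    exact ⟨hr, Prod.ext_iff.2 ⟨hp2.1.symm, h1⟩⟩
  · rintro ⟨hr, h1⟩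
    exact ⟨hr, (Prod.ext_iff.1 h1).2⟩

set_option maxHeartbeats 2000000 in
theorem universal_thermodynamic_bound_on_energy_release {m : ℕ}
    (P : Finset (Cx m)) (G : Cx m → ℝ) (c : Fin m → ℝ) (σ : ℝ) (hσ : 0 < σ)
    (hP0 : ((0 : Fin m → ℕ), (0 : ℕ)) ∉ P)
    (hPclosed : ∀ p ∈ P, p.1 ≠ 0 → 1 ≤ p.2 →
      (p.1, (0 : ℕ)) ∈ P ∧ ((0 : Fin m → ℕ), p.2) ∈ P)
    (xact y : Cx m → ℝ)
    (hact_nn : ∀ p ∈ P, 0 ≤ xact p)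
    (hact_feas : Amap P xact = (c, σ))
    (hact_min : ∀ z : Cx m → ℝ, (∀ p ∈ P, 0 ≤ z p) → Amap P z = (c, σ) →
      gFE P G xact ≤ gFE P G z)
    (hy_nn : ∀ p ∈ P, 0 ≤ y p)
    (hy_feas : Amap P y = (c, 0))
    (hy_min : ∀ z : Cx m → ℝ, (∀ p ∈ P, 0 ≤ z p) → Amap P z = (c, 0) →
      gFE P G y ≤ gFE P G z)
    (hne : (mixedP P).Nonempty)
    (hRM : 0 < Xres P xact + Xmix P xact)
    (hM : 0 < Xmix P xact)
    (ψ : ℝ) (hψ : ψ = dGmax P G hne + Real.log (Xres P xact + Xmix P xact)) :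
    (ψ ≤ 0 → gFE P G (ic P xact + y) - gFE P G xact ≤ σ * Real.exp ψ) ∧
    (0 < ψ → gFE P G (ic P xact + y) - gFE P G xact ≤ σ * (ψ + 1)) := by
  classical
  set Pres := P.filter (fun q : Cx m => q.2 = 0 ∧ q.1 ≠ 0) with hPres
  set Pinp := P.filter (fun q : Cx m => q.1 = 0 ∧ 1 ≤ q.2) with hPinp
  set R : Cx m → ℝ := fun p => ∑ s ∈ P.filter (fun r => r.1 = p.1), xact s with hR
  set I : Cx m → ℝ := fun p => ∑ s ∈ P.filter (fun r => r.2 = p.2), xact s with hI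
  have hPresP : Pres ⊆ P := by rw [hPres]; exact filter_subset _ _
  have hPinpP : Pinp ⊆ P := by rw [hPinp]; exact filter_subset _ _
  have hPmixP : mixedP P ⊆ P := filter_subset _ _
  have hmemRes : ∀ r ∈ Pres, r ∈ P ∧ r.2 = 0 ∧ r.1 ≠ 0 := by
    intro r hr; rw [hPres] at hr
    exact ⟨(mem_filter.1 hr).1, (mem_filter.1 hr).2⟩
  have hmemInp : ∀ r ∈ Pinp, r ∈ P ∧ r.1 = 0 ∧ 1 ≤ r.2 := by
    intro r hr; rw [hPinp] at hr
    exact ⟨(mem_filter.1 hr).1, (mem_filter.1 hr).2⟩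
  have hmemMix : ∀ r ∈ mixedP P, r ∈ P ∧ r.1 ≠ 0 ∧ 1 ≤ r.2 := by
    intro r hr
    exact ⟨(mem_filter.1 hr).1, (mem_filter.1 hr).2⟩
  have hRnn : ∀ p : Cx m, 0 ≤ R p := by
    intro p; simp only [hR]
    exact Finset.sum_nonneg fun s hs => hact_nn s (mem_filter.1 hs).1
  have hInn : ∀ p : Cx m, 0 ≤ I p := by
    intro p; simp only [hI]
    exact Finset.sum_nonneg fun s hs => hact_nn s (mem_filter.1 hs).1
  have hxleR : ∀ r ∈ P, xact r ≤ R r := by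
    intro r hr; simp only [hR]
    exact Finset.single_le_sum (fun s hs => hact_nn s (mem_filter.1 hs).1)
      (mem_filter.2 ⟨hr, rfl⟩)
  have hxleI : ∀ r ∈ P, xact r ≤ I r := by
    intro r hr; simp only [hI]
    exact Finset.single_le_sum (fun s hs => hact_nn s (mem_filter.1 hs).1)
      (mem_filter.2 ⟨hr, rfl⟩)
  have hc1 : ∀ i, ∑ p ∈ P, (p.1 i : ℝ) * xact p = c i := by
    intro i
    exact congrFun (congrArg Prod.fst hact_feas) i
  have hσeq : ∑ p ∈ P, (p.2 : ℝ) * xact p = σ := congrArg Prod.snd hact_feas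
  have hy0 : ∀ p ∈ P, 1 ≤ p.2 → y p = 0 := by
    intro p hp h2
    have hy2 : ∑ q ∈ P, (q.2 : ℝ) * y q = 0 := congrArg Prod.snd hy_feas
    have hnn : ∀ q ∈ P, 0 ≤ (q.2 : ℝ) * y q :=
      fun q hq => mul_nonneg (Nat.cast_nonneg _) (hy_nn q hq)
    have h0 := (Finset.sum_eq_zero_iff_of_nonneg hnn).1 hy2 p hp
    have h2' : ((p.2 : ℝ)) ≠ 0 := by
      have : (1 : ℝ) ≤ (p.2 : ℝ) := by exact_mod_cast h2
      linarith
    rcases mul_eq_zero.1 h0 with h | h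
    · exact absurd h h2'
    · exact h
  -- filter set manipulation helpers
  have hfilter20 : P.filter (fun q : Cx m => ¬ q.2 = 0) = P.filter (fun q : Cx m => 1 ≤ q.2) := by
    apply Finset.filter_congr
    intro q _
    simp [Nat.one_le_iff_ne_zero]
  have hsplit2 : ∀ F : Cx m → ℝ, ∑ s ∈ P.filter (fun q : Cx m => 1 ≤ q.2), F s
      = ∑ s ∈ Pinp, F s + ∑ s ∈ mixedP P, F s := by
    intro F
    rw [← Finset.sum_filter_add_sum_filter_not (P.filter (fun q : Cx m => 1 ≤ q.2))
      (fun q => q.1 = 0) F]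
    congr 1
    · apply Finset.sum_congr _ (fun _ _ => rfl)
      rw [hPinp, Finset.filter_filter]
      apply Finset.filter_congr
      intro q _
      exact and_comm
    · apply Finset.sum_congr _ (fun _ _ => rfl)
      show _ = P.filter (fun q : Cx m => q.1 ≠ 0 ∧ 1 ≤ q.2)
      rw [Finset.filter_filter]
      apply Finset.filter_congr
      intro q _
      tauto
  have hsplit1 : ∀ F : Cx m → ℝ, ∑ s ∈ P.filter (fun q : Cx m => q.1 ≠ 0), F s
      = ∑ s ∈ Pres, F s + ∑ s ∈ mixedP P, F s := by
    intro F
    rw [← Finset.sum_filter_add_sum_filter_not (P.filter (fun q : Cx m => q.1 ≠ 0))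
      (fun q => q.2 = 0) F]
    congr 1
    · apply Finset.sum_congr _ (fun _ _ => rfl)
      rw [hPres, Finset.filter_filter]
      apply Finset.filter_congr
      intro q _
      exact and_comm
    · apply Finset.sum_congr _ (fun _ _ => rfl)
      show _ = P.filter (fun q : Cx m => q.1 ≠ 0 ∧ 1 ≤ q.2)
      rw [Finset.filter_filter]
      apply Finset.filter_congr
      intro q _
      simp only [Nat.one_le_iff_ne_zero]
  have hXres : Xres P xact = ∑ p ∈ Pres, xact p := by rw [hPres]; rfl
  have hXinp : Xinp P xact = ∑ p ∈ Pinp, xact p := by rw [hPinp]; rfl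
  have hXmix : Xmix P xact = ∑ p ∈ mixedP P, xact p := rfl
  have hsetR : ∀ p : Cx m, p.1 ≠ 0 →
      (P.filter (fun q : Cx m => q.1 ≠ 0)).filter (fun r => r.1 = p.1)
        = P.filter (fun r => r.1 = p.1) := by
    intro p hp1
    rw [Finset.filter_filter]
    apply Finset.filter_congr
    intro q _
    constructor
    · exact fun h => h.2
    · intro h; exact ⟨by rw [h]; exact hp1, h⟩
  have hsetI : ∀ p : Cx m, 1 ≤ p.2 →
      (P.filter (fun q : Cx m => 1 ≤ q.2)).filter (fun r => r.2 = p.2)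
        = P.filter (fun r => r.2 = p.2) := by
    intro p hp2
    rw [Finset.filter_filter]
    apply Finset.filter_congr
    intro q _
    constructor
    · exact fun h => h.2
    · intro h; exact ⟨by rw [h]; exact hp2, h⟩
  have hsumR : ∑ p ∈ Pres, R p = Xres P xact + Xmix P xact := by
    have e : ∑ p ∈ Pres, R p = ∑ p ∈ Pres,
        ∑ s ∈ (P.filter (fun q : Cx m => q.1 ≠ 0)).filter (fun r => r.1 = p.1), xact s := by
      apply Finset.sum_congr rfl
      intro p hp
      rw [hsetR p (hmemRes p hp).2.2]
      try simp only [hR]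
    rw [e, hPres, fiber_res P hPclosed _ (filter_subset _ _)
      (fun s hs => (mem_filter.1 hs).2) _]
    try rw [hsplit1]
    try rw [hXres]
    try rw [hXmix]
  have hsumI : ∑ q ∈ Pinp, I q = Xinp P xact + Xmix P xact := by
    have e : ∑ q ∈ Pinp, I q = ∑ q ∈ Pinp,
        ∑ s ∈ (P.filter (fun q : Cx m => 1 ≤ q.2)).filter (fun r => r.2 = q.2), xact s := by
      apply Finset.sum_congr rfl
      intro q hq
      rw [hsetI q (hmemInp q hq).2.2]
      try simp only [hI]
    rw [e, hPinp, fiber_inp P hPclosed _ (filter_subset _ _)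
      (fun s hs => (mem_filter.1 hs).2) _]
    try rw [hsplit2]
    try rw [hXinp]
    try rw [hXmix]
  have hMQsum : ∑ q ∈ Pinp, ∑ r ∈ (mixedP P).filter (fun s => s.2 = q.2), xact r
      = Xmix P xact := by
    rw [hPinp, fiber_inp P hPclosed (mixedP P) hPmixP
      (fun s hs => (hmemMix s hs).2.2) xact]
    try rw [hXmix]
  have hMQleI : ∀ q : Cx m, (∑ r ∈ (mixedP P).filter (fun s => s.2 = q.2), xact r) ≤ I q := by
    intro q
    simp only [hI]
    apply Finset.sum_le_sum_of_subset_of_nonneg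
    · intro r hr
      have h := mem_filter.1 hr
      exact mem_filter.2 ⟨hPmixP h.1, h.2⟩
    · intro s hs _
      exact hact_nn s (mem_filter.1 hs).1
  have hMQnn : ∀ q : Cx m, 0 ≤ ∑ r ∈ (mixedP P).filter (fun s => s.2 = q.2), xact r := by
    intro q
    exact Finset.sum_nonneg fun r hr => hact_nn r (hPmixP (mem_filter.1 hr).1)
  have hIσ : ∑ q ∈ Pinp, I q ≤ σ := by
    have step1 : ∑ q ∈ Pinp, I q ≤ ∑ q ∈ Pinp,
        ∑ s ∈ (P.filter (fun q : Cx m => 1 ≤ q.2)).filter (fun r => r.2 = q.2),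
          (s.2 : ℝ) * xact s := by
      apply Finset.sum_le_sum
      intro q hq
      rw [hsetI q (hmemInp q hq).2.2]
      simp only [hI]
      apply Finset.sum_le_sum
      intro s hs
      have hs2 : s.2 = q.2 := (mem_filter.1 hs).2
      have h1 : (1 : ℝ) ≤ (s.2 : ℝ) := by
        have : 1 ≤ s.2 := by rw [hs2]; exact (hmemInp q hq).2.2
        exact_mod_cast this
      nlinarith [hact_nn s (mem_filter.1 hs).1]
    have step2 : ∑ q ∈ Pinp,
        ∑ s ∈ (P.filter (fun q : Cx m => 1 ≤ q.2)).filter (fun r => r.2 = q.2),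
          (s.2 : ℝ) * xact s
        = ∑ s ∈ P.filter (fun q : Cx m => 1 ≤ q.2), (s.2 : ℝ) * xact s := by
      rw [hPinp]
      exact fiber_inp P hPclosed _ (filter_subset _ _)
        (fun s hs => (mem_filter.1 hs).2) _
    have step3 : ∑ s ∈ P.filter (fun q : Cx m => 1 ≤ q.2), (s.2 : ℝ) * xact s ≤ σ := by
      rw [← hσeq]
      apply Finset.sum_le_sum_of_subset_of_nonneg (filter_subset _ _)
      intro s hs _
      exact mul_nonneg (Nat.cast_nonneg _) (hact_nn s hs)
    calc ∑ q ∈ Pinp, I q ≤ _ := step1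
      _ = _ := step2
      _ ≤ σ := step3
  have hMIsum : Xmix P xact ≤ ∑ q ∈ Pinp, I q := by
    rw [← hMQsum]
    exact Finset.sum_le_sum fun q _ => hMQleI q
  have hIpos : 0 < ∑ q ∈ Pinp, I q := lt_of_lt_of_le hM hMIsum
  have hMσ : Xmix P xact ≤ σ := le_trans hMIsum hIσ
  -- resting state decomposition
  have hicy : gFE P G (ic P xact + y) = gFE P G (ic P xact) + gFE P G y := by
    calc gFE P G (ic P xact + y)
        = ∑ p ∈ P, (ic P xact + y) p * (Real.log ((ic P xact + y) p) - 1 + G p) := rfl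
      _ = ∑ p ∈ P, (ic P xact p * (Real.log (ic P xact p) - 1 + G p)
            + y p * (Real.log (y p) - 1 + G p)) := by
          apply Finset.sum_congr rfl
          intro p hp
          by_cases hcond : p.1 = 0 ∧ 1 ≤ p.2
          · have hyp : y p = 0 := hy0 p hp hcond.2
            rw [Pi.add_apply, hyp, add_zero, zero_mul, add_zero]
          · have hicp : ic P xact p = 0 := by simp only [ic, if_neg hcond]
            rw [Pi.add_apply, hicp, zero_add, zero_mul, zero_add]
      _ = _ := Finset.sum_add_distrib
  -- rc is feasible for the zero-input program
  have hrc_nn : ∀ p ∈ P, 0 ≤ rc P xact p := by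
    intro p _
    simp only [rc]
    split
    · exact Finset.sum_nonneg fun s hs => hact_nn s (mem_filter.1 hs).1
    · exact le_refl 0
  have hrc_feas : Amap P (rc P xact) = (c, 0) := by
    have h2 : ∑ p ∈ P, (p.2 : ℝ) * rc P xact p = 0 := by
      apply Finset.sum_eq_zero
      intro p hp
      by_cases h : p.2 = 0
      · rw [h]; simp
      · have hz : rc P xact p = 0 := by
          simp only [rc]
          rw [if_neg]
          tauto
        rw [hz, mul_zero]
    have h1 : ∀ i, ∑ p ∈ P, (p.1 i : ℝ) * rc P xact p = c i := by
      intro i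
      have hz : ∑ p ∈ P.filter (fun q : Cx m => ¬(q.2 = 0 ∧ q.1 ≠ 0)),
          (p.1 i : ℝ) * rc P xact p = 0 :=
        Finset.sum_eq_zero fun p hp => by
          have h := (mem_filter.1 hp).2
          simp only [rc, if_neg h, mul_zero]
      have hstep : ∑ p ∈ P, (p.1 i : ℝ) * rc P xact p
          = ∑ p ∈ Pres, (p.1 i : ℝ) * rc P xact p := by
        rw [← Finset.sum_filter_add_sum_filter_not P (fun q : Cx m => q.2 = 0 ∧ q.1 ≠ 0)
          (fun p => (p.1 i : ℝ) * rc P xact p), hz, add_zero, hPres]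
      rw [hstep]
      have hstep2 : ∀ p ∈ Pres, (p.1 i : ℝ) * rc P xact p
          = ∑ s ∈ (P.filter (fun q : Cx m => q.1 ≠ 0)).filter (fun r => r.1 = p.1),
              (s.1 i : ℝ) * xact s := by
        intro p hp
        obtain ⟨hpP, hp2, hp1⟩ := hmemRes p hp
        rw [hsetR p hp1]
        have hrcp : rc P xact p = ∑ s ∈ P.filter (fun r => r.1 = p.1), xact s := by
          simp only [rc, if_pos (⟨hp2, hp1⟩ : p.2 = 0 ∧ p.1 ≠ 0)]
        rw [hrcp, Finset.mul_sum]
        apply Finset.sum_congr rfl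
        intro s hs
        rw [(mem_filter.1 hs).2]
      rw [Finset.sum_congr rfl hstep2, hPres,
        fiber_res P hPclosed (P.filter (fun q : Cx m => q.1 ≠ 0)) (filter_subset _ _)
          (fun s hs => (mem_filter.1 hs).2) _]
      rw [Finset.sum_filter_of_ne]
      · exact hc1 i
      · intro s _ hf h0
        apply hf
        rw [h0]
        simp
    unfold Amap
    rw [Prod.ext_iff]
    constructor
    · funext i
      exact h1 i
    · exact h2
  have hyrc : gFE P G y ≤ gFE P G (rc P xact) := hy_min _ hrc_nn hrc_feas
  -- expression of gFE (ic ...)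
  have hgic : gFE P G (ic P xact)
      = (∑ s ∈ Pinp, xact s * (Real.log (I s) - 1 + G (0, s.2)))
      + (∑ s ∈ mixedP P, xact s * (Real.log (I s) - 1 + G (0, s.2))) := by
    have step1 : gFE P G (ic P xact) = ∑ p ∈ Pinp, I p * (Real.log (I p) - 1 + G p) := by
      have hz : ∑ p ∈ P.filter (fun q : Cx m => ¬(q.1 = 0 ∧ 1 ≤ q.2)),
          ic P xact p * (Real.log (ic P xact p) - 1 + G p) = 0 :=
        Finset.sum_eq_zero fun p hp => by
          have h := (mem_filter.1 hp).2
          simp only [ic, if_neg h, zero_mul]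
      calc gFE P G (ic P xact)
          = ∑ p ∈ P, ic P xact p * (Real.log (ic P xact p) - 1 + G p) := rfl
        _ = (∑ p ∈ P.filter (fun q : Cx m => q.1 = 0 ∧ 1 ≤ q.2),
              ic P xact p * (Real.log (ic P xact p) - 1 + G p))
            + ∑ p ∈ P.filter (fun q : Cx m => ¬(q.1 = 0 ∧ 1 ≤ q.2)),
              ic P xact p * (Real.log (ic P xact p) - 1 + G p) :=
            (Finset.sum_filter_add_sum_filter_not P _ _).symm
        _ = ∑ p ∈ Pinp, I p * (Real.log (I p) - 1 + G p) := by
            rw [hz, add_zero, ← hPinp]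
            apply Finset.sum_congr rfl
            intro p hp
            have h := (hmemInp p hp).2
            have hicp : ic P xact p = I p := by
              simp only [ic, if_pos h, hI]
            rw [hicp]
    rw [step1]
    have step2 : ∀ p ∈ Pinp, I p * (Real.log (I p) - 1 + G p)
        = ∑ s ∈ (P.filter (fun q : Cx m => 1 ≤ q.2)).filter (fun r => r.2 = p.2),
            xact s * (Real.log (I s) - 1 + G (0, s.2)) := by
      intro p hp
      obtain ⟨hpP, hp1, hp2⟩ := hmemInp p hp
      have hGp : G p = G (0, p.2) := by
        have hpe : p = ((0 : Fin m → ℕ), p.2) := Prod.ext_iff.2 ⟨hp1, rfl⟩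
        rw [← hpe]
      rw [hsetI p hp2]
      have hIP : I p * (Real.log (I p) - 1 + G p)
          = ∑ s ∈ P.filter (fun r => r.2 = p.2), xact s * (Real.log (I p) - 1 + G p) := by
        simp only [hI]
        rw [Finset.sum_mul]
      rw [hIP]
      apply Finset.sum_congr rfl
      intro s hs
      have hs2 : s.2 = p.2 := (mem_filter.1 hs).2
      have hIsp : I s = I p := by simp only [hI]; rw [hs2]
      rw [hIsp, hGp, hs2]
    rw [Finset.sum_congr rfl step2, hPinp,
      fiber_inp P hPclosed (P.filter (fun q : Cx m => 1 ≤ q.2)) (filter_subset _ _)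
        (fun s hs => (mem_filter.1 hs).2) _, hsplit2]
  -- expression of gFE (rc ...)
  have hgrc : gFE P G (rc P xact)
      = (∑ s ∈ Pres, xact s * (Real.log (R s) - 1 + G (s.1, 0)))
      + (∑ s ∈ mixedP P, xact s * (Real.log (R s) - 1 + G (s.1, 0))) := by
    have step1 : gFE P G (rc P xact) = ∑ p ∈ Pres, R p * (Real.log (R p) - 1 + G p) := by
      have hz : ∑ p ∈ P.filter (fun q : Cx m => ¬(q.2 = 0 ∧ q.1 ≠ 0)),
          rc P xact p * (Real.log (rc P xact p) - 1 + G p) = 0 :=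
        Finset.sum_eq_zero fun p hp => by
          have h := (mem_filter.1 hp).2
          simp only [rc, if_neg h, zero_mul]
      calc gFE P G (rc P xact)
          = ∑ p ∈ P, rc P xact p * (Real.log (rc P xact p) - 1 + G p) := rfl
        _ = (∑ p ∈ P.filter (fun q : Cx m => q.2 = 0 ∧ q.1 ≠ 0),
              rc P xact p * (Real.log (rc P xact p) - 1 + G p))
            + ∑ p ∈ P.filter (fun q : Cx m => ¬(q.2 = 0 ∧ q.1 ≠ 0)),
              rc P xact p * (Real.log (rc P xact p) - 1 + G p) :=
            (Finset.sum_filter_add_sum_filter_not P _ _).symm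
        _ = ∑ p ∈ Pres, R p * (Real.log (R p) - 1 + G p) := by
            rw [hz, add_zero, ← hPres]
            apply Finset.sum_congr rfl
            intro p hp
            have h := (hmemRes p hp).2
            have hrcp : rc P xact p = R p := by
              simp only [rc, if_pos h, hR]
            rw [hrcp]
    rw [step1]
    have step2 : ∀ p ∈ Pres, R p * (Real.log (R p) - 1 + G p)
        = ∑ s ∈ (P.filter (fun q : Cx m => q.1 ≠ 0)).filter (fun r => r.1 = p.1),
            xact s * (Real.log (R s) - 1 + G (s.1, 0)) := by
      intro p hp
      obtain ⟨hpP, hp2, hp1⟩ := hmemRes p hp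
      have hGp : G p = G (p.1, 0) := by
        have hpe : p = ((p.1, (0 : ℕ)) : Cx m) := Prod.ext_iff.2 ⟨rfl, hp2⟩
        rw [← hpe]
      rw [hsetR p hp1]
      have hRP : R p * (Real.log (R p) - 1 + G p)
          = ∑ s ∈ P.filter (fun r => r.1 = p.1), xact s * (Real.log (R p) - 1 + G p) := by
        simp only [hR]
        rw [Finset.sum_mul]
      rw [hRP]
      apply Finset.sum_congr rfl
      intro s hs
      have hs1 : s.1 = p.1 := (mem_filter.1 hs).2
      have hRsp : R s = R p := by simp only [hR]; rw [hs1]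
      rw [hRsp, hGp, hs1]
    rw [Finset.sum_congr rfl step2, hPres,
      fiber_res P hPclosed (P.filter (fun q : Cx m => q.1 ≠ 0)) (filter_subset _ _)
        (fun s hs => (mem_filter.1 hs).2) _, hsplit1]
  -- expression of gFE xact
  have hgact : gFE P G xact
      = (∑ r ∈ Pres, xact r * (Real.log (xact r) - 1 + G r))
      + ((∑ r ∈ Pinp, xact r * (Real.log (xact r) - 1 + G r))
      + (∑ r ∈ mixedP P, xact r * (Real.log (xact r) - 1 + G r))) := by
    have e0 : P.filter (fun q : Cx m => q.2 = 0) = Pres := by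
      rw [hPres]
      apply Finset.filter_congr
      intro q hq
      constructor
      · intro h2
        refine ⟨h2, fun h1 => hP0 ?_⟩
        have hq00 : q = ((0 : Fin m → ℕ), (0 : ℕ)) := Prod.ext_iff.2 ⟨h1, h2⟩
        rwa [← hq00]
      · exact fun h => h.1
    calc gFE P G xact = ∑ p ∈ P, xact p * (Real.log (xact p) - 1 + G p) := rfl
      _ = (∑ p ∈ P.filter (fun q : Cx m => q.2 = 0),
            xact p * (Real.log (xact p) - 1 + G p))
          + ∑ p ∈ P.filter (fun q : Cx m => ¬ q.2 = 0),
            xact p * (Real.log (xact p) - 1 + G p) :=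
          (Finset.sum_filter_add_sum_filter_not P _ _).symm
      _ = _ := by rw [e0, hfilter20, hsplit2]
  -- binding free energy bound
  have hDG : ∀ r ∈ mixedP P, G (r.1, 0) + G (0, r.2) - G r ≤ dGmax P G hne := by
    intro r hr
    have h : -(dGbind G r) ≤ dGmax P G hne := by
      unfold dGmax
      exact Finset.le_sup' (fun p => -(dGbind G p)) hr
    simp only [dGbind] at h
    linarith
  have hS3 : (∑ s ∈ mixedP P, xact s * (Real.log (I s) - 1 + G (0, s.2)))
      + (∑ s ∈ mixedP P, xact s * (Real.log (R s) - 1 + G (s.1, 0)))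
      - (∑ r ∈ mixedP P, xact r * (Real.log (xact r) - 1 + G r))
      ≤ (∑ r ∈ mixedP P, xact r * (Real.log (R r) + Real.log (I r) - Real.log (xact r)))
        - Xmix P xact + Xmix P xact * dGmax P G hne := by
    have hterm : ∀ r ∈ mixedP P,
        xact r * (Real.log (I r) - 1 + G (0, r.2))
        + xact r * (Real.log (R r) - 1 + G (r.1, 0))
        - xact r * (Real.log (xact r) - 1 + G r)
        ≤ xact r * (Real.log (R r) + Real.log (I r) - Real.log (xact r))
          - xact r + xact r * dGmax P G hne := by
      intro r hr
      have hx := hact_nn r (hPmixP hr)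
      have h1 : xact r * (G (r.1, 0) + G (0, r.2) - G r) ≤ xact r * dGmax P G hne :=
        mul_le_mul_of_nonneg_left (hDG r hr) hx
      nlinarith [h1]
    calc (∑ s ∈ mixedP P, xact s * (Real.log (I s) - 1 + G (0, s.2)))
        + (∑ s ∈ mixedP P, xact s * (Real.log (R s) - 1 + G (s.1, 0)))
        - (∑ r ∈ mixedP P, xact r * (Real.log (xact r) - 1 + G r))
        = ∑ r ∈ mixedP P, (xact r * (Real.log (I r) - 1 + G (0, r.2))
            + xact r * (Real.log (R r) - 1 + G (r.1, 0))
            - xact r * (Real.log (xact r) - 1 + G r)) := by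
          rw [← Finset.sum_add_distrib, ← Finset.sum_sub_distrib]
      _ ≤ ∑ r ∈ mixedP P, (xact r * (Real.log (R r) + Real.log (I r) - Real.log (xact r))
            - xact r + xact r * dGmax P G hne) := Finset.sum_le_sum hterm
      _ = _ := by
          rw [hXmix, Finset.sum_add_distrib, Finset.sum_sub_distrib, ← Finset.sum_mul]
  -- entropy bound for mixed complexes
  have hent : (∑ r ∈ mixedP P, xact r * (Real.log (R r) + Real.log (I r) - Real.log (xact r)))
      ≤ Xmix P xact * Real.log (Xres P xact + Xmix P xact)
        + Xmix P xact * (Real.log σ - Real.log (Xmix P xact)) := by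
    have hfib : (∑ r ∈ mixedP P, xact r * (Real.log (R r) + Real.log (I r) - Real.log (xact r)))
        = ∑ q ∈ Pinp, ∑ r ∈ (mixedP P).filter (fun s => s.2 = q.2),
            xact r * (Real.log (R r) + Real.log (I r) - Real.log (xact r)) := by
      rw [hPinp]
      exact (fiber_inp P hPclosed (mixedP P) hPmixP (fun s hs => (hmemMix s hs).2.2) _).symm
    rw [hfib]
    have hq : ∀ q ∈ Pinp,
        (∑ r ∈ (mixedP P).filter (fun s => s.2 = q.2),
          xact r * (Real.log (R r) + Real.log (I r) - Real.log (xact r)))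
        ≤ (∑ r ∈ (mixedP P).filter (fun s => s.2 = q.2), xact r)
            * Real.log (Xres P xact + Xmix P xact)
          + (∑ r ∈ (mixedP P).filter (fun s => s.2 = q.2), xact r)
            * (Real.log (I q)
              - Real.log (∑ r ∈ (mixedP P).filter (fun s => s.2 = q.2), xact r)) := by
      intro q hqm
      have hFqP : ∀ r ∈ (mixedP P).filter (fun s => s.2 = q.2), r ∈ P :=
        fun r hr => hPmixP (mem_filter.1 hr).1
      have hxnnF : ∀ r ∈ (mixedP P).filter (fun s => s.2 = q.2), 0 ≤ xact r :=
        fun r hr => hact_nn r (hFqP r hr)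
      have hsplitq : ∀ r ∈ (mixedP P).filter (fun s => s.2 = q.2),
          xact r * (Real.log (R r) + Real.log (I r) - Real.log (xact r))
          = xact r * (Real.log (R r) - Real.log (xact r)) + xact r * Real.log (I q) := by
        intro r hr
        have hr2 : r.2 = q.2 := (mem_filter.1 hr).2
        have hIrq : I r = I q := by simp only [hI]; rw [hr2]
        rw [← hIrq]
        ring
      rw [Finset.sum_congr rfl hsplitq, Finset.sum_add_distrib, ← Finset.sum_mul]
      have h1 : (∑ r ∈ (mixedP P).filter (fun s => s.2 = q.2),
            xact r * (Real.log (R r) - Real.log (xact r)))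
          ≤ (∑ r ∈ (mixedP P).filter (fun s => s.2 = q.2), xact r)
            * (Real.log (∑ r ∈ (mixedP P).filter (fun s => s.2 = q.2), R r)
              - Real.log (∑ r ∈ (mixedP P).filter (fun s => s.2 = q.2), xact r)) :=
        log_sum_ineq _ _ _ hxnnF (fun r hr => hxleR r (hFqP r hr))
      have hBT : (∑ r ∈ (mixedP P).filter (fun s => s.2 = q.2), R r)
          ≤ Xres P xact + Xmix P xact := by
        have himg : ∑ r ∈ (mixedP P).filter (fun s => s.2 = q.2), R r
            = ∑ p ∈ ((mixedP P).filter (fun s => s.2 = q.2)).image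
                (fun r : Cx m => ((r.1, (0 : ℕ)) : Cx m)), R p := by
          have hinj : ∀ r ∈ (mixedP P).filter (fun s => s.2 = q.2),
              ∀ s ∈ (mixedP P).filter (fun s => s.2 = q.2),
              ((r.1, (0 : ℕ)) : Cx m) = ((s.1, (0 : ℕ)) : Cx m) → r = s := by
            intro r hr s hs hrs
            have h1' := (Prod.ext_iff.1 hrs).1
            have h2' : r.2 = q.2 := (mem_filter.1 hr).2
            have h3' : s.2 = q.2 := (mem_filter.1 hs).2
            exact Prod.ext_iff.2 ⟨h1', h2'.trans h3'.symm⟩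
          rw [Finset.sum_image hinj]
          try (apply Finset.sum_congr rfl; intro r _; simp only [hR])
        rw [himg, ← hsumR]
        apply Finset.sum_le_sum_of_subset_of_nonneg
        · intro p hp
          obtain ⟨r, hr, hrp⟩ := Finset.mem_image.1 hp
          obtain ⟨hrP, hr1, hr2⟩ := hmemMix r (mem_filter.1 hr).1
          rw [← hrp, hPres]
          exact mem_filter.2 ⟨(hPclosed r hrP hr1 hr2).1, rfl, hr1⟩
        · intro p _ _
          exact hRnn p
      have hMQnn' : 0 ≤ ∑ r ∈ (mixedP P).filter (fun s => s.2 = q.2), xact r := hMQnn q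
      have h2 : (∑ r ∈ (mixedP P).filter (fun s => s.2 = q.2), xact r)
            * (Real.log (∑ r ∈ (mixedP P).filter (fun s => s.2 = q.2), R r)
              - Real.log (∑ r ∈ (mixedP P).filter (fun s => s.2 = q.2), xact r))
          ≤ (∑ r ∈ (mixedP P).filter (fun s => s.2 = q.2), xact r)
            * (Real.log (Xres P xact + Xmix P xact)
              - Real.log (∑ r ∈ (mixedP P).filter (fun s => s.2 = q.2), xact r)) := by
        rcases eq_or_lt_of_le hMQnn' with h0 | hpos
        · rw [← h0]
          simp
        · apply mul_le_mul_of_nonneg_left _ hMQnn'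
          apply sub_le_sub_right
          apply Real.log_le_log _ hBT
          calc (0 : ℝ) < ∑ r ∈ (mixedP P).filter (fun s => s.2 = q.2), xact r := hpos
            _ ≤ ∑ r ∈ (mixedP P).filter (fun s => s.2 = q.2), R r :=
              Finset.sum_le_sum fun r hr => hxleR r (hFqP r hr)
      linarith [le_trans h1 h2]
    calc ∑ q ∈ Pinp, ∑ r ∈ (mixedP P).filter (fun s => s.2 = q.2),
          xact r * (Real.log (R r) + Real.log (I r) - Real.log (xact r))
        ≤ ∑ q ∈ Pinp, ((∑ r ∈ (mixedP P).filter (fun s => s.2 = q.2), xact r)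
              * Real.log (Xres P xact + Xmix P xact)
            + (∑ r ∈ (mixedP P).filter (fun s => s.2 = q.2), xact r)
              * (Real.log (I q)
                - Real.log (∑ r ∈ (mixedP P).filter (fun s => s.2 = q.2), xact r))) :=
          Finset.sum_le_sum hq
      _ ≤ Xmix P xact * Real.log (Xres P xact + Xmix P xact)
          + Xmix P xact * (Real.log σ - Real.log (Xmix P xact)) := by
          rw [Finset.sum_add_distrib, ← Finset.sum_mul, hMQsum]
          have h3 := log_sum_ineq Pinp
            (fun q => ∑ r ∈ (mixedP P).filter (fun s => s.2 = q.2), xact r) I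
            (fun q _ => hMQnn q) (fun q _ => hMQleI q)
          rw [hMQsum] at h3
          have h4 : Xmix P xact * (Real.log (∑ q ∈ Pinp, I q) - Real.log (Xmix P xact))
              ≤ Xmix P xact * (Real.log σ - Real.log (Xmix P xact)) := by
            apply mul_le_mul_of_nonneg_left _ (le_of_lt hM)
            apply sub_le_sub_right
            exact Real.log_le_log hIpos hIσ
          linarith [le_trans h3 h4]
  -- bounds on the pure parts
  have hS1 : ∑ r ∈ Pres, xact r * (Real.log (R r) - Real.log (xact r)) ≤ Xmix P xact := by
    have h1 : ∀ r ∈ Pres, xact r * (Real.log (R r) - Real.log (xact r)) ≤ R r - xact r :=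
      fun r hr => xlogle _ _ (hact_nn r (hPresP hr)) (hxleR r (hPresP hr))
    calc ∑ r ∈ Pres, xact r * (Real.log (R r) - Real.log (xact r))
        ≤ ∑ r ∈ Pres, (R r - xact r) := Finset.sum_le_sum h1
      _ = (∑ r ∈ Pres, R r) - (∑ r ∈ Pres, xact r) := Finset.sum_sub_distrib _ _
      _ = Xmix P xact := by rw [hsumR, ← hXres]; ring
  have hS2 : ∑ r ∈ Pinp, xact r * (Real.log (I r) - Real.log (xact r)) ≤ Xmix P xact := by
    have h1 : ∀ r ∈ Pinp, xact r * (Real.log (I r) - Real.log (xact r)) ≤ I r - xact r :=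
      fun r hr => xlogle _ _ (hact_nn r (hPinpP hr)) (hxleI r (hPinpP hr))
    calc ∑ r ∈ Pinp, xact r * (Real.log (I r) - Real.log (xact r))
        ≤ ∑ r ∈ Pinp, (I r - xact r) := Finset.sum_le_sum h1
      _ = (∑ r ∈ Pinp, I r) - (∑ r ∈ Pinp, xact r) := Finset.sum_sub_distrib _ _
      _ = Xmix P xact := by rw [hsumI, ← hXinp]; ring
  -- the key bound
  have hkey : gFE P G (ic P xact) + gFE P G (rc P xact) - gFE P G xact
      ≤ Xmix P xact * (ψ + 1 + Real.log σ - Real.log (Xmix P xact)) := by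
    rw [hψ, hgic, hgrc, hgact]
    have e1 : (∑ s ∈ Pres, xact s * (Real.log (R s) - 1 + G (s.1, 0)))
        - (∑ r ∈ Pres, xact r * (Real.log (xact r) - 1 + G r))
        = ∑ r ∈ Pres, xact r * (Real.log (R r) - Real.log (xact r)) := by
      rw [← Finset.sum_sub_distrib]
      apply Finset.sum_congr rfl
      intro r hr
      obtain ⟨hrP, hr2, hr1⟩ := hmemRes r hr
      have hre : ((r.1, (0 : ℕ)) : Cx m) = r := Prod.ext_iff.2 ⟨rfl, hr2.symm⟩
      rw [hre]
      ring
    have e2 : (∑ s ∈ Pinp, xact s * (Real.log (I s) - 1 + G (0, s.2)))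
        - (∑ r ∈ Pinp, xact r * (Real.log (xact r) - 1 + G r))
        = ∑ r ∈ Pinp, xact r * (Real.log (I r) - Real.log (xact r)) := by
      rw [← Finset.sum_sub_distrib]
      apply Finset.sum_congr rfl
      intro r hr
      obtain ⟨hrP, hr1, hr2⟩ := hmemInp r hr
      have hre : (((0 : Fin m → ℕ), r.2) : Cx m) = r := Prod.ext_iff.2 ⟨hr1.symm, rfl⟩
      rw [hre]
      ring
    nlinarith [hS1, hS2, hS3, hent, e1, e2]
  have hmain : gFE P G (ic P xact + y) - gFE P G xact
      ≤ Xmix P xact * (ψ + 1 + Real.log σ - Real.log (Xmix P xact)) := by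
    rw [hicy]
    linarith [hyrc, hkey]
  constructor
  · intro _
    have harg : 0 < σ * Real.exp ψ / Xmix P xact := by positivity
    have h := Real.log_le_sub_one_of_pos harg
    rw [Real.log_div (by positivity) (ne_of_gt hM),
      Real.log_mul (ne_of_gt hσ) (Real.exp_ne_zero ψ), Real.log_exp] at h
    have h2 := mul_le_mul_of_nonneg_left h (le_of_lt hM)
    have h3 : Xmix P xact * (σ * Real.exp ψ / Xmix P xact - 1)
        = σ * Real.exp ψ - Xmix P xact := by
      field_simp
    nlinarith [hmain, h2, h3]
  · intro hψ0
    have hlog : Xmix P xact * (Real.log σ - Real.log (Xmix P xact)) ≤ σ - Xmix P xact :=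
      xlogle _ _ (le_of_lt hM) hMσ
    have hprod : 0 ≤ (σ - Xmix P xact) * ψ :=
      mul_nonneg (by linarith [hMσ]) (le_of_lt hψ0)
    nlinarith [hmain, hlog, hprod]
end

section
/- Concentration Stability Bound: Let g be a pseudo-Helmholtz free energy on concentration vectors, let y be a strictly positive vector minimizing g over the feasible set {z ≥ 0 : A z = A y}, and let x ≥ 0 be any vector with A x = A y. Then for every coordinate k, |x_k − y_k| ≤ sqrt( 2 (g(x) − g(y)) · max(x_k, y_k) ). In particular, closeness in free energy implies closeness in every species concentration, with a tolerance scaling as the square root of the species' abundance. -/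
/-!
STATEMENT 12 (Concentration Stability Bound):
Let `g` be the pseudo-Helmholtz free energy `g(x) = Σ_i x_i (log x_i − 1 + G_i)` on
`ℝ^N`, let `A` be a nonnegative mass-conservation matrix, let `y > 0` minimize `g` over
`{z ≥ 0 : A z = A y}`, and let `x ≥ 0` satisfy `A x = A y`. Then for every coordinate
`k`, `|x_k − y_k| ≤ sqrt(2 (g(x) − g(y)) · max(x_k, y_k))`.
-/

/-- Pseudo-Helmholtz free energy on `ℝ^N` (the convention `0 · log 0 = 0` holds since
`Real.log 0 = 0`). -/
noncomputable def pseudoHelmholtz {N : ℕ} (G : Fin N → ℝ) (x : Fin N → ℝ) : ℝ :=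
  ∑ i, x i * (Real.log (x i) - 1 + G i)


/-- `log w ≤ (w-1) - (w-1)^2/2` on `(0,1]`. -/
lemma log_le_quad {w : ℝ} (hw : 0 < w) (hw1 : w ≤ 1) :
    Real.log w ≤ (w - 1) - (w - 1)^2 / 2 := by
  set f : ℝ → ℝ := fun t => (t - 1) - (t - 1)^2 / 2 - Real.log t with hf
  have key : ∀ t : ℝ, 0 < t → HasDerivAt f (1 - (t-1) - 1/t) t := by
    intro t ht
    have h1 : HasDerivAt (fun t : ℝ => (t - 1) - (t - 1)^2 / 2) (1 - (t-1)) t := by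
      have : HasDerivAt (fun t : ℝ => (t - 1) - (t - 1)^2 / 2)
          (1 - (2 * (t-1)^1 * 1) / 2) t := by
        exact ((hasDerivAt_id t).sub_const 1).sub
          ((((hasDerivAt_id t).sub_const 1).pow 2).div_const 2)
      convert this using 1; ring
    exact (h1.sub (Real.hasDerivAt_log ht.ne')).congr_deriv (by ring)
  have hanti : AntitoneOn f (Set.Ioi (0:ℝ)) := by
    apply antitoneOn_of_deriv_nonpos (convex_Ioi 0)
    · intro t ht
      exact ((key t ht).continuousAt).continuousWithinAt
    · intro t ht
      rw [interior_Ioi] at ht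
      exact (key t ht).differentiableAt.differentiableWithinAt
    · intro t ht
      rw [interior_Ioi] at ht
      rw [(key t ht).deriv]
      have ht' : (0:ℝ) < t := ht
      have e : 1 - (t-1) - 1/t = -((t-1)^2/t) := by field_simp; ring
      have : 0 ≤ (t-1)^2 / t := by positivity
      linarith
  have := hanti (Set.mem_Ioi.2 hw) (Set.mem_Ioi.2 one_pos) hw1
  simp only [hf, Real.log_one] at this
  linarith

/-- `(v-1) - (v-1)^2/(2v) ≤ log v` on `(0,1]`. -/
lemma quad_le_log {v : ℝ} (hv : 0 < v) (hv1 : v ≤ 1) :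
    (v - 1) - (v - 1)^2 / (2 * v) ≤ Real.log v := by
  set f : ℝ → ℝ := fun t => Real.log t - ((t - 1) - (t - 1)^2 / (2 * t)) with hf
  have key : ∀ t : ℝ, 0 < t →
      HasDerivAt f (-(t-1)^2 / (2*t^2)) t := by
    intro t ht
    have h2 : HasDerivAt (fun t : ℝ => (t - 1) - (t - 1)^2 / (2 * t))
        (1 - ((2 * (t-1)^1 * 1) * (2*t) - (t-1)^2 * 2) / (2*t)^2) t := by
      refine ((hasDerivAt_id t).sub_const 1).sub ?_
      have hden : HasDerivAt (fun t : ℝ => 2 * t) 2 t := by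
        simpa using (hasDerivAt_id t).const_mul (2:ℝ)
      exact (((hasDerivAt_id t).sub_const 1).pow 2).div hden (by positivity)
    have h := (Real.hasDerivAt_log ht.ne').sub h2
    refine h.congr_deriv ?_
    field_simp
    ring
  have hanti : AntitoneOn f (Set.Ioi (0:ℝ)) := by
    apply antitoneOn_of_deriv_nonpos (convex_Ioi 0)
    · intro t ht
      exact ((key t ht).continuousAt).continuousWithinAt
    · intro t ht
      rw [interior_Ioi] at ht
      exact (key t ht).differentiableAt.differentiableWithinAt
    · intro t ht
      rw [interior_Ioi] at ht
      rw [(key t ht).deriv]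
      have ht' : (0:ℝ) < t := ht
      apply div_nonpos_of_nonpos_of_nonneg
      · nlinarith [sq_nonneg (t-1)]
      · positivity
  have := hanti (Set.mem_Ioi.2 hv) (Set.mem_Ioi.2 one_pos) hv1
  simp only [hf, Real.log_one] at this
  linarith

/-- Pointwise entropy bound. -/
lemma entropy_quad_bound {a b : ℝ} (ha : 0 ≤ a) (hb : 0 < b) :
    (a - b)^2 / (2 * max a b) ≤ a * Real.log a - a * Real.log b - a + b := by
  rcases eq_or_lt_of_le ha with h0 | ha'
  · -- a = 0
    rw [← h0]
    simp only [Real.log_zero, zero_mul, zero_sub, neg_zero, zero_add, zero_sub]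
    rw [max_eq_right hb.le]
    have : (-b)^2/(2*b) = b/2 := by rw [div_eq_iff (by positivity)]; ring
    rw [this]
    linarith
  rcases le_or_gt a b with hab | hab
  · -- 0 < a ≤ b, max = b
    have hmax : max a b = b := max_eq_right hab
    have hv : 0 < a / b := div_pos ha' hb
    have hv1 : a / b ≤ 1 := (div_le_one hb).2 hab
    have h := quad_le_log hv hv1
    rw [Real.log_div ha'.ne' hb.ne'] at h
    have h2 := mul_le_mul_of_nonneg_left h ha'.le
    rw [hmax]
    have hb0 : b ≠ 0 := hb.ne'
    have ha0 : a ≠ 0 := ha'.ne'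
    have e : a * ((a/b - 1) - (a/b - 1)^2 / (2 * (a/b))) - a + b = (a-b)^2 / (2*b) := by
      field_simp
      ring
    nlinarith [h2]
  · -- b < a, max = a
    have hmax : max a b = a := max_eq_left hab.le
    have hw : 0 < b / a := div_pos hb ha'
    have hw1 : b / a ≤ 1 := (div_le_one ha').2 hab.le
    have h := log_le_quad hw hw1
    rw [Real.log_div hb.ne' ha'.ne'] at h
    have h2 := mul_le_mul_of_nonneg_left h ha'.le
    rw [hmax]
    have ha0 : a ≠ 0 := ha'.ne'
    have e2 : a * ((b/a - 1) - (b/a - 1)^2 / 2) = (b - a) - (a-b)^2/(2*a) := by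
      field_simp
      ring
    -- a*(log b - log a) ≤ (b-a) - (a-b)^2/(2a)
    -- so a log a - a log b ≥ (a-b) + (a-b)^2/(2a)
    have h3 : a * Real.log b - a * Real.log a ≤ (b - a) - (a-b)^2/(2*a) := by
      calc a * Real.log b - a * Real.log a = a * (Real.log b - Real.log a) := by ring
        _ ≤ (b - a) - (a-b)^2/(2*a) := by rw [← e2]; exact h2
    linarith

theorem concentration_stability_bound {N M : ℕ}
    (G : Fin N → ℝ) (A : Matrix (Fin M) (Fin N) ℝ)
    (hA : ∀ i j, 0 ≤ A i j)
    (y x : Fin N → ℝ)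
    (hy_pos : ∀ i, 0 < y i)
    (hy_min : ∀ z : Fin N → ℝ, (∀ i, 0 ≤ z i) → A.mulVec z = A.mulVec y →
      pseudoHelmholtz G y ≤ pseudoHelmholtz G z)
    (hx_nn : ∀ i, 0 ≤ x i)
    (hx_feas : A.mulVec x = A.mulVec y) :
    ∀ k, |x k - y k| ≤
      Real.sqrt (2 * (pseudoHelmholtz G x - pseudoHelmholtz G y) * max (x k) (y k)) := by
  intro k
  set c : ℝ := ∑ i, (Real.log (y i) + G i) * (x i - y i) with hc
  set φ : ℝ → ℝ := fun t => pseudoHelmholtz G (fun i => y i + t * (x i - y i)) with hφ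
  -- derivative of φ at 0
  have hderiv : HasDerivAt φ c 0 := by
    rw [hφ, hc]
    unfold pseudoHelmholtz
    apply HasDerivAt.fun_sum
    intro i _
    have hu : HasDerivAt (fun t : ℝ => y i + t * (x i - y i)) (x i - y i) 0 := by
      simpa using ((hasDerivAt_id (0:ℝ)).mul_const (x i - y i)).const_add (y i)
    have hne : y i + 0 * (x i - y i) ≠ 0 := by simpa using (hy_pos i).ne'
    have hlog := hu.log hne
    have hmul := hu.mul ((hlog.sub_const 1).add_const (G i))
    refine hmul.congr_deriv ?_
    have hyne : y i ≠ 0 := (hy_pos i).ne'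
    simp only [zero_mul, add_zero]
    field_simp
    ring
  -- first-order optimality: 0 ≤ c
  have hφ0 : φ 0 = pseudoHelmholtz G y := by
    rw [hφ]
    simp only []
    congr 1
    funext i
    ring
  have hc_nonneg : 0 ≤ c := by
    by_contra hneg
    push_neg at hneg
    have hslope := hasDerivAt_iff_tendsto_slope.mp hderiv
    have h1 : Filter.Tendsto (slope φ 0) (nhdsWithin 0 (Set.Ioi 0)) (nhds c) :=
      hslope.mono_left (nhdsWithin_mono _ (fun t ht => ne_of_gt ht))
    have h2 : ∀ᶠ t in nhdsWithin (0:ℝ) (Set.Ioi 0), slope φ 0 t < 0 :=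
      h1.eventually_lt_const hneg
    have h3 : ∀ᶠ t in nhdsWithin (0:ℝ) (Set.Ioi 0), t ∈ Set.Iio (1:ℝ) :=
      mem_nhdsWithin_of_mem_nhds (Iio_mem_nhds one_pos)
    have h4 : ∀ᶠ t in nhdsWithin (0:ℝ) (Set.Ioi 0), t ∈ Set.Ioi (0:ℝ) :=
      self_mem_nhdsWithin
    obtain ⟨t, hts, ht1, htpos⟩ := (h2.and (h3.and h4)).exists
    have htpos' : (0:ℝ) < t := htpos
    have ht1' : t < 1 := ht1
    -- z is feasible
    set z : Fin N → ℝ := fun i => y i + t * (x i - y i) with hz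
    have hz_nn : ∀ i, 0 ≤ z i := by
      intro i
      have : z i = (1 - t) * y i + t * x i := by rw [hz]; ring
      rw [this]
      have := hy_pos i
      have := hx_nn i
      nlinarith
    have hz_feas : A.mulVec z = A.mulVec y := by
      have hzeq : z = y + t • (x - y) := by
        funext i
        simp only [hz, Pi.add_apply, Pi.smul_apply, Pi.sub_apply, smul_eq_mul]
      rw [hzeq, Matrix.mulVec_add, Matrix.mulVec_smul, Matrix.mulVec_sub, hx_feas,
        sub_self, smul_zero, add_zero]
    have hge : φ 0 ≤ φ t := by
      rw [hφ0]
      exact hy_min z hz_nn hz_feas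
    have hslope_nonneg : 0 ≤ slope φ 0 t := by
      rw [slope_def_field]
      apply div_nonneg (by linarith) (by linarith)
    linarith
  -- KL decomposition
  set KL : ℝ := ∑ i, (x i * Real.log (x i) - x i * Real.log (y i) - x i + y i) with hKL
  have hD : pseudoHelmholtz G x - pseudoHelmholtz G y = KL + c := by
    unfold pseudoHelmholtz
    rw [hKL, hc, ← Finset.sum_add_distrib, ← Finset.sum_sub_distrib]
    apply Finset.sum_congr rfl
    intro i _
    ring
  -- termwise bound
  have hterm : ∀ i, (x i - y i)^2 / (2 * max (x i) (y i)) ≤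
      x i * Real.log (x i) - x i * Real.log (y i) - x i + y i :=
    fun i => entropy_quad_bound (hx_nn i) (hy_pos i)
  have hterm_nn : ∀ i ∈ Finset.univ, (0:ℝ) ≤
      x i * Real.log (x i) - x i * Real.log (y i) - x i + y i := by
    intro i _
    refine le_trans ?_ (hterm i)
    have : 0 < max (x i) (y i) := lt_of_lt_of_le (hy_pos i) (le_max_right _ _)
    positivity
  have hsingle : x k * Real.log (x k) - x k * Real.log (y k) - x k + y k ≤ KL := by
    rw [hKL]
    exact Finset.single_le_sum hterm_nn (Finset.mem_univ k)
  have hmaxpos : 0 < max (x k) (y k) := lt_of_lt_of_le (hy_pos k) (le_max_right _ _)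
  have hk2 : (x k - y k)^2 / (2 * max (x k) (y k)) ≤
      pseudoHelmholtz G x - pseudoHelmholtz G y := by
    rw [hD]
    linarith [hterm k, hsingle]
  have hsq : (x k - y k)^2 ≤
      2 * (pseudoHelmholtz G x - pseudoHelmholtz G y) * max (x k) (y k) := by
    rw [div_le_iff₀ (by positivity)] at hk2
    nlinarith [hk2]
  calc |x k - y k| = Real.sqrt ((x k - y k)^2) := (Real.sqrt_sq_eq_abs _).symm
    _ ≤ _ := Real.sqrt_le_sqrt hsq
end

section
/- Combined concentration bound upon input addition: Assume σ > 0, X_res + X_mix > 0, X_mix > 0, and that the Active state x^act is strictly positive. Then for every complex k with max(x^rst_k, x^act_k) > 0, the squared concentration deviation satisfies (x^rst_k − x^act_k)² / max(x^rst_k, x^act_k) ≤ 2 σ e^ψ if ψ ≤ 0, and (x^rst_k − x^act_k)² / max(x^rst_k, x^act_k) ≤ 2 σ (ψ + 1) if ψ > 0. -/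
open Finset

noncomputable def kl (a b : ℝ) : ℝ := a * Real.log a - a * Real.log b - a + b

lemma neg_log_le (x : ℝ) (hx : 0 < x) : -Real.log x ≤ 1/x - 1 := by
  have h := Real.log_le_sub_one_of_pos (show (0:ℝ) < x⁻¹ by positivity)
  rw [Real.log_inv] at h
  rw [one_div]; linarith

lemma kl_nonneg {a b : ℝ} (ha : 0 ≤ a) (hb : 0 < b) : 0 ≤ kl a b := by
  rcases eq_or_lt_of_le ha with h | h
  · simp [kl, ← h]; positivity
  · have h1 := Real.log_le_sub_one_of_pos (show (0:ℝ) < b/a by positivity)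
    rw [Real.log_div (ne_of_gt hb) (ne_of_gt h)] at h1
    have := mul_le_mul_of_nonneg_left h1 (le_of_lt h)
    unfold kl
    have hane : a ≠ 0 := ne_of_gt h
    have he : a * (b/a) = b := by field_simp

    nlinarith [this, he]

lemma kl_le_mul_log {a b : ℝ} (hb : 0 < b) (hab : b ≤ a) :
    kl a b ≤ (a - b) * (Real.log a - Real.log b) := by
  have ha : 0 < a := lt_of_lt_of_le hb hab
  have h1 := Real.log_le_sub_one_of_pos (show (0:ℝ) < a/b by positivity)
  rw [Real.log_div (ne_of_gt ha) (ne_of_gt hb)] at h1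
  have := mul_le_mul_of_nonneg_left h1 (le_of_lt hb)
  have he : b * (a/b) = a := by field_simp
  unfold kl; nlinarith [this, he]

/-- case b ≤ a -/
lemma pinsker_ge {a b : ℝ} (hb : 0 < b) (hab : b ≤ a) :
    (a - b)^2 ≤ 2 * a * kl a b := by
  set F : ℝ → ℝ := fun t => 2*t*(t*Real.log t - t*Real.log b - t + b) - (t-b)^2 with hF
  have hmono : StrictMonoOn F (Set.Ici b) := by
    apply strictMonoOn_of_deriv_pos (convex_Ici b)
    · fun_prop (disch := intros; apply ne_of_gt; positivity)
    · intro t ht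
      rw [interior_Ici] at ht
      have htb : b < t := ht
      have ht0 : 0 < t := lt_trans hb htb
      have hD : HasDerivAt F (2*(t*Real.log t - t*Real.log b - t + b)
          + 2*t*((Real.log t + 1) - Real.log b - 1) - 2*(t-b)) t := by
        have h1 : HasDerivAt (fun t : ℝ => t * Real.log t) (Real.log t + 1) t :=
          Real.hasDerivAt_mul_log (ne_of_gt ht0)
        have h2 : HasDerivAt (fun t : ℝ => t*Real.log t - t*Real.log b - t + b)
            ((Real.log t + 1) - Real.log b - 1) t := by
          simpa using ((h1.sub ((hasDerivAt_id t).mul_const (Real.log b))).sub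
            (hasDerivAt_id t)).add_const b
        have h3 : HasDerivAt (fun t : ℝ => 2*t) 2 t := by
          simpa using (hasDerivAt_id t).const_mul (2:ℝ)
        have h4 := (h3.fun_mul h2)
        have h5 : HasDerivAt (fun t : ℝ => (t-b)^2) (2*(t-b)) t := by
          simpa using ((hasDerivAt_id t).sub_const b).fun_pow 2
        have := h4.fun_sub h5
        convert this using 1
        try ring
      rw [hD.deriv]
      have hlog : Real.log b - Real.log t < b/t - 1 := by
        have := Real.log_lt_sub_one_of_pos (show (0:ℝ) < b/t by positivity)
          (by intro hcon; rw [div_eq_one_iff_eq (ne_of_gt ht0)] at hcon; exact (ne_of_lt htb) hcon)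
        rwa [Real.log_div (ne_of_gt hb) (ne_of_gt ht0)] at this
      have he : t * (b/t) = b := by field_simp
      nlinarith [mul_lt_mul_of_pos_left hlog ht0, he]
  have hFb : F b = 0 := by simp [hF]; try ring
  rcases eq_or_lt_of_le hab with h | h
  · have hk : kl b b = 0 := by unfold kl; ring
    rw [← h, hk]; simp
  · have := hmono (Set.self_mem_Ici) (Set.mem_Ici.mpr hab) h
    rw [hFb] at this
    simp only [hF] at this
    unfold kl; nlinarith

/-- case a ≤ b -/
lemma pinsker_le {a b : ℝ} (ha : 0 ≤ a) (hb : 0 < b) (hab : a ≤ b) :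
    (a - b)^2 ≤ 2 * b * kl a b := by
  set F : ℝ → ℝ := fun t => 2*b*(t*Real.log t - t*Real.log b - t + b) - (t-b)^2 with hF
  have hanti : StrictAntiOn F (Set.Icc 0 b) := by
    apply strictAntiOn_of_deriv_neg (convex_Icc 0 b)
    · apply ContinuousOn.sub
      · apply ContinuousOn.mul continuousOn_const
        apply ContinuousOn.add
        · apply ContinuousOn.sub
          · apply ContinuousOn.sub
            · exact Real.continuous_mul_log.continuousOn
            · fun_prop
          · fun_prop
        · fun_prop
      · fun_prop
    · intro t ht
      rw [interior_Icc] at ht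
      obtain ⟨ht0, htb⟩ := ht
      have hD : HasDerivAt F (2*b*((Real.log t + 1) - Real.log b - 1) - 2*(t-b)) t := by
        have h1 : HasDerivAt (fun t : ℝ => t * Real.log t) (Real.log t + 1) t :=
          Real.hasDerivAt_mul_log (ne_of_gt ht0)
        have h2 : HasDerivAt (fun t : ℝ => t*Real.log t - t*Real.log b - t + b)
            ((Real.log t + 1) - Real.log b - 1) t := by
          simpa using ((h1.sub ((hasDerivAt_id t).mul_const (Real.log b))).sub
            (hasDerivAt_id t)).add_const b
        have h5 : HasDerivAt (fun t : ℝ => (t-b)^2) (2*(t-b)) t := by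
          simpa using ((hasDerivAt_id t).sub_const b).fun_pow 2
        exact (h2.const_mul (2*b)).sub h5
      rw [hD.deriv]
      have hlog : Real.log t - Real.log b < t/b - 1 := by
        have := Real.log_lt_sub_one_of_pos (show (0:ℝ) < t/b by positivity)
          (by intro hcon; rw [div_eq_one_iff_eq (ne_of_gt hb)] at hcon; exact (ne_of_lt htb) hcon)
        rwa [Real.log_div (ne_of_gt ht0) (ne_of_gt hb)] at this
      have he : b * (t/b) = t := by field_simp
      nlinarith [mul_lt_mul_of_pos_left hlog hb, he]
  have hFb : F b = 0 := by simp [hF]; try ring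
  rcases eq_or_lt_of_le hab with h | h
  · have hk : kl b b = 0 := by unfold kl; ring
    rw [h, hk]; simp
  · have := hanti (Set.mem_Icc.mpr ⟨ha, hab⟩) (Set.mem_Icc.mpr ⟨le_of_lt hb, le_refl b⟩) h
    rw [hFb] at this
    simp only [hF] at this
    unfold kl; nlinarith

lemma pinsker {a b : ℝ} (ha : 0 ≤ a) (hb : 0 < b) :
    (a - b)^2 ≤ 2 * max a b * kl a b := by
  rcases le_total a b with h | h
  · rw [max_eq_right h]; exact pinsker_le ha hb h
  · rw [max_eq_left h]; exact pinsker_ge hb h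

lemma kkt_general {m : ℕ} (P : Finset (Cx m)) (G : Cx m → ℝ) (c : Fin m → ℝ) (σ : ℝ)
    (x : Cx m → ℝ)
    (hpos : ∀ p ∈ P, 0 < x p) (hfeas : Amap P x = (c, σ))
    (hmin : ∀ z : Cx m → ℝ, (∀ p ∈ P, 0 ≤ z p) → Amap P z = (c, σ) →
      gFE P G x ≤ gFE P G z)
    (d : Cx m → ℝ) (hd1 : ∀ i, ∑ p ∈ P, (p.1 i : ℝ) * d p = 0)
    (hd2 : ∑ p ∈ P, (p.2 : ℝ) * d p = 0) :
    ∑ p ∈ P, d p * (Real.log (x p) + G p) = 0 := by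
  rcases P.eq_empty_or_nonempty with rfl | hPne
  · simp
  set ε : ℝ := P.inf' hPne (fun p => x p / (|d p| + 1)) with hε
  have hεpos : 0 < ε := by
    rw [hε, Finset.lt_inf'_iff]
    intro p hp
    have := hpos p hp
    positivity
  set φ : ℝ → ℝ := fun t => gFE P G (fun p => x p + t * d p) with hφ
  have hfeast : ∀ t : ℝ, Amap P (fun p => x p + t * d p) = (c, σ) := by
    intro t
    have h1 := congrArg Prod.fst hfeas
    have h2 := congrArg Prod.snd hfeas
    simp only [Amap] at h1 h2 ⊢
    refine Prod.ext ?_ ?_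
    · funext i
      simp only
      have : ∑ p ∈ P, (p.1 i : ℝ) * (x p + t * d p)
          = (∑ p ∈ P, (p.1 i : ℝ) * x p) + t * ∑ p ∈ P, (p.1 i : ℝ) * d p := by
        rw [Finset.mul_sum, ← Finset.sum_add_distrib]
        apply Finset.sum_congr rfl; intro p hp; ring
      rw [this, hd1 i, mul_zero, add_zero]
      exact congrFun h1 i
    · simp only
      have : ∑ p ∈ P, (p.2 : ℝ) * (x p + t * d p)
          = (∑ p ∈ P, (p.2 : ℝ) * x p) + t * ∑ p ∈ P, (p.2 : ℝ) * d p := by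
        rw [Finset.mul_sum, ← Finset.sum_add_distrib]
        apply Finset.sum_congr rfl; intro p hp; ring
      rw [this, hd2, mul_zero, add_zero]
      exact h2
  have hnn : ∀ t : ℝ, |t| < ε → ∀ p ∈ P, 0 ≤ x p + t * d p := by
    intro t ht p hp
    have h1 : ε ≤ x p / (|d p| + 1) := Finset.inf'_le _ hp
    have h2 : |t * d p| ≤ |t| * (|d p| + 1) := by
      rw [abs_mul]
      have := abs_nonneg t
      nlinarith [abs_nonneg (d p)]
    have h3 : |t| * (|d p| + 1) < ε * (|d p| + 1) := by
      apply mul_lt_mul_of_pos_right ht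
      positivity
    have h4 : ε * (|d p| + 1) ≤ x p := by
      calc ε * (|d p| + 1) ≤ x p / (|d p| + 1) * (|d p| + 1) := by
            apply mul_le_mul_of_nonneg_right (Finset.inf'_le _ hp); positivity
        _ = x p := by field_simp
    have := neg_abs_le (t * d p)
    nlinarith [abs_nonneg (t*d p)]
  have hlocmin : IsLocalMin φ 0 := by
    rw [IsLocalMin, IsMinFilter]
    rw [Metric.eventually_nhds_iff]
    refine ⟨ε, hεpos, ?_⟩
    intro t ht
    rw [Real.dist_eq, sub_zero] at ht
    have hφ0 : φ 0 = gFE P G x := by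
      simp only [hφ]
      congr 1
      funext p; ring
    rw [hφ0]
    exact hmin _ (hnn t ht) (hfeast t)
  have hD : HasDerivAt φ (∑ p ∈ P, d p * (Real.log (x p) + G p)) 0 := by
    have : ∀ p ∈ P, HasDerivAt (fun t : ℝ => (x p + t * d p) * (Real.log (x p + t * d p) - 1 + G p))
        (d p * (Real.log (x p) + G p)) 0 := by
      intro p hp
      have hxp := hpos p hp
      have hu : HasDerivAt (fun t : ℝ => x p + t * d p) (d p) 0 := by
        simpa using ((hasDerivAt_id (0:ℝ)).mul_const (d p)).const_add (x p)
      have hout : HasDerivAt (fun w : ℝ => w * Real.log w + w * (G p - 1))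
          (Real.log (x p) + 1 + (G p - 1)) (x p) := by
        exact (Real.hasDerivAt_mul_log (ne_of_gt hxp)).add (hasDerivAt_mul_const (G p - 1))
      have hu0 : x p + (0:ℝ) * d p = x p := by ring
      have hout' : HasDerivAt (fun w : ℝ => w * Real.log w + w * (G p - 1))
          (Real.log (x p) + 1 + (G p - 1)) (x p + (0:ℝ) * d p) := by rw [hu0]; exact hout
      have hcomp : HasDerivAt
          (fun t : ℝ => (x p + t * d p) * Real.log (x p + t * d p) + (x p + t * d p) * (G p - 1))
          ((Real.log (x p) + 1 + (G p - 1)) * d p) 0 := by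
        simpa [Function.comp_def] using HasDerivAt.comp (0:ℝ) hout' hu
      have heq : (fun t : ℝ => (x p + t * d p) * Real.log (x p + t * d p) + (x p + t * d p) * (G p - 1))
          = (fun t : ℝ => (x p + t * d p) * (Real.log (x p + t * d p) - 1 + G p)) := by
        funext t; ring
      rw [heq] at hcomp
      convert hcomp using 1
      ring
    have := HasDerivAt.fun_sum this
    exact this
  have := hlocmin.hasDerivAt_eq_zero hD
  exact this


lemma logsum {ι : Type*} (T : Finset ι) (hT : T.Nonempty) (x B : ι → ℝ)
    (hx : ∀ i ∈ T, 0 < x i) (hB : ∀ i ∈ T, 0 < B i) :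
    ∑ i ∈ T, x i * (Real.log (B i) - Real.log (x i))
      ≤ (∑ i ∈ T, x i) * (Real.log (∑ i ∈ T, B i) - Real.log (∑ i ∈ T, x i)) := by
  set X := ∑ i ∈ T, x i with hX
  set S := ∑ i ∈ T, B i with hS
  have hXpos : 0 < X := Finset.sum_pos hx hT
  have hSpos : 0 < S := Finset.sum_pos hB hT
  have key : ∀ i ∈ T, x i * (Real.log (B i) - Real.log (x i))
      ≤ B i * X / S - x i + x i * (Real.log S - Real.log X) := by
    intro i hi
    have hxi := hx i hi
    have hBi := hB i hi
    have h := Real.log_le_sub_one_of_pos (show (0:ℝ) < B i * X / (x i * S) by positivity)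
    rw [Real.log_div (by positivity) (by positivity), Real.log_mul (ne_of_gt hBi) (ne_of_gt hXpos),
      Real.log_mul (ne_of_gt hxi) (ne_of_gt hSpos)] at h
    have h2 := mul_le_mul_of_nonneg_left h (le_of_lt hxi)
    have he : x i * (B i * X / (x i * S)) = B i * X / S := by field_simp
    nlinarith [h2, he]
  calc ∑ i ∈ T, x i * (Real.log (B i) - Real.log (x i))
      ≤ ∑ i ∈ T, (B i * X / S - x i + x i * (Real.log S - Real.log X)) :=
        Finset.sum_le_sum key
    _ = (∑ i ∈ T, B i) * X / S - X + X * (Real.log S - Real.log X) := by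
        rw [Finset.sum_add_distrib, Finset.sum_sub_distrib, ← Finset.sum_div, ← Finset.sum_mul,
          ← Finset.sum_mul]
    _ = X * (Real.log S - Real.log X) := by
        rw [← hS]
        field_simp
        ring
set_option maxHeartbeats 2000000 in
theorem combined_concentration_bound {m : ℕ}
    (P : Finset (Cx m)) (G : Cx m → ℝ) (c : Fin m → ℝ) (σ : ℝ) (hσ : 0 < σ)
    (hP0 : ((0 : Fin m → ℕ), (0 : ℕ)) ∉ P)
    (hPclosed : ∀ p ∈ P, p.1 ≠ 0 → 1 ≤ p.2 →
      (p.1, (0 : ℕ)) ∈ P ∧ ((0 : Fin m → ℕ), p.2) ∈ P)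
    (xact y : Cx m → ℝ)
    (hact_pos : ∀ p ∈ P, 0 < xact p)
    (hact_feas : Amap P xact = (c, σ))
    (hact_min : ∀ z : Cx m → ℝ, (∀ p ∈ P, 0 ≤ z p) → Amap P z = (c, σ) →
      gFE P G xact ≤ gFE P G z)
    (hy_nn : ∀ p ∈ P, 0 ≤ y p)
    (hy_feas : Amap P y = (c, 0))
    (hy_min : ∀ z : Cx m → ℝ, (∀ p ∈ P, 0 ≤ z p) → Amap P z = (c, 0) →
      gFE P G y ≤ gFE P G z)
    (hne : (mixedP P).Nonempty)
    (hRM : 0 < Xres P xact + Xmix P xact)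
    (hM : 0 < Xmix P xact)
    (ψ : ℝ) (hψ : ψ = dGmax P G hne + Real.log (Xres P xact + Xmix P xact)) :
    ∀ k ∈ P, 0 < max ((ic P xact + y) k) (xact k) →
      (ψ ≤ 0 →
        ((ic P xact + y) k - xact k) ^ 2 / max ((ic P xact + y) k) (xact k)
          ≤ 2 * σ * Real.exp ψ) ∧
      (0 < ψ →
        ((ic P xact + y) k - xact k) ^ 2 / max ((ic P xact + y) k) (xact k)
          ≤ 2 * σ * (ψ + 1)) := by
  classical
  set Γ : ℝ := dGmax P G hne with hΓdef
  set z : Cx m → ℝ := ic P xact + y with hzdef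
  set sv : ℕ → ℝ := fun v => ∑ r ∈ P.filter (fun r : Cx m => r.2 = v), xact r with hsvdef
  set qu : (Fin m → ℕ) → ℝ := fun u => ∑ r ∈ P.filter (fun r : Cx m => r.1 = u), xact r with hqudef
  set MX : Finset (Cx m) := P.filter (fun q : Cx m => q.1 ≠ 0 ∧ 1 ≤ q.2) with hMXdef
  set PI : Finset (Cx m) := P.filter (fun q : Cx m => q.1 = 0 ∧ 1 ≤ q.2) with hPIdef
  set PR : Finset (Cx m) := P.filter (fun q : Cx m => q.2 = 0 ∧ q.1 ≠ 0) with hPRdef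
  have hMXne : MX.Nonempty := hne
  have hMXsub : MX ⊆ P := Finset.filter_subset _ _
  set M : ℝ := Xmix P xact with hMdef
  set XR : ℝ := Xres P xact with hXRdef
  set S : ℝ := ∑ p ∈ P.filter (fun q : Cx m => 1 ≤ q.2), xact p with hSdef
  set D : ℝ := ∑ p ∈ P, kl (z p) (xact p) with hDdef
  have hMsum : M = ∑ p ∈ MX, xact p := rfl
  have hXRsum : XR = ∑ p ∈ PR, xact p := rfl
  -- basic structural facts
  have hP2 : ∀ p ∈ P, p.2 = 0 → p.1 ≠ 0 := by
    intro p hp h2 h1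
    exact hP0 (by rwa [show p = ((0 : Fin m → ℕ), (0 : ℕ)) from Prod.ext h1 h2] at hp)
  have hy0 : ∀ p ∈ P, 1 ≤ p.2 → y p = 0 := by
    have h2 := congrArg Prod.snd hy_feas
    simp only [Amap] at h2
    intro p hp hp2
    have hnn : ∀ q ∈ P, 0 ≤ (q.2 : ℝ) * y q := by
      intro q hq; exact mul_nonneg (by positivity) (hy_nn q hq)
    have hall := (Finset.sum_eq_zero_iff_of_nonneg hnn).mp h2 p hp
    rcases mul_eq_zero.mp hall with h | h
    · exact absurd h (by positivity)
    · exact h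
  have hxle_sv : ∀ p ∈ P, xact p ≤ sv p.2 := by
    intro p hp
    apply Finset.single_le_sum (fun q hq => le_of_lt (hact_pos q (Finset.mem_filter.mp hq).1))
    exact Finset.mem_filter.mpr ⟨hp, rfl⟩
  have hsvpos : ∀ p ∈ P, 0 < sv p.2 := fun p hp => lt_of_lt_of_le (hact_pos p hp) (hxle_sv p hp)
  have hxle_qu : ∀ p ∈ P, xact p ≤ qu p.1 := by
    intro p hp
    apply Finset.single_le_sum (fun q hq => le_of_lt (hact_pos q (Finset.mem_filter.mp hq).1))
    exact Finset.mem_filter.mpr ⟨hp, rfl⟩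
  have hqupos : ∀ p ∈ P, 0 < qu p.1 := fun p hp => lt_of_lt_of_le (hact_pos p hp) (hxle_qu p hp)
  -- z values
  have hzPI : ∀ p ∈ PI, z p = sv p.2 := by
    intro p hp
    rw [hPIdef, Finset.mem_filter] at hp
    obtain ⟨hpP, hp1, hp2⟩ := hp
    simp only [hzdef, Pi.add_apply, ic, hy0 p hpP hp2, if_pos (And.intro hp1 hp2), add_zero]
    rfl
  have hzPR : ∀ p ∈ PR, z p = y p := by
    intro p hp
    rw [hPRdef, Finset.mem_filter] at hp
    obtain ⟨hpP, hp2, hp1⟩ := hp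
    have : ¬ (p.1 = 0 ∧ 1 ≤ p.2) := by rw [hp2]; simp
    simp only [hzdef, Pi.add_apply, ic, if_neg this, zero_add]
  have hzMX : ∀ p ∈ MX, z p = 0 := by
    intro p hp
    rw [hMXdef, Finset.mem_filter] at hp
    obtain ⟨hpP, hp1, hp2⟩ := hp
    have : ¬ (p.1 = 0 ∧ 1 ≤ p.2) := by intro h; exact hp1 h.1
    simp only [hzdef, Pi.add_apply, ic, if_neg this, hy0 p hpP hp2, zero_add]
  have hznn : ∀ p ∈ P, 0 ≤ z p := by
    intro p hp
    simp only [hzdef, Pi.add_apply, ic]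
    apply add_nonneg _ (hy_nn p hp)
    split
    · exact Finset.sum_nonneg fun q hq => le_of_lt (hact_pos q (Finset.mem_filter.mp hq).1)
    · exact le_refl 0
  -- partition of P
  have hE1 : P.filter (fun p : Cx m => ¬ 1 ≤ p.2) = PR := by
    rw [hPRdef]
    apply Finset.filter_congr
    intro p hp
    simp only [not_le, Nat.lt_one_iff]
    exact ⟨fun h => ⟨h, hP2 p hp h⟩, fun h => h.1⟩
  have hE2 : (P.filter (fun p : Cx m => 1 ≤ p.2)).filter (fun p => p.1 = 0) = PI := by
    rw [Finset.filter_filter, hPIdef]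
    apply Finset.filter_congr
    intro p _
    exact ⟨fun h => ⟨h.2, h.1⟩, fun h => ⟨h.2, h.1⟩⟩
  have hE3 : (P.filter (fun p : Cx m => 1 ≤ p.2)).filter (fun p => ¬ p.1 = 0) = MX := by
    rw [Finset.filter_filter, hMXdef]
    apply Finset.filter_congr
    intro p _
    exact ⟨fun h => ⟨h.2, h.1⟩, fun h => ⟨h.2, h.1⟩⟩
  have hpart : ∀ f : Cx m → ℝ,
      ∑ p ∈ P, f p = ∑ p ∈ PI, f p + ∑ p ∈ PR, f p + ∑ p ∈ MX, f p := by
    intro f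
    rw [← Finset.sum_filter_add_sum_filter_not P (fun p : Cx m => 1 ≤ p.2) f,
      ← Finset.sum_filter_add_sum_filter_not (P.filter (fun p : Cx m => 1 ≤ p.2))
        (fun p : Cx m => p.1 = 0) f, hE1, hE2, hE3]
    ring
  -- fiberwise identities
  have hmapI : ∀ r ∈ P.filter (fun q : Cx m => 1 ≤ q.2),
      ((0 : Fin m → ℕ), r.2) ∈ PI := by
    intro r hr
    rw [Finset.mem_filter] at hr
    obtain ⟨hrP, hr2⟩ := hr
    rw [hPIdef, Finset.mem_filter]
    refine ⟨?_, rfl, hr2⟩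
    by_cases h1 : r.1 = 0
    · rwa [show ((0 : Fin m → ℕ), r.2) = r from (Prod.ext h1.symm rfl)]
    · exact (hPclosed r hrP h1 hr2).2
  have hfibI : ∀ p ∈ PI, (P.filter (fun q : Cx m => 1 ≤ q.2)).filter
      (fun r => ((0 : Fin m → ℕ), r.2) = p) = P.filter (fun r : Cx m => r.2 = p.2) := by
    intro p hp
    rw [hPIdef, Finset.mem_filter] at hp
    obtain ⟨hpP, hp1, hp2⟩ := hp
    ext r
    simp only [Finset.mem_filter, Finset.filter_filter]
    constructor
    · rintro ⟨hrP, _, hre⟩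
      exact ⟨hrP, by rw [← hre]⟩
    · rintro ⟨hrP, hr2⟩
      exact ⟨hrP, hr2 ▸ hp2, Prod.ext hp1.symm hr2⟩
  have hfibS : ∑ p ∈ PI, sv p.2 = S := by
    rw [hSdef, ← Finset.sum_fiberwise_of_maps_to hmapI xact]
    apply Finset.sum_congr rfl
    intro p hp
    rw [hfibI p hp, hsvdef]
  have hmapR : ∀ r ∈ P.filter (fun q : Cx m => q.1 ≠ 0), (r.1, (0 : ℕ)) ∈ PR := by
    intro r hr
    rw [Finset.mem_filter] at hr
    obtain ⟨hrP, hr1⟩ := hr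
    rw [hPRdef, Finset.mem_filter]
    refine ⟨?_, rfl, hr1⟩
    by_cases h2 : r.2 = 0
    · rwa [show (r.1, (0 : ℕ)) = r from (Prod.ext rfl h2.symm)]
    · exact (hPclosed r hrP hr1 (Nat.one_le_iff_ne_zero.mpr h2)).1
  have hfibR' : ∀ p ∈ PR, (P.filter (fun q : Cx m => q.1 ≠ 0)).filter
      (fun r => (r.1, (0 : ℕ)) = p) = P.filter (fun r : Cx m => r.1 = p.1) := by
    intro p hp
    rw [hPRdef, Finset.mem_filter] at hp
    obtain ⟨hpP, hp2, hp1⟩ := hp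
    ext r
    simp only [Finset.mem_filter, Finset.filter_filter]
    constructor
    · rintro ⟨hrP, _, hre⟩
      exact ⟨hrP, by rw [← hre]⟩
    · rintro ⟨hrP, hr1⟩
      exact ⟨hrP, hr1 ▸ hp1, Prod.ext hr1 hp2.symm⟩
  have hsplitR : ∑ p ∈ P.filter (fun q : Cx m => q.1 ≠ 0), xact p = XR + M := by
    rw [← Finset.sum_filter_add_sum_filter_not (P.filter (fun q : Cx m => q.1 ≠ 0))
      (fun p : Cx m => p.2 = 0) xact, Finset.filter_filter, Finset.filter_filter]
    have e1 : P.filter (fun a : Cx m => a.1 ≠ 0 ∧ a.2 = 0) = PR := by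
      rw [hPRdef]; apply Finset.filter_congr; intro p _
      exact ⟨fun h => ⟨h.2, h.1⟩, fun h => ⟨h.2, h.1⟩⟩
    have e2 : P.filter (fun a : Cx m => a.1 ≠ 0 ∧ ¬ a.2 = 0) = MX := by
      rw [hMXdef]; apply Finset.filter_congr; intro p _
      simp only [Nat.one_le_iff_ne_zero]
    rw [e1, e2, hXRsum, hMsum]
  have hfibR : ∑ p ∈ PR, qu p.1 = XR + M := by
    rw [← hsplitR, ← Finset.sum_fiberwise_of_maps_to hmapR xact]
    apply Finset.sum_congr rfl
    intro p hp
    rw [hfibR' p hp, hqudef]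
  -- rows of feasibility
  have hcact : ∀ i, ∑ p ∈ P, (p.1 i : ℝ) * xact p = c i := by
    intro i
    have := congrArg Prod.fst hact_feas
    simp only [Amap] at this
    exact congrFun this i
  have hcy : ∀ i, ∑ p ∈ P, (p.1 i : ℝ) * y p = c i := by
    intro i
    have := congrArg Prod.fst hy_feas
    simp only [Amap] at this
    exact congrFun this i
  have hy2 : ∑ p ∈ P, (p.2 : ℝ) * y p = 0 := by
    have := congrArg Prod.snd hy_feas
    simp only [Amap] at this
    exact this
  have hσact : ∑ p ∈ P, (p.2 : ℝ) * xact p = σ := by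
    have := congrArg Prod.snd hact_feas
    simp only [Amap] at this
    exact this
  -- rc facts
  have hrc_eq : ∀ p : Cx m, rc P xact p = if p.2 = 0 ∧ p.1 ≠ 0 then qu p.1 else 0 := by
    intro p
    simp only [rc, hqudef]
  have hrc_nn : ∀ p ∈ P, 0 ≤ rc P xact p := by
    intro p hp
    rw [hrc_eq]
    split
    · exact le_of_lt (hqupos p hp)
    · exact le_refl 0
  have hwfib : ∀ i : Fin m, ∑ p ∈ PR, (p.1 i : ℝ) * qu p.1
      = ∑ r ∈ P.filter (fun q : Cx m => q.1 ≠ 0), (r.1 i : ℝ) * xact r := by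
    intro i
    rw [← Finset.sum_fiberwise_of_maps_to hmapR (fun r => (r.1 i : ℝ) * xact r)]
    apply Finset.sum_congr rfl
    intro p hp
    rw [hfibR' p hp, hqudef]
    simp only
    rw [Finset.mul_sum]
    apply Finset.sum_congr rfl
    intro r hr
    rw [(Finset.mem_filter.mp hr).2]
  have hrowfull : ∀ i : Fin m, ∑ r ∈ P.filter (fun q : Cx m => q.1 ≠ 0), (r.1 i : ℝ) * xact r
      = ∑ r ∈ P, (r.1 i : ℝ) * xact r := by
    intro i
    apply Finset.sum_filter_of_ne
    intro r _ hfne h0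
    apply hfne
    rw [h0]
    simp
  have hrc_feas : Amap P (rc P xact) = (c, 0) := by
    simp only [Amap]
    refine Prod.ext ?_ ?_
    · funext i
      simp only
      have he : ∀ p ∈ P, (p.1 i : ℝ) * rc P xact p
          = if p.2 = 0 ∧ p.1 ≠ 0 then (p.1 i : ℝ) * qu p.1 else 0 := by
        intro p _
        rw [hrc_eq]
        split <;> simp
      rw [Finset.sum_congr rfl he, ← Finset.sum_filter, ← hPRdef, hwfib, hrowfull, hcact]
    · simp only
      apply Finset.sum_eq_zero
      intro p hp
      rw [hrc_eq]
      rcases Nat.eq_zero_or_pos p.2 with h | h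
      · rw [h]
        simp
      · rw [if_neg (by intro hc; omega), mul_zero]
  -- y vs rc comparison on PR
  have hyrc : ∑ p ∈ PR, kl (y p) (xact p) ≤ ∑ p ∈ PR, kl (qu p.1) (xact p) := by
    have hgy : gFE P G y ≤ gFE P G (rc P xact) := hy_min _ hrc_nn hrc_feas
    have hgy_eq : gFE P G y = ∑ p ∈ PR, y p * (Real.log (y p) - 1 + G p) := by
      rw [gFE]
      symm
      apply Finset.sum_subset (by rw [hPRdef]; exact Finset.filter_subset _ _)
      intro p hp hnp
      have : y p = 0 := by
        apply hy0 p hp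
        rw [hPRdef, Finset.mem_filter] at hnp
        rcases Nat.eq_zero_or_pos p.2 with h | h
        · exact absurd ⟨hp, h, hP2 p hp h⟩ hnp
        · exact h
      rw [this, zero_mul]
    have hgrc_eq : gFE P G (rc P xact) = ∑ p ∈ PR, qu p.1 * (Real.log (qu p.1) - 1 + G p) := by
      rw [gFE]
      have h1 : ∑ p ∈ P, rc P xact p * (Real.log (rc P xact p) - 1 + G p)
          = ∑ p ∈ PR, rc P xact p * (Real.log (rc P xact p) - 1 + G p) := by
        symm
        apply Finset.sum_subset (by rw [hPRdef]; exact Finset.filter_subset _ _)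
        intro p hp hnp
        have h0 : rc P xact p = 0 := by
          rw [hrc_eq, if_neg]
          intro hc
          exact hnp (by rw [hPRdef, Finset.mem_filter]; exact ⟨hp, hc⟩)
        rw [h0, zero_mul]
      rw [h1]
      apply Finset.sum_congr rfl
      intro p hp
      have h2 : rc P xact p = qu p.1 := by
        rw [hrc_eq, if_pos]
        rw [hPRdef, Finset.mem_filter] at hp
        exact hp.2
      rw [h2]
    have hkkt2 : ∑ p ∈ PR, (qu p.1 - y p) * (Real.log (xact p) + G p) = 0 := by
      have hrow1 : ∀ i, ∑ p ∈ P, (p.1 i : ℝ) * (rc P xact p - y p) = 0 := by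
        intro i
        have he : ∀ p ∈ P, (p.1 i : ℝ) * (rc P xact p - y p)
            = (p.1 i : ℝ) * rc P xact p - (p.1 i : ℝ) * y p := fun p _ => by ring
        rw [Finset.sum_congr rfl he, Finset.sum_sub_distrib]
        have h1 : ∑ p ∈ P, (p.1 i : ℝ) * rc P xact p = c i := by
          have := congrArg Prod.fst hrc_feas
          simp only [Amap] at this
          exact congrFun this i
        rw [h1, hcy i, sub_self]
      have hrow2 : ∑ p ∈ P, (p.2 : ℝ) * (rc P xact p - y p) = 0 := by
        have he : ∀ p ∈ P, (p.2 : ℝ) * (rc P xact p - y p)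
            = (p.2 : ℝ) * rc P xact p - (p.2 : ℝ) * y p := fun p _ => by ring
        rw [Finset.sum_congr rfl he, Finset.sum_sub_distrib]
        have h1 : ∑ p ∈ P, (p.2 : ℝ) * rc P xact p = 0 := by
          have := congrArg Prod.snd hrc_feas
          simp only [Amap] at this
          exact this
        rw [h1, hy2, sub_self]
      have hk := kkt_general P G c σ xact hact_pos hact_feas hact_min _ hrow1 hrow2
      have hres : ∑ p ∈ P, (rc P xact p - y p) * (Real.log (xact p) + G p)
          = ∑ p ∈ PR, (qu p.1 - y p) * (Real.log (xact p) + G p) := by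
        have hstep : ∑ p ∈ P, (rc P xact p - y p) * (Real.log (xact p) + G p)
            = ∑ p ∈ PR, (rc P xact p - y p) * (Real.log (xact p) + G p) := by
          symm
          apply Finset.sum_subset (by rw [hPRdef]; exact Finset.filter_subset _ _)
          intro p hp hnp
          have hyp : y p = 0 := by
            apply hy0 p hp
            rcases Nat.eq_zero_or_pos p.2 with h | h
            · exact absurd (by rw [hPRdef, Finset.mem_filter]; exact ⟨hp, h, hP2 p hp h⟩) hnp
            · exact h
          have hrp : rc P xact p = 0 := by
            rw [hrc_eq, if_neg]
            intro hc
            exact hnp (by rw [hPRdef, Finset.mem_filter]; exact ⟨hp, hc⟩)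
          rw [hyp, hrp, sub_zero, zero_mul]
        rw [hstep]
        apply Finset.sum_congr rfl
        intro p hp
        have h2 : rc P xact p = qu p.1 := by
          rw [hrc_eq, if_pos]
          rw [hPRdef, Finset.mem_filter] at hp
          exact hp.2
        rw [h2]
      rw [← hres]
      exact hk
    have hident : ∀ p ∈ PR, kl (qu p.1) (xact p) - kl (y p) (xact p)
        = (qu p.1 * (Real.log (qu p.1) - 1 + G p) - y p * (Real.log (y p) - 1 + G p))
          - (qu p.1 - y p) * (Real.log (xact p) + G p) := by
      intro p _
      unfold kl
      ring
    have hs : ∑ p ∈ PR, (kl (qu p.1) (xact p) - kl (y p) (xact p))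
        = (gFE P G (rc P xact) - gFE P G y)
          - ∑ p ∈ PR, (qu p.1 - y p) * (Real.log (xact p) + G p) := by
      rw [hgrc_eq, hgy_eq, ← Finset.sum_sub_distrib, ← Finset.sum_sub_distrib]
      exact Finset.sum_congr rfl hident
    rw [hkkt2, sub_zero] at hs
    have h2 : 0 ≤ ∑ p ∈ PR, (kl (qu p.1) (xact p) - kl (y p) (xact p)) := by
      rw [hs]
      linarith
    rw [Finset.sum_sub_distrib] at h2
    linarith
  -- KKT binding relation for mixed complexes
  have hbind : ∀ r ∈ MX, Real.log (xact r) + G r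
      = (Real.log (xact (r.1, 0)) + G (r.1, 0)) + (Real.log (xact (0, r.2)) + G (0, r.2)) := by
    intro r hr
    rw [hMXdef, Finset.mem_filter] at hr
    obtain ⟨hrP, hr1, hr2⟩ := hr
    obtain ⟨hu0, h0v⟩ := hPclosed r hrP hr1 hr2
    set d : Cx m → ℝ := fun p => (if p = r then (1 : ℝ) else 0)
      - (if p = (r.1, (0 : ℕ)) then (1 : ℝ) else 0)
      - (if p = ((0 : Fin m → ℕ), r.2) then (1 : ℝ) else 0) with hddef
    have hrow1 : ∀ i, ∑ p ∈ P, (p.1 i : ℝ) * d p = 0 := by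
      intro i
      simp only [hddef, mul_sub, mul_ite, mul_one, mul_zero]
      rw [Finset.sum_sub_distrib, Finset.sum_sub_distrib,
        Finset.sum_ite_eq' P r, Finset.sum_ite_eq' P (r.1, (0 : ℕ)),
        Finset.sum_ite_eq' P ((0 : Fin m → ℕ), r.2), if_pos hrP, if_pos hu0, if_pos h0v]
      simp
    have hrow2 : ∑ p ∈ P, (p.2 : ℝ) * d p = 0 := by
      simp only [hddef, mul_sub, mul_ite, mul_one, mul_zero]
      rw [Finset.sum_sub_distrib, Finset.sum_sub_distrib,
        Finset.sum_ite_eq' P r, Finset.sum_ite_eq' P (r.1, (0 : ℕ)),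
        Finset.sum_ite_eq' P ((0 : Fin m → ℕ), r.2), if_pos hrP, if_pos hu0, if_pos h0v]
      simp
    have hk := kkt_general P G c σ xact hact_pos hact_feas hact_min d hrow1 hrow2
    simp only [hddef, sub_mul, ite_mul, one_mul, zero_mul] at hk
    rw [Finset.sum_sub_distrib, Finset.sum_sub_distrib,
      Finset.sum_ite_eq' P r, Finset.sum_ite_eq' P (r.1, (0 : ℕ)),
      Finset.sum_ite_eq' P ((0 : Fin m → ℕ), r.2), if_pos hrP, if_pos hu0, if_pos h0v] at hk
    linarith
  -- input-side bound
  have hmapMX : ∀ r ∈ MX, ((0 : Fin m → ℕ), r.2) ∈ PI := by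
    intro r hr
    rw [hMXdef, Finset.mem_filter] at hr
    obtain ⟨hrP, hr1, hr2⟩ := hr
    rw [hPIdef, Finset.mem_filter]
    exact ⟨(hPclosed r hrP hr1 hr2).2, rfl, hr2⟩
  have hmapMX' : ∀ r ∈ MX, (r.1, (0 : ℕ)) ∈ PR := by
    intro r hr
    rw [hMXdef, Finset.mem_filter] at hr
    obtain ⟨hrP, hr1, hr2⟩ := hr
    rw [hPRdef, Finset.mem_filter]
    exact ⟨(hPclosed r hrP hr1 hr2).1, rfl, hr1⟩
  have hfibMX : ∀ p ∈ PI, MX.filter (fun r => ((0 : Fin m → ℕ), r.2) = p)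
      = P.filter (fun r : Cx m => r.2 = p.2 ∧ ¬ r.1 = 0) := by
    intro p hp
    rw [hPIdef, Finset.mem_filter] at hp
    obtain ⟨hpP, hp1, hp2⟩ := hp
    ext r
    rw [hMXdef, Finset.filter_filter]
    simp only [Finset.mem_filter]
    constructor
    · rintro ⟨hrP, ⟨hr1, _⟩, hre⟩
      exact ⟨hrP, by rw [← hre], hr1⟩
    · rintro ⟨hrP, hr2, hr1⟩
      exact ⟨hrP, ⟨hr1, hr2 ▸ hp2⟩, Prod.ext hp1.symm hr2⟩
  have hfibMX' : ∀ p ∈ PR, MX.filter (fun r => (r.1, (0 : ℕ)) = p)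
      = P.filter (fun r : Cx m => r.1 = p.1 ∧ ¬ r.2 = 0) := by
    intro p hp
    rw [hPRdef, Finset.mem_filter] at hp
    obtain ⟨hpP, hp2, hp1⟩ := hp
    ext r
    rw [hMXdef, Finset.filter_filter]
    simp only [Finset.mem_filter]
    constructor
    · rintro ⟨hrP, ⟨_, hr2⟩, hre⟩
      refine ⟨hrP, by rw [← hre], by omega⟩
    · rintro ⟨hrP, hr1, hr2⟩
      exact ⟨hrP, ⟨hr1 ▸ hp1, by omega⟩, Prod.ext hr1 hp2.symm⟩
  have hsv_split : ∀ p ∈ PI, sv p.2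
      = xact p + ∑ r ∈ P.filter (fun r : Cx m => r.2 = p.2 ∧ ¬ r.1 = 0), xact r := by
    intro p hp
    rw [hPIdef, Finset.mem_filter] at hp
    obtain ⟨hpP, hp1, hp2⟩ := hp
    rw [hsvdef]
    simp only
    rw [← Finset.sum_filter_add_sum_filter_not (P.filter (fun r : Cx m => r.2 = p.2))
      (fun r => r.1 = 0) xact]
    congr 1
    · have hsing : (P.filter (fun r : Cx m => r.2 = p.2)).filter (fun r => r.1 = 0) = {p} := by
        ext r
        rw [Finset.filter_filter]
        simp only [Finset.mem_filter, Finset.mem_singleton]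
        constructor
        · rintro ⟨hrP, hr2, hr1⟩
          exact Prod.ext (hr1.trans hp1.symm) hr2
        · rintro rfl
          exact ⟨hpP, rfl, hp1⟩
      rw [hsing, Finset.sum_singleton]
    · rw [Finset.filter_filter]
  have hqu_split : ∀ p ∈ PR, qu p.1
      = xact p + ∑ r ∈ P.filter (fun r : Cx m => r.1 = p.1 ∧ ¬ r.2 = 0), xact r := by
    intro p hp
    rw [hPRdef, Finset.mem_filter] at hp
    obtain ⟨hpP, hp2, hp1⟩ := hp
    rw [hqudef]
    simp only
    rw [← Finset.sum_filter_add_sum_filter_not (P.filter (fun r : Cx m => r.1 = p.1))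
      (fun r => r.2 = 0) xact]
    congr 1
    · have hsing : (P.filter (fun r : Cx m => r.1 = p.1)).filter (fun r => r.2 = 0) = {p} := by
        ext r
        rw [Finset.filter_filter]
        simp only [Finset.mem_filter, Finset.mem_singleton]
        constructor
        · rintro ⟨hrP, hr1, hr2⟩
          exact Prod.ext hr1 (hr2.trans hp2.symm)
        · rintro rfl
          exact ⟨hpP, rfl, hp2⟩
      rw [hsing, Finset.sum_singleton]
    · rw [Finset.filter_filter]
  have hTsum : ∑ p ∈ PI, kl (sv p.2) (xact p)
      ≤ ∑ r ∈ MX, xact r * (Real.log (sv r.2) - Real.log (xact ((0 : Fin m → ℕ), r.2))) := by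
    have step1 : ∀ p ∈ PI, kl (sv p.2) (xact p)
        ≤ (sv p.2 - xact p) * (Real.log (sv p.2) - Real.log (xact p)) := by
      intro p hp
      have hpP : p ∈ P := (Finset.mem_filter.mp (hPIdef ▸ hp)).1
      exact kl_le_mul_log (hact_pos p hpP) (hxle_sv p hpP)
    calc ∑ p ∈ PI, kl (sv p.2) (xact p)
        ≤ ∑ p ∈ PI, (sv p.2 - xact p) * (Real.log (sv p.2) - Real.log (xact p)) :=
          Finset.sum_le_sum step1
      _ = ∑ p ∈ PI, ∑ r ∈ MX.filter (fun r => ((0 : Fin m → ℕ), r.2) = p),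
            xact r * (Real.log (sv r.2) - Real.log (xact ((0 : Fin m → ℕ), r.2))) := by
          apply Finset.sum_congr rfl
          intro p hp
          have hp' := hp
          rw [hPIdef, Finset.mem_filter] at hp'
          obtain ⟨hpP, hp1, hp2⟩ := hp'
          rw [hfibMX p hp]
          have hsub : sv p.2 - xact p
              = ∑ r ∈ P.filter (fun r : Cx m => r.2 = p.2 ∧ ¬ r.1 = 0), xact r := by
            rw [hsv_split p hp]
            ring
          rw [hsub, Finset.sum_mul]
          apply Finset.sum_congr rfl
          intro r hr
          rw [Finset.mem_filter] at hr
          obtain ⟨hrP, hr2, hr1⟩ := hr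
          have hpe : p = ((0 : Fin m → ℕ), r.2) := Prod.ext hp1 hr2.symm
          rw [← hr2, ← hpe]
      _ = ∑ r ∈ MX, xact r * (Real.log (sv r.2) - Real.log (xact ((0 : Fin m → ℕ), r.2))) :=
          Finset.sum_fiberwise_of_maps_to hmapMX _
  have hRsum : ∑ p ∈ PR, kl (qu p.1) (xact p)
      ≤ ∑ r ∈ MX, xact r * (Real.log (qu r.1) - Real.log (xact (r.1, (0 : ℕ)))) := by
    have step1 : ∀ p ∈ PR, kl (qu p.1) (xact p)
        ≤ (qu p.1 - xact p) * (Real.log (qu p.1) - Real.log (xact p)) := by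
      intro p hp
      have hpP : p ∈ P := (Finset.mem_filter.mp (hPRdef ▸ hp)).1
      exact kl_le_mul_log (hact_pos p hpP) (hxle_qu p hpP)
    calc ∑ p ∈ PR, kl (qu p.1) (xact p)
        ≤ ∑ p ∈ PR, (qu p.1 - xact p) * (Real.log (qu p.1) - Real.log (xact p)) :=
          Finset.sum_le_sum step1
      _ = ∑ p ∈ PR, ∑ r ∈ MX.filter (fun r => (r.1, (0 : ℕ)) = p),
            xact r * (Real.log (qu r.1) - Real.log (xact (r.1, (0 : ℕ)))) := by
          apply Finset.sum_congr rfl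
          intro p hp
          have hp' := hp
          rw [hPRdef, Finset.mem_filter] at hp'
          obtain ⟨hpP, hp2, hp1⟩ := hp'
          rw [hfibMX' p hp]
          have hsub : qu p.1 - xact p
              = ∑ r ∈ P.filter (fun r : Cx m => r.1 = p.1 ∧ ¬ r.2 = 0), xact r := by
            rw [hqu_split p hp]
            ring
          rw [hsub, Finset.sum_mul]
          apply Finset.sum_congr rfl
          intro r hr
          rw [Finset.mem_filter] at hr
          obtain ⟨hrP, hr1, hr2⟩ := hr
          have hpe : p = (r.1, (0 : ℕ)) := Prod.ext hr1.symm hp2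
          rw [← hr1, ← hpe]
      _ = ∑ r ∈ MX, xact r * (Real.log (qu r.1) - Real.log (xact (r.1, (0 : ℕ)))) :=
          Finset.sum_fiberwise_of_maps_to hmapMX' _
  -- split D
  have hDsplit : D = ∑ p ∈ PI, kl (sv p.2) (xact p) + ∑ p ∈ PR, kl (y p) (xact p)
      + ∑ p ∈ MX, xact p := by
    rw [hDdef, hpart (fun p => kl (z p) (xact p))]
    congr 1
    · congr 1
      · exact Finset.sum_congr rfl fun p hp => by rw [hzPI p hp]
      · exact Finset.sum_congr rfl fun p hp => by rw [hzPR p hp]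
    · apply Finset.sum_congr rfl
      intro p hp
      rw [hzMX p hp]
      unfold kl
      simp
  -- per-mixed-complex binding bound
  have hsvqu_pos : ∀ r ∈ MX, 0 < sv r.2 ∧ 0 < qu r.1 := by
    intro r hr
    exact ⟨hsvpos r (hMXsub hr), hqupos r (hMXsub hr)⟩
  have hperr : ∀ r ∈ MX,
      xact r * (Real.log (sv r.2) - Real.log (xact ((0 : Fin m → ℕ), r.2)))
      + xact r * (Real.log (qu r.1) - Real.log (xact (r.1, (0 : ℕ))))
      ≤ xact r * Γ + xact r * (Real.log (sv r.2 * qu r.1) - Real.log (xact r)) := by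
    intro r hr
    have hb := hbind r hr
    have hΓr : -(dGbind G r) ≤ Γ := by
      rw [hΓdef, dGmax]
      exact Finset.le_sup' (fun p => -(dGbind G p)) hr
    have hlm : Real.log (sv r.2 * qu r.1) = Real.log (sv r.2) + Real.log (qu r.1) :=
      Real.log_mul (ne_of_gt (hsvqu_pos r hr).1) (ne_of_gt (hsvqu_pos r hr).2)
    have hxr : 0 ≤ xact r := le_of_lt (hact_pos r (hMXsub hr))
    have hkey : Real.log (sv r.2) - Real.log (xact ((0 : Fin m → ℕ), r.2))
        + (Real.log (qu r.1) - Real.log (xact (r.1, (0 : ℕ))))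
        ≤ Γ + (Real.log (sv r.2 * qu r.1) - Real.log (xact r)) := by
      rw [hlm]
      unfold dGbind at hΓr
      linarith
    nlinarith [mul_le_mul_of_nonneg_left hkey hxr]
  have hmixbound : ∑ r ∈ MX, xact r * (Real.log (sv r.2) - Real.log (xact ((0 : Fin m → ℕ), r.2)))
      + ∑ r ∈ MX, xact r * (Real.log (qu r.1) - Real.log (xact (r.1, (0 : ℕ))))
      ≤ M * Γ + ∑ r ∈ MX, xact r * (Real.log (sv r.2 * qu r.1) - Real.log (xact r)) := by
    rw [← Finset.sum_add_distrib]
    calc ∑ r ∈ MX, (xact r * (Real.log (sv r.2) - Real.log (xact ((0 : Fin m → ℕ), r.2)))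
          + xact r * (Real.log (qu r.1) - Real.log (xact (r.1, (0 : ℕ)))))
        ≤ ∑ r ∈ MX, (xact r * Γ + xact r * (Real.log (sv r.2 * qu r.1) - Real.log (xact r))) :=
          Finset.sum_le_sum hperr
      _ = M * Γ + ∑ r ∈ MX, xact r * (Real.log (sv r.2 * qu r.1) - Real.log (xact r)) := by
          rw [Finset.sum_add_distrib, ← Finset.sum_mul, ← hMsum]
  -- log-sum inequality
  have hls := logsum MX hMXne xact (fun r => sv r.2 * qu r.1)
    (fun r hr => hact_pos r (hMXsub hr))
    (fun r hr => mul_pos (hsvqu_pos r hr).1 (hsvqu_pos r hr).2)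
  rw [← hMsum] at hls
  -- bound the B-sum
  have hBS : ∑ r ∈ MX, sv r.2 * qu r.1 ≤ S * (XR + M) := by
    classical
    have hinj : ∀ r ∈ MX, ∀ r' ∈ MX,
        (fun r : Cx m => (((0 : Fin m → ℕ), r.2), (r.1, (0 : ℕ)))) r
          = (fun r : Cx m => (((0 : Fin m → ℕ), r.2), (r.1, (0 : ℕ)))) r' → r = r' := by
      intro r _ r' _ h
      simp only [Prod.mk.injEq] at h
      exact Prod.ext h.2.1 h.1.2
    have him := Finset.sum_image (s := MX)
      (g := fun r : Cx m => (((0 : Fin m → ℕ), r.2), (r.1, (0 : ℕ))))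
      (f := fun q : Cx m × Cx m => sv q.1.2 * qu q.2.1) hinj
    have hstep : ∑ r ∈ MX, sv r.2 * qu r.1
        = ∑ q ∈ MX.image (fun r : Cx m => (((0 : Fin m → ℕ), r.2), (r.1, (0 : ℕ)))),
            sv q.1.2 * qu q.2.1 := by
      rw [him]
    rw [hstep]
    have hsubset : MX.image (fun r : Cx m => (((0 : Fin m → ℕ), r.2), (r.1, (0 : ℕ))))
        ⊆ PI ×ˢ PR := by
      intro q hq
      rw [Finset.mem_image] at hq
      obtain ⟨r, hr, rfl⟩ := hq
      rw [Finset.mem_product]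
      exact ⟨hmapMX r hr, hmapMX' r hr⟩
    calc ∑ q ∈ MX.image (fun r : Cx m => (((0 : Fin m → ℕ), r.2), (r.1, (0 : ℕ)))),
          sv q.1.2 * qu q.2.1
        ≤ ∑ q ∈ PI ×ˢ PR, sv q.1.2 * qu q.2.1 := by
          apply Finset.sum_le_sum_of_subset_of_nonneg hsubset
          intro q hq _
          rw [Finset.mem_product] at hq
          have h1 : q.1 ∈ P := (Finset.mem_filter.mp (hPIdef ▸ hq.1)).1
          have h2 : q.2 ∈ P := (Finset.mem_filter.mp (hPRdef ▸ hq.2)).1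
          exact le_of_lt (mul_pos (hsvpos q.1 h1) (hqupos q.2 h2))
      _ = S * (XR + M) := by
          rw [Finset.sum_product, ← hfibS, ← hfibR, Finset.sum_mul]
          apply Finset.sum_congr rfl
          intro p _
          rw [Finset.mul_sum]
  -- positivity and comparisons of totals
  have hMXsubS : MX ⊆ P.filter (fun q : Cx m => 1 ≤ q.2) := by
    intro r hr
    rw [hMXdef, Finset.mem_filter] at hr
    exact Finset.mem_filter.mpr ⟨hr.1, hr.2.2⟩
  have hMS : M ≤ S := by
    rw [hMsum, hSdef]
    apply Finset.sum_le_sum_of_subset_of_nonneg hMXsubS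
    intro p hp _
    exact le_of_lt (hact_pos p (Finset.mem_filter.mp hp).1)
  have hSσ : S ≤ σ := by
    rw [hSdef, ← hσact]
    calc ∑ p ∈ P.filter (fun q : Cx m => 1 ≤ q.2), xact p
        ≤ ∑ p ∈ P.filter (fun q : Cx m => 1 ≤ q.2), (p.2 : ℝ) * xact p := by
          apply Finset.sum_le_sum
          intro p hp
          rw [Finset.mem_filter] at hp
          have h1 : (1 : ℝ) ≤ (p.2 : ℝ) := by exact_mod_cast hp.2
          nlinarith [le_of_lt (hact_pos p hp.1)]
      _ ≤ ∑ p ∈ P, (p.2 : ℝ) * xact p := by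
          apply Finset.sum_le_sum_of_subset_of_nonneg (Finset.filter_subset _ _)
          intro p hp _
          exact mul_nonneg (by positivity) (le_of_lt (hact_pos p hp))
  have hSpos : 0 < S := lt_of_lt_of_le hM hMS
  have hMσ : M ≤ σ := le_trans hMS hSσ
  have hBsumpos : 0 < ∑ r ∈ MX, sv r.2 * qu r.1 :=
    Finset.sum_pos (fun r hr => mul_pos (hsvqu_pos r hr).1 (hsvqu_pos r hr).2) hMXne
  -- master bound on D
  have hDfin : D ≤ M * (1 + ψ) + M * (Real.log σ - Real.log M) := by
    have h1 : D ≤ M * Γ + M * (Real.log (∑ r ∈ MX, sv r.2 * qu r.1) - Real.log M) + M := by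
      rw [hDsplit]
      have hMxa : ∑ p ∈ MX, xact p = M := hMsum.symm
      linarith [hTsum, hRsum, hmixbound, hls, hyrc, hMxa]
    have h2 : Real.log (∑ r ∈ MX, sv r.2 * qu r.1) ≤ Real.log S + Real.log (XR + M) := by
      calc Real.log (∑ r ∈ MX, sv r.2 * qu r.1) ≤ Real.log (S * (XR + M)) :=
            Real.log_le_log hBsumpos hBS
        _ = Real.log S + Real.log (XR + M) := Real.log_mul (ne_of_gt hSpos) (ne_of_gt hRM)
    have h3 : Real.log S ≤ Real.log σ := Real.log_le_log hSpos hSσ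
    have h4 := mul_le_mul_of_nonneg_left h2 (le_of_lt hM)
    have h5 := mul_le_mul_of_nonneg_left h3 (le_of_lt hM)
    rw [hψ]
    nlinarith [h1, h4, h5]
  -- case bounds on D
  have hcase1 : ψ ≤ 0 → D ≤ σ * Real.exp ψ := by
    intro _
    have ht : 0 < M * Real.exp (-ψ) / σ := by positivity
    have h := neg_log_le _ ht
    have hlogt : Real.log (M * Real.exp (-ψ) / σ) = Real.log M + (-ψ) - Real.log σ := by
      rw [Real.log_div (by positivity) (ne_of_gt hσ),
        Real.log_mul (ne_of_gt hM) (Real.exp_ne_zero _), Real.log_exp]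
    have hinv : 1 / (M * Real.exp (-ψ) / σ) = σ * Real.exp ψ / M := by
      rw [Real.exp_neg]
      field_simp
    rw [hlogt, hinv] at h
    have h2 := mul_le_mul_of_nonneg_left h (le_of_lt hM)
    have hMy : M * (σ * Real.exp ψ / M) = σ * Real.exp ψ := by field_simp
    nlinarith [hDfin, h2, hMy]
  have hcase2 : 0 < ψ → D ≤ σ * (ψ + 1) := by
    intro hψpos
    have h := Real.log_le_sub_one_of_pos (show (0:ℝ) < σ / M by positivity)
    rw [Real.log_div (ne_of_gt hσ) (ne_of_gt hM)] at h
    have h2 := mul_le_mul_of_nonneg_left h (le_of_lt hM)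
    have hMy : M * (σ / M) = σ := by field_simp
    nlinarith [hDfin, h2, hMy, hMσ, hψpos]
  -- conclusion
  intro k hk hkmax
  have hzk : 0 ≤ z k := hznn k hk
  have hxk := hact_pos k hk
  have hklk : kl (z k) (xact k) ≤ D := by
    rw [hDdef]
    exact Finset.single_le_sum (fun p hp => kl_nonneg (hznn p hp) (hact_pos p hp)) hk
  have hpins := pinsker hzk hxk
  have e1 : (z k - xact k) ^ 2 ≤ 2 * max (z k) (xact k) * D := by
    nlinarith [hpins, hklk, hkmax]
  constructor
  · intro hψ0
    rw [div_le_iff₀ hkmax]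
    have hD1 := hcase1 hψ0
    nlinarith [e1, hD1, hkmax]
  · intro hψpos
    rw [div_le_iff₀ hkmax]
    have hD2 := hcase2 hψpos
    nlinarith [e1, hD2, hkmax]
end
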